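/- arXiv:1505.04243 — 12 statements merged into one kernel-verified Lean document; each statement's English description precedes it below -/
import Mathlib

section
/- For the LS-Boost(ε) iterates with learning rate ε ∈ (0,1], the training error converges linearly: for every k ≥ 0, L_n(β^k) − L_n* ≤ (1/(2n))‖Xβ_LS‖₂² · γ^k, where β_LS is any least squares solution and γ := 1 − ε(2−ε)·λ_pmin(XᵀX)/(4p). -/
open Matrix Finset

noncomputable section

set_option maxHeartbeats 1000000

lemma key_spectral (p : ℕ) (A : Matrix (Fin p) (Fin p) ℝ) (hA : A.IsHermitian)
    (hpsd : ∀ v : Fin p → ℝ, 0 ≤ v ⬝ᵥ A.mulVec v)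
    (lam : ℝ)
    (hmin : ∀ μ : ℝ, (∃ v : Fin p → ℝ, v ≠ 0 ∧ A.mulVec v = μ • v) → μ ≠ 0 → lam ≤ μ)
    (w : Fin p → ℝ) :
    lam * (w ⬝ᵥ A.mulVec w) ≤ (A.mulVec w) ⬝ᵥ (A.mulVec w) := by
  classical
  set b := hA.eigenvectorBasis with hb
  set lv := hA.eigenvalues with hlv
  -- Parseval for dot products
  have parseval : ∀ x y : Fin p → ℝ,
      x ⬝ᵥ y = ∑ i, ((b i : Fin p → ℝ) ⬝ᵥ x) * ((b i : Fin p → ℝ) ⬝ᵥ y) := by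
    intro x y
    have := b.sum_inner_mul_inner (WithLp.toLp 2 x : EuclideanSpace ℝ (Fin p)) (WithLp.toLp 2 y : EuclideanSpace ℝ (Fin p))
    simp only [PiLp.inner_apply, RCLike.inner_apply, starRingEnd_apply, star_trivial] at this
    simpa [dotProduct, mul_comm] using this.symm
  have eig : ∀ i, A.mulVec (b i) = lv i • (b i : Fin p → ℝ) := fun i =>
    hA.mulVec_eigenvectorBasis i
  have bnz : ∀ i, (b i : Fin p → ℝ) ≠ 0 := fun i h => b.orthonormal.ne_zero i (by simpa using congrArg (WithLp.toLp 2) h)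
  have hsymm : Aᵀ = A := by
    have := hA.eq
    simpa [Matrix.conjTranspose, Matrix.map, Matrix.transpose] using this
  have hdot : ∀ i, (b i : Fin p → ℝ) ⬝ᵥ A.mulVec w = lv i * ((b i : Fin p → ℝ) ⬝ᵥ w) := by
    intro i
    rw [Matrix.dotProduct_mulVec, ← Matrix.mulVec_transpose, hsymm, eig i,
      smul_dotProduct]
    rfl
  have lnn : ∀ i, 0 ≤ lv i := by
    intro i
    have h1 : (b i : Fin p → ℝ) ⬝ᵥ (b i : Fin p → ℝ) = 1 := by
      have h2 := b.orthonormal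
      rw [orthonormal_iff_ite] at h2
      have := h2 i i
      simp only [PiLp.inner_apply, RCLike.inner_apply, starRingEnd_apply, star_trivial] at this
      simpa [dotProduct] using this
    have := hpsd (b i)
    rw [eig i, dotProduct_smul] at this
    simpa [h1] using this
  have key_i : ∀ i, lam * lv i ≤ lv i ^ 2 := by
    intro i
    rcases eq_or_ne (lv i) 0 with h | h
    · simp [h]
    · have h1 : lam ≤ lv i := hmin (lv i) ⟨b i, bnz i, eig i⟩ h
      have h2 : 0 < lv i := lt_of_le_of_ne (lnn i) (Ne.symm h)
      nlinarith
  rw [parseval (A.mulVec w) (A.mulVec w), parseval w (A.mulVec w)]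
  simp only [hdot]
  rw [Finset.mul_sum]
  apply Finset.sum_le_sum
  intro i _
  have := key_i i
  nlinarith [sq_nonneg ((b i : Fin p → ℝ) ⬝ᵥ w)]

/-- **Theorem 2.1(i) (training error).** For the LS-Boost(ε) iterates with learning rate
ε ∈ (0,1], the training error converges linearly:
`L_n(β^k) − L_n* ≤ (1/(2n))‖Xβ_LS‖₂² · γ^k`, where
`γ := 1 − ε(2−ε)·λ_pmin(XᵀX)/(4p)`. -/
theorem lsboost_training_error_linear_convergence
    (n p : ℕ) (hn : 0 < n) (hp : 0 < p)
    (X : Matrix (Fin n) (Fin p) ℝ) (hX : X ≠ 0)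
    (hcols : ∀ j : Fin p, ∑ i, (X i j) ^ 2 = 1)
    (y : Fin n → ℝ)
    (Ln : (Fin p → ℝ) → ℝ)
    (hLn : Ln = fun β => (1 / (2 * (n : ℝ))) * ∑ i, (y i - X.mulVec β i) ^ 2)
    (LnStar : ℝ) (hLnStar : LnStar = sInf (Set.range Ln))
    -- `lam` is the smallest nonzero eigenvalue of XᵀX
    (lam : ℝ)
    (hlam_eig : ∃ v : Fin p → ℝ, v ≠ 0 ∧ (Xᵀ * X).mulVec v = lam • v)
    (hlam_ne : lam ≠ 0)
    (hlam_min : ∀ μ : ℝ, (∃ v : Fin p → ℝ, v ≠ 0 ∧ (Xᵀ * X).mulVec v = μ • v) → μ ≠ 0 → lam ≤ μ)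
    -- LS-Boost(ε) iterates
    (ε : ℝ) (hε0 : 0 < ε) (hε1 : ε ≤ 1)
    (β : ℕ → Fin p → ℝ) (hβ0 : β 0 = 0)
    (r : ℕ → Fin n → ℝ) (hr : ∀ k, r k = y - X.mulVec (β k))
    (jj : ℕ → Fin p)
    (hjmax : ∀ k, ∀ j' : Fin p, |∑ i, r k i * X i j'| ≤ |∑ i, r k i * X i (jj k)|)
    (hupd : ∀ k, β (k + 1) = β k + (ε * (∑ i, r k i * X i (jj k))) • (Pi.single (jj k) (1 : ℝ) : Fin p → ℝ))
    -- βLS is any least squares solution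
    (βLS : Fin p → ℝ) (hβLS : (Xᵀ * X).mulVec βLS = Xᵀ.mulVec y)
    (γ : ℝ) (hγ : γ = 1 - ε * (2 - ε) * lam / (4 * (p : ℝ))) :
    ∀ k : ℕ, Ln (β k) - LnStar ≤ (1 / (2 * (n : ℝ))) * (∑ i, (X.mulVec βLS i) ^ 2) * γ ^ k := by
  classical
  have hp' : (0:ℝ) < p := by exact_mod_cast hp
  have hn' : (0:ℝ) < n := by exact_mod_cast hn
  have hA : (Xᵀ * X).IsHermitian := by
    have := Matrix.isHermitian_conjTranspose_mul_self X
    simpa [Matrix.conjTranspose_eq_transpose_of_trivial] using this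
  have hquad : ∀ v : Fin p → ℝ, v ⬝ᵥ (Xᵀ * X).mulVec v = (X.mulVec v) ⬝ᵥ (X.mulVec v) := by
    intro v
    rw [← Matrix.mulVec_mulVec, Matrix.dotProduct_mulVec, ← Matrix.vecMul_transpose]
  have hdp : ∀ (m : ℕ) (u : Fin m → ℝ), u ⬝ᵥ u = ∑ i, u i ^ 2 := by
    intro m u; simp [dotProduct, sq]
  have hpsd : ∀ v : Fin p → ℝ, 0 ≤ v ⬝ᵥ (Xᵀ * X).mulVec v := by
    intro v; rw [hquad, hdp]; positivity
  -- lam is positive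
  obtain ⟨v, hv0, hv⟩ := hlam_eig
  have hvv : 0 < v ⬝ᵥ v := by
    rw [hdp]
    rcases Function.ne_iff.mp hv0 with ⟨j, hj⟩
    exact Finset.sum_pos' (fun i _ => sq_nonneg _) ⟨j, Finset.mem_univ j, by rw [sq]; exact mul_self_pos.mpr hj⟩
  have hlam_eq : lam * (v ⬝ᵥ v) = v ⬝ᵥ (Xᵀ * X).mulVec v := by
    rw [hv, dotProduct_smul]; simp [mul_comm]
  have hlam_pos : 0 < lam := by
    have h2 := hpsd v
    have h3 : 0 ≤ lam := by nlinarith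
    exact lt_of_le_of_ne h3 (Ne.symm hlam_ne)
  -- lam ≤ p
  have hXfro : ∑ i, ∑ j, (X i j) ^ 2 = (p : ℝ) := by
    rw [Finset.sum_comm]
    simp [hcols]
  have hlam_le : lam ≤ (p : ℝ) := by
    have h1 : lam * (v ⬝ᵥ v) = (X.mulVec v) ⬝ᵥ (X.mulVec v) := by rw [hlam_eq, hquad]
    have h2 : (X.mulVec v) ⬝ᵥ (X.mulVec v) ≤ (p : ℝ) * (v ⬝ᵥ v) := by
      rw [hdp, hdp]
      calc ∑ i, (X.mulVec v) i ^ 2 ≤ ∑ i : Fin n, (∑ j, X i j ^ 2) * (∑ j, v j ^ 2) := by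
            apply Finset.sum_le_sum; intro i _
            have := Finset.sum_mul_sq_le_sq_mul_sq Finset.univ (fun j => X i j) v
            simpa [Matrix.mulVec, dotProduct] using this
        _ = (p : ℝ) * ∑ j, v j ^ 2 := by rw [← Finset.sum_mul, hXfro]
    nlinarith
  have hε2 : 0 < ε * (2 - ε) := by nlinarith
  have hγ0 : 0 ≤ γ := by
    rw [hγ, sub_nonneg, div_le_one (by positivity)]
    have h1 : ε * (2 - ε) ≤ 1 := by nlinarith [sq_nonneg (1 - ε)]
    nlinarith [mul_le_mul_of_nonneg_right h1 hlam_pos.le]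
  -- the projected residual
  set rhat : Fin n → ℝ := y - X.mulVec βLS with hrhat
  have hXr : Xᵀ.mulVec rhat = 0 := by
    have h1 : Xᵀ.mulVec rhat = Xᵀ.mulVec y - (Xᵀ * X).mulVec βLS := by
      rw [hrhat, Matrix.mulVec_sub, Matrix.mulVec_mulVec]
    rw [h1, hβLS, sub_self]
  have hcol0 : ∀ j : Fin p, ∑ i, rhat i * X i j = 0 := by
    intro j
    have := congrFun hXr j
    simpa [Matrix.mulVec, dotProduct, mul_comm] using this
  have hcross : ∀ w : Fin p → ℝ, rhat ⬝ᵥ X.mulVec w = 0 := by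
    intro w
    rw [Matrix.dotProduct_mulVec, ← Matrix.mulVec_transpose, hXr, zero_dotProduct]
  -- loss decomposition
  have hLdec : ∀ b : Fin p → ℝ, ∑ i, (y i - X.mulVec b i) ^ 2
      = (∑ i, rhat i ^ 2) + ∑ i, (X.mulVec (βLS - b)) i ^ 2 := by
    intro b
    have hcr := hcross (βLS - b)
    have hzero : ∑ i, rhat i * (X.mulVec (βLS - b)) i = 0 := by
      simpa [dotProduct] using hcr
    have hpt : ∀ i, y i - X.mulVec b i = rhat i + (X.mulVec (βLS - b)) i := by
      intro i
      rw [Matrix.mulVec_sub]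
      simp [hrhat]
    calc ∑ i, (y i - X.mulVec b i) ^ 2
        = ∑ i, (rhat i ^ 2 + 2 * (rhat i * (X.mulVec (βLS - b)) i) + (X.mulVec (βLS - b)) i ^ 2) := by
          apply Finset.sum_congr rfl; intro i _; rw [hpt i]; ring
      _ = (∑ i, rhat i ^ 2) + 2 * (∑ i, rhat i * (X.mulVec (βLS - b)) i)
            + ∑ i, (X.mulVec (βLS - b)) i ^ 2 := by
          rw [Finset.sum_add_distrib, Finset.sum_add_distrib, ← Finset.mul_sum]
      _ = _ := by rw [hzero]; ring
  have hLbLS : Ln βLS = (1 / (2 * (n : ℝ))) * ∑ i, rhat i ^ 2 := by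
    simp only [hLn]
    rw [hLdec βLS]
    simp
  have hLnStar_ge : Ln βLS ≤ LnStar := by
    rw [hLnStar]
    apply le_csInf ⟨Ln 0, Set.mem_range_self 0⟩
    rintro z ⟨b, rfl⟩
    rw [hLbLS]
    simp only [hLn]
    rw [hLdec b]
    have h1 : 0 ≤ ∑ i, (X.mulVec (βLS - b)) i ^ 2 := by positivity
    have h2 : (0:ℝ) < 1 / (2 * (n : ℝ)) := by positivity
    nlinarith
  -- the gap is controlled by the coefficient error
  have hgap : ∀ k, Ln (β k) - LnStar ≤ (1 / (2 * (n : ℝ))) * ∑ i, (X.mulVec (βLS - β k)) i ^ 2 := by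
    intro k
    have h1 : Ln (β k) = Ln βLS + (1 / (2 * (n : ℝ))) * ∑ i, (X.mulVec (βLS - β k)) i ^ 2 := by
      rw [hLbLS]
      simp only [hLn]
      rw [hLdec (β k)]
      ring
    rw [h1]
    linarith [hLnStar_ge]
  -- residual correlations
  have hrX : ∀ k (j : Fin p), ∑ i, r k i * X i j = ∑ i, (X.mulVec (βLS - β k)) i * X i j := by
    intro k j
    have hrk : ∀ i, r k i = rhat i + (X.mulVec (βLS - β k)) i := by
      intro i
      rw [hr k, Matrix.mulVec_sub]
      simp [hrhat]
    have h1 : ∑ i, r k i * X i j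
        = (∑ i, rhat i * X i j) + ∑ i, (X.mulVec (βLS - β k)) i * X i j := by
      rw [← Finset.sum_add_distrib]
      apply Finset.sum_congr rfl; intro i _; rw [hrk i]; ring
    rw [h1, hcol0 j, zero_add]
  -- one-step contraction
  have hstep : ∀ k, (∑ i, (X.mulVec (βLS - β (k+1))) i ^ 2)
      ≤ γ * ∑ i, (X.mulVec (βLS - β k)) i ^ 2 := by
    intro k
    set e : Fin n → ℝ := X.mulVec (βLS - β k) with he
    set a : ℝ := ∑ i, r k i * X i (jj k) with ha
    clear_value e
    have ha' : a = ∑ i, e i * X i (jj k) := by rw [ha, hrX k (jj k), he]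
    have hnext : ∀ i, (X.mulVec (βLS - β (k+1))) i = e i - ε * a * X i (jj k) := by
      intro i
      rw [hupd k]
      have h1 : βLS - (β k + (ε * (∑ i, r k i * X i (jj k))) • (Pi.single (jj k) (1:ℝ) : Fin p → ℝ))
          = (βLS - β k) - (ε * a) • (Pi.single (jj k) (1:ℝ) : Fin p → ℝ) := by
        rw [← ha]; ext x; simp only [Pi.sub_apply, Pi.add_apply, Pi.smul_apply, smul_eq_mul]; ring
      rw [h1, Matrix.mulVec_sub, Matrix.mulVec_smul]
      have hsing : X.mulVec (Pi.single (jj k) (1:ℝ)) i = X i (jj k) := by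
        simp [Matrix.mulVec, dotProduct_single]
      simp only [Pi.sub_apply, Pi.smul_apply, hsing, he, smul_eq_mul]
      try ring
    have hDk1 : (∑ i, (X.mulVec (βLS - β (k+1))) i ^ 2)
        = (∑ i, e i ^ 2) - ε * (2 - ε) * a ^ 2 := by
      calc (∑ i, (X.mulVec (βLS - β (k+1))) i ^ 2)
          = ∑ i, (e i ^ 2 - (2 * ε * a) * (e i * X i (jj k)) + (ε^2 * a^2) * (X i (jj k))^2) := by
            apply Finset.sum_congr rfl; intro i _; rw [hnext i]; ring
        _ = (∑ i, e i ^ 2) - (2 * ε * a) * (∑ i, e i * X i (jj k))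
              + (ε^2 * a^2) * (∑ i, (X i (jj k))^2) := by
            rw [Finset.sum_add_distrib, Finset.sum_sub_distrib, ← Finset.mul_sum, ← Finset.mul_sum]
        _ = _ := by rw [← ha', hcols (jj k)]; ring
    have hkey : lam * (∑ i, e i ^ 2) ≤ (p : ℝ) * a ^ 2 := by
      have h1 := key_spectral p (Xᵀ * X) hA hpsd lam hlam_min (βLS - β k)
      have h2 : (βLS - β k) ⬝ᵥ (Xᵀ * X).mulVec (βLS - β k) = ∑ i, e i ^ 2 := by
        rw [hquad, hdp, he]
      have h3 : ((Xᵀ * X).mulVec (βLS - β k)) ⬝ᵥ ((Xᵀ * X).mulVec (βLS - β k))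
          = ∑ j' : Fin p, (∑ i, e i * X i j') ^ 2 := by
        rw [hdp]
        apply Finset.sum_congr rfl; intro j' _
        congr 1
        rw [← Matrix.mulVec_mulVec]
        simp [Matrix.mulVec, dotProduct, he, mul_comm]
      have h4 : ∑ j' : Fin p, (∑ i, e i * X i j') ^ 2 ≤ ∑ _j' : Fin p, a ^ 2 := by
        apply Finset.sum_le_sum; intro j' _
        have h5 : |∑ i, e i * X i j'| ≤ |∑ i, e i * X i (jj k)| := by
          have := hjmax k j'
          rwa [hrX k j', hrX k (jj k), ← he] at this
        calc (∑ i, e i * X i j') ^ 2 = |∑ i, e i * X i j'| ^ 2 := (sq_abs _).symm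
          _ ≤ |∑ i, e i * X i (jj k)| ^ 2 := by
              exact pow_le_pow_left₀ (abs_nonneg _) h5 2
          _ = a ^ 2 := by rw [ha', sq_abs]
      have h6 : ∑ _j' : Fin p, a ^ 2 = (p : ℝ) * a ^ 2 := by
        simp [Finset.sum_const, Finset.card_univ]
      calc lam * (∑ i, e i ^ 2) = lam * ((βLS - β k) ⬝ᵥ (Xᵀ * X).mulVec (βLS - β k)) := by rw [h2]
        _ ≤ ((Xᵀ * X).mulVec (βLS - β k)) ⬝ᵥ ((Xᵀ * X).mulVec (βLS - β k)) := h1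
        _ = ∑ j' : Fin p, (∑ i, e i * X i j') ^ 2 := h3
        _ ≤ ∑ _j' : Fin p, a ^ 2 := h4
        _ = (p : ℝ) * a ^ 2 := h6
    have hmul : ε * (2 - ε) * (lam * (∑ i, e i ^ 2)) ≤ ε * (2 - ε) * ((p : ℝ) * a ^ 2) :=
      mul_le_mul_of_nonneg_left hkey hε2.le
    have hgoal : ε * (2 - ε) * lam / (4 * (p : ℝ)) * (∑ i, e i ^ 2) ≤ ε * (2 - ε) * a ^ 2 := by
      rw [div_mul_eq_mul_div, div_le_iff₀ (by positivity)]
      nlinarith [mul_nonneg (mul_nonneg hε2.le (sq_nonneg a)) hp'.le]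
    rw [hDk1, hγ]
    calc (∑ i, e i ^ 2) - ε * (2 - ε) * a ^ 2
        ≤ (∑ i, e i ^ 2) - ε * (2 - ε) * lam / (4 * (p : ℝ)) * (∑ i, e i ^ 2) := by
          linarith [hgoal]
      _ = (1 - ε * (2 - ε) * lam / (4 * (p : ℝ))) * (∑ i, e i ^ 2) := by ring
  -- induction
  have hD0 : (∑ i, (X.mulVec (βLS - β 0)) i ^ 2) = ∑ i, (X.mulVec βLS i) ^ 2 := by
    rw [hβ0, sub_zero]
  have hind : ∀ k, (∑ i, (X.mulVec (βLS - β k)) i ^ 2)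
      ≤ (∑ i, (X.mulVec βLS i) ^ 2) * γ ^ k := by
    intro k
    induction k with
    | zero => rw [hD0]; simp
    | succ k ih =>
      calc (∑ i, (X.mulVec (βLS - β (k+1))) i ^ 2)
          ≤ γ * ∑ i, (X.mulVec (βLS - β k)) i ^ 2 := hstep k
        _ ≤ γ * ((∑ i, (X.mulVec βLS i) ^ 2) * γ ^ k) := mul_le_mul_of_nonneg_left ih hγ0
        _ = (∑ i, (X.mulVec βLS i) ^ 2) * γ ^ (k+1) := by ring
  intro k
  calc Ln (β k) - LnStar ≤ (1 / (2 * (n : ℝ))) * ∑ i, (X.mulVec (βLS - β k)) i ^ 2 := hgap k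
    _ ≤ (1 / (2 * (n : ℝ))) * ((∑ i, (X.mulVec βLS i) ^ 2) * γ ^ k) := by
        apply mul_le_mul_of_nonneg_left (hind k)
        positivity
    _ = (1 / (2 * (n : ℝ))) * (∑ i, (X.mulVec βLS i) ^ 2) * γ ^ k := by ring


end
end

section
/- For the LS-Boost(ε) iterates with learning rate ε ∈ (0,1] and every k ≥ 0, there exists a least squares solution β^k_LS (i.e., XᵀXβ^k_LS = Xᵀy) such that ‖β^k − β^k_LS‖₂ ≤ (‖Xβ_LS‖₂ / √(λ_pmin(XᵀX))) · γ^{k/2}, where β_LS is any least squares solution and γ := 1 − ε(2−ε)·λ_pmin(XᵀX)/(4p). -/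
open Matrix Finset

noncomputable section

section Aux

lemma lsb_dot_sq (n : ℕ) (v : Fin n → ℝ) : ∑ i, (v i)^2 = v ⬝ᵥ v := by
  simp [dotProduct, sq]

lemma lsb_dot_self_nonneg (n : ℕ) (v : Fin n → ℝ) : 0 ≤ v ⬝ᵥ v := by
  rw [← lsb_dot_sq]; positivity

lemma lsb_adj {n p : ℕ} (M : Matrix (Fin n) (Fin p) ℝ) (u : Fin n → ℝ) (w : Fin p → ℝ) :
    u ⬝ᵥ (M *ᵥ w) = (Mᵀ *ᵥ u) ⬝ᵥ w := by
  rw [Matrix.dotProduct_mulVec, Matrix.mulVec_transpose]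

lemma lsb_orthdot (m : ℕ) (b : Fin m → (Fin m → ℝ))
    (hb : ∀ i j, b i ⬝ᵥ b j = if i = j then (1:ℝ) else 0)
    (c d : Fin m → ℝ) :
    (∑ i, c i • b i) ⬝ᵥ (∑ i, d i • b i) = ∑ i, c i * d i := by
  have h1 : (∑ i, c i • b i) ⬝ᵥ (∑ i, d i • b i)
      = ∑ j, ∑ i, ∑ i', (c i * b i j) * (d i' * b i' j) := by
    simp only [dotProduct, Finset.sum_apply, Pi.smul_apply, smul_eq_mul]
    exact Finset.sum_congr rfl fun j _ => Finset.sum_mul_sum _ _ _ _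
  rw [h1, Finset.sum_comm]
  refine Finset.sum_congr rfl fun i _ => ?_
  rw [Finset.sum_comm]
  have h2 : ∀ i', ∑ j, (c i * b i j) * (d i' * b i' j)
      = (c i * d i') * (b i ⬝ᵥ b i') := by
    intro i'
    rw [dotProduct, Finset.mul_sum]
    exact Finset.sum_congr rfl fun j _ => by ring
  simp only [h2, hb, mul_ite, mul_one, mul_zero]
  simp

lemma lsb_mulVec_sum {n p m : ℕ} (A : Matrix (Fin n) (Fin p) ℝ) (f : Fin m → (Fin p → ℝ)) :
    A *ᵥ (∑ i, f i) = ∑ i, A *ᵥ f i := by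
  ext j
  simp [Matrix.mulVec, dotProduct, Finset.mul_sum, Finset.sum_apply]
  rw [Finset.sum_comm]

end Aux

/-- **Theorem 2.1(ii) (regression coefficients).** For the LS-Boost(ε) iterates with
learning rate ε ∈ (0,1] and every k ≥ 0, there exists a least squares solution β^k_LS
such that `‖β^k − β^k_LS‖₂ ≤ (‖Xβ_LS‖₂/√λ_pmin(XᵀX)) · γ^{k/2}`. -/
theorem lsboost_regression_coefficients_convergence
    (n p : ℕ) (hn : 0 < n) (hp : 0 < p)
    (X : Matrix (Fin n) (Fin p) ℝ) (hX : X ≠ 0)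
    (hcols : ∀ j : Fin p, ∑ i, (X i j) ^ 2 = 1)
    (y : Fin n → ℝ)
    -- `lam` is the smallest nonzero eigenvalue of XᵀX
    (lam : ℝ)
    (hlam_eig : ∃ v : Fin p → ℝ, v ≠ 0 ∧ (Xᵀ * X).mulVec v = lam • v)
    (hlam_ne : lam ≠ 0)
    (hlam_min : ∀ μ : ℝ, (∃ v : Fin p → ℝ, v ≠ 0 ∧ (Xᵀ * X).mulVec v = μ • v) → μ ≠ 0 → lam ≤ μ)
    -- LS-Boost(ε) iterates
    (ε : ℝ) (hε0 : 0 < ε) (hε1 : ε ≤ 1)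
    (β : ℕ → Fin p → ℝ) (hβ0 : β 0 = 0)
    (r : ℕ → Fin n → ℝ) (hr : ∀ k, r k = y - X.mulVec (β k))
    (jj : ℕ → Fin p)
    (hjmax : ∀ k, ∀ j' : Fin p, |∑ i, r k i * X i j'| ≤ |∑ i, r k i * X i (jj k)|)
    (hupd : ∀ k, β (k + 1) = β k +
      (ε * (∑ i, r k i * X i (jj k))) • (Pi.single (jj k) (1 : ℝ) : Fin p → ℝ))
    -- βLS is any least squares solution
    (βLS : Fin p → ℝ) (hβLS : (Xᵀ * X).mulVec βLS = Xᵀ.mulVec y)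
    (γ : ℝ) (hγ : γ = 1 - ε * (2 - ε) * lam / (4 * (p : ℝ))) :
    ∀ k : ℕ, ∃ βkLS : Fin p → ℝ, (Xᵀ * X).mulVec βkLS = Xᵀ.mulVec y ∧
      Real.sqrt (∑ j, (β k j - βkLS j) ^ 2) ≤
        (Real.sqrt (∑ i, (X.mulVec βLS i) ^ 2) / Real.sqrt lam) * γ ^ ((k : ℝ) / 2) := by
  have hA : (Xᵀ * X).IsHermitian := by
    simpa [Matrix.conjTranspose_eq_transpose_of_trivial] using Matrix.isHermitian_conjTranspose_mul_self X
  set b : Fin p → (Fin p → ℝ) := fun i => hA.eigenvectorBasis i with hbdef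
  set μ : Fin p → ℝ := hA.eigenvalues with hμdef
  have hAb : ∀ i, (Xᵀ * X) *ᵥ b i = μ i • b i := fun i => by
    simpa using hA.mulVec_eigenvectorBasis i
  have hbb : ∀ i j, b i ⬝ᵥ b j = if i = j then (1:ℝ) else 0 := by
    intro i j
    have := (orthonormal_iff_ite.mp hA.eigenvectorBasis.orthonormal) i j
    simpa [PiLp.inner_apply, RCLike.inner_apply, dotProduct, mul_comm] using this
  have hexp : ∀ z : Fin p → ℝ, z = ∑ i, (b i ⬝ᵥ z) • b i := by
    intro z
    have h := hA.eigenvectorBasis.sum_repr' (WithLp.toLp 2 z)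
    have h2 : ∀ i, b i ⬝ᵥ z
        = (inner (𝕜 := ℝ) (hA.eigenvectorBasis i) (WithLp.toLp 2 z)) := by
      intro i
      simp [PiLp.inner_apply, RCLike.inner_apply, dotProduct, mul_comm]
      rfl
    simp only [h2]
    have h' := congrArg WithLp.ofLp h
    simp only [WithLp.ofLp_sum, WithLp.ofLp_smul] at h'
    exact h'.symm
  -- the quadratic form
  have hquad : ∀ z : Fin p → ℝ, z ⬝ᵥ ((Xᵀ * X) *ᵥ z) = (X *ᵥ z) ⬝ᵥ (X *ᵥ z) := by
    intro z
    rw [← Matrix.mulVec_mulVec, lsb_adj, Matrix.transpose_transpose]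
  -- symmetry of A in dot products
  have hsym : ∀ u v : Fin p → ℝ, u ⬝ᵥ ((Xᵀ * X) *ᵥ v) = ((Xᵀ * X) *ᵥ u) ⬝ᵥ v := by
    intro u v
    rw [lsb_adj, Matrix.transpose_mul, Matrix.transpose_transpose]
  -- eigenvalues are nonnegative
  have hμval : ∀ i, μ i = (X *ᵥ b i) ⬝ᵥ (X *ᵥ b i) := by
    intro i
    have h1 : b i ⬝ᵥ ((Xᵀ * X) *ᵥ b i) = μ i := by
      rw [hAb i, dotProduct_smul, smul_eq_mul, hbb i i]
      simp
    rw [← h1, hquad]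
  have hμ0 : ∀ i, 0 ≤ μ i := fun i => (hμval i) ▸ lsb_dot_self_nonneg n _
  have hbne : ∀ i, b i ≠ 0 := by
    intro i h0
    have := hbb i i
    rw [h0] at this
    simp [zero_dotProduct] at this
  have hμlam : ∀ i, μ i ≠ 0 → lam ≤ μ i := fun i h =>
    hlam_min (μ i) ⟨b i, hbne i, hAb i⟩ h
  -- lam is attained as some eigenvalue
  have hattain : ∃ i, μ i = lam := by
    obtain ⟨v, hv0, hv⟩ := hlam_eig
    by_contra hcon
    push_neg at hcon
    have hci : ∀ i, b i ⬝ᵥ v = 0 := by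
      intro i
      have h1 : b i ⬝ᵥ ((Xᵀ * X) *ᵥ v) = lam * (b i ⬝ᵥ v) := by
        rw [hv, dotProduct_smul, smul_eq_mul]
      have h2 : b i ⬝ᵥ ((Xᵀ * X) *ᵥ v) = μ i * (b i ⬝ᵥ v) := by
        rw [hsym, hAb i, smul_dotProduct, smul_eq_mul]
      have h3 : (μ i - lam) * (b i ⬝ᵥ v) = 0 := by
        rw [sub_mul]; rw [h1] at h2; linarith
      rcases mul_eq_zero.mp h3 with h | h
      · exact absurd (by linarith : μ i = lam) (hcon i)
      · exact h
    apply hv0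
    rw [hexp v]
    simp [hci]
  have hlam_pos : 0 < lam := by
    obtain ⟨i, hi⟩ := hattain
    rcases lt_or_eq_of_le (hμ0 i) with h | h
    · rwa [hi] at h
    · exact absurd (hi ▸ h.symm) hlam_ne
  -- lam ≤ p  (Cauchy–Schwarz rowwise)
  have hlam_le : lam ≤ (p : ℝ) := by
    obtain ⟨i0, hi0⟩ := hattain
    have hb1 : ∑ j, (b i0 j)^2 = 1 := by
      rw [lsb_dot_sq, hbb i0 i0]; simp
    have hrow : ∀ i : Fin n, ((X *ᵥ b i0) i)^2 ≤ ∑ j, (X i j)^2 := by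
      intro i
      have hcs := Finset.sum_mul_sq_le_sq_mul_sq Finset.univ (fun j => X i j) (fun j => b i0 j)
      have : (X *ᵥ b i0) i = ∑ j, X i j * b i0 j := by
        simp [Matrix.mulVec, dotProduct]
      rw [this]
      calc (∑ j, X i j * b i0 j)^2 ≤ (∑ j, (X i j)^2) * ∑ j, (b i0 j)^2 := hcs
        _ = ∑ j, (X i j)^2 := by rw [hb1, mul_one]
    calc lam = μ i0 := hi0.symm
      _ = (X *ᵥ b i0) ⬝ᵥ (X *ᵥ b i0) := hμval i0
      _ = ∑ i, ((X *ᵥ b i0) i)^2 := (lsb_dot_sq n _).symm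
      _ ≤ ∑ i : Fin n, ∑ j, (X i j)^2 := Finset.sum_le_sum fun i _ => hrow i
      _ = ∑ j, ∑ i : Fin n, (X i j)^2 := Finset.sum_comm
      _ = ∑ _j : Fin p, (1:ℝ) := Finset.sum_congr rfl fun j _ => hcols j
      _ = (p : ℝ) := by simp
  have hp' : (0:ℝ) < p := Nat.cast_pos.mpr hp
  have hc0 : 0 < ε * (2 - ε) := by nlinarith
  have hc1 : ε * (2 - ε) ≤ 1 := by nlinarith [sq_nonneg (1 - ε)]
  have hγ0 : 0 ≤ γ := by
    rw [hγ]
    have h1 : ε * (2 - ε) * lam / (4 * (p:ℝ)) ≤ 1 := by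
      rw [div_le_one (by positivity)]
      nlinarith
    linarith
  -- the error sequence
  set E : ℕ → (Fin p → ℝ) := fun k => β k - βLS with hEdef
  set S : ℕ → ℝ := fun k => (X *ᵥ E k) ⬝ᵥ (X *ᵥ E k) with hSdef
  set g : ℕ → (Fin p → ℝ) := fun k => (Xᵀ * X) *ᵥ E k with hgdef
  have hS_nonneg : ∀ k, 0 ≤ S k := fun k => lsb_dot_self_nonneg n _
  -- residual correlations
  have hXr : ∀ k, Xᵀ *ᵥ r k = -(g k) := by
    intro k
    rw [hr k, Matrix.mulVec_sub, hgdef]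
    simp only [hEdef]
    rw [Matrix.mulVec_sub, Matrix.mulVec_mulVec, hβLS]
    abel
  have hcorr : ∀ k j, ∑ i, r k i * X i j = -(g k j) := by
    intro k j
    have : ∑ i, r k i * X i j = (Xᵀ *ᵥ r k) j := by
      simp [Matrix.mulVec, dotProduct, Matrix.transpose_apply, mul_comm]
    rw [this, hXr k]
    simp
  -- spectral formulas for S k and ‖g k‖²
  have hspec : ∀ k, S k = ∑ i, μ i * (b i ⬝ᵥ E k)^2 ∧
      g k ⬝ᵥ g k = ∑ i, (μ i)^2 * (b i ⬝ᵥ E k)^2 := by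
    intro k
    set c : Fin p → ℝ := fun i => b i ⬝ᵥ E k with hcdef
    have hEexp : E k = ∑ i, c i • b i := hexp (E k)
    have hgexp : g k = ∑ i, (μ i * c i) • b i := by
      rw [hgdef]
      simp only
      rw [hEexp, lsb_mulVec_sum]
      refine Finset.sum_congr rfl fun i _ => ?_
      rw [Matrix.mulVec_smul, hAb i, smul_smul, mul_comm]
    constructor
    · have h1 : S k = E k ⬝ᵥ ((Xᵀ * X) *ᵥ E k) := (hquad (E k)).symm
      rw [h1]
      have h2 : (Xᵀ * X) *ᵥ E k = g k := rfl
      rw [h2, hgexp]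
      nth_rewrite 1 [hEexp]
      rw [lsb_orthdot p b hbb]
      exact Finset.sum_congr rfl fun i _ => by ring
    · rw [hgexp, lsb_orthdot p b hbb]
      exact Finset.sum_congr rfl fun i _ => by ring
  have hgS : ∀ k, lam * S k ≤ g k ⬝ᵥ g k := by
    intro k
    obtain ⟨h1, h2⟩ := hspec k
    rw [h1, h2, Finset.mul_sum]
    refine Finset.sum_le_sum fun i _ => ?_
    rcases eq_or_ne (μ i) 0 with h | h
    · simp [h]
    · have hle := hμlam i h
      have hμpos : 0 < μ i := lt_of_le_of_ne (hμ0 i) (Ne.symm h)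
      have : lam * (μ i * (b i ⬝ᵥ E k)^2) ≤ μ i * (μ i * (b i ⬝ᵥ E k)^2) := by
        apply mul_le_mul_of_nonneg_right hle
        positivity
      calc lam * (μ i * (b i ⬝ᵥ E k)^2) ≤ μ i * (μ i * (b i ⬝ᵥ E k)^2) := this
        _ = (μ i)^2 * (b i ⬝ᵥ E k)^2 := by ring
  -- one-step contraction
  have hstep : ∀ k, S (k+1) ≤ γ * S k := by
    intro k
    set G : ℝ := g k (jj k) with hGdef
    set col : Fin n → ℝ := X *ᵥ Pi.single (jj k) 1 with hcoldef
    have hEstep : E (k+1) = E k + (ε * (-G)) • (Pi.single (jj k) (1:ℝ) : Fin p → ℝ) := by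
      simp only [hEdef]
      rw [hupd k, hcorr k (jj k), ← hGdef]
      abel
    have hdstep : X *ᵥ E (k+1) = X *ᵥ E k + (ε * (-G)) • col := by
      rw [hEstep, Matrix.mulVec_add, Matrix.mulVec_smul]
    have hcolcol : col ⬝ᵥ col = 1 := by
      have hcol : ∀ i, col i = X i (jj k) := by
        intro i
        simp [hcoldef, Matrix.mulVec_single]
      rw [← lsb_dot_sq]
      simp only [hcol]
      exact hcols (jj k)
    have hdcol : (X *ᵥ E k) ⬝ᵥ col = G := by
      rw [hcoldef, lsb_adj, Matrix.mulVec_mulVec, dotProduct_single, mul_one, hGdef,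
        hgdef]
    have hSexp : S (k+1) = S k - ε * (2 - ε) * G^2 := by
      have h0 : S (k+1) = (X *ᵥ E k + (ε * -G) • col) ⬝ᵥ (X *ᵥ E k + (ε * -G) • col) := by
        show (X *ᵥ E (k+1)) ⬝ᵥ (X *ᵥ E (k+1)) = _
        rw [hdstep]
      rw [h0, add_dotProduct, dotProduct_add, dotProduct_add,
        smul_dotProduct, dotProduct_smul, smul_dotProduct,
        dotProduct_smul, hcolcol, hdcol, dotProduct_comm col (X *ᵥ E k), hdcol]
      simp only [smul_eq_mul, hSdef]
      ring
    have hGlow : lam * S k ≤ (p:ℝ) * G^2 := by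
      have h1 : g k ⬝ᵥ g k ≤ (p:ℝ) * G^2 := by
        rw [← lsb_dot_sq]
        calc ∑ j, (g k j)^2 ≤ ∑ _j : Fin p, G^2 := by
              refine Finset.sum_le_sum fun j _ => ?_
              have habs : |g k j| ≤ |G| := by
                have := hjmax k j
                rw [hcorr k j, hcorr k (jj k)] at this
                simpa using this
              calc (g k j)^2 = |g k j|^2 := (sq_abs _).symm
                _ ≤ |G|^2 := by exact pow_le_pow_left₀ (abs_nonneg _) habs 2
                _ = G^2 := sq_abs _
          _ = (p:ℝ) * G^2 := by simp [mul_comm]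
      exact le_trans (hgS k) h1
    have h4 : lam * S k / (4 * (p:ℝ)) ≤ G^2 := by
      rw [div_le_iff₀ (by positivity)]
      nlinarith [sq_nonneg G]
    have h5 : ε * (2 - ε) * (lam * S k / (4 * (p:ℝ))) ≤ ε * (2 - ε) * G^2 :=
      mul_le_mul_of_nonneg_left h4 (le_of_lt hc0)
    have h6 : γ * S k = S k - ε * (2 - ε) * (lam * S k / (4 * (p:ℝ))) := by
      rw [hγ]; ring
    linarith [hSexp ▸ le_refl (S (k+1))]
  -- geometric decay
  have hSk : ∀ k, S k ≤ γ^k * S 0 := by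
    intro k
    induction k with
    | zero => simp
    | succ k ih =>
      calc S (k+1) ≤ γ * S k := hstep k
        _ ≤ γ * (γ^k * S 0) := mul_le_mul_of_nonneg_left ih hγ0
        _ = γ^(k+1) * S 0 := by ring
  have hS0 : S 0 = ∑ i, (X.mulVec βLS i)^2 := by
    have hE0 : E 0 = -βLS := by
      simp [hEdef, hβ0]
    rw [hSdef]
    simp only [hE0, Matrix.mulVec_neg]
    rw [← lsb_dot_sq]
    simp [neg_mul_neg]
  -- conclusion
  intro k
  set c : Fin p → ℝ := fun i => b i ⬝ᵥ E k with hcdef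
  set c' : Fin p → ℝ := fun i => if μ i = 0 then 0 else c i with hc'def
  set w : Fin p → ℝ := ∑ i, c' i • b i with hwdef
  refine ⟨β k - w, ?_, ?_⟩
  · -- normal equations
    have hAw : (Xᵀ * X) *ᵥ w = (Xᵀ * X) *ᵥ E k := by
      rw [hwdef, lsb_mulVec_sum]
      have h1 : ∀ i, (Xᵀ * X) *ᵥ (c' i • b i) = (μ i * c i) • b i := by
        intro i
        rw [Matrix.mulVec_smul, hAb i, smul_smul]
        congr 1
        rcases eq_or_ne (μ i) 0 with h | h
        · simp [hc'def, h]
        · simp [hc'def, h, mul_comm]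
      rw [Finset.sum_congr rfl fun i _ => h1 i]
      conv_rhs => rw [hexp (E k), lsb_mulVec_sum]
      refine (Finset.sum_congr rfl fun i _ => ?_).symm
      rw [Matrix.mulVec_smul, hAb i, smul_smul, mul_comm]
    rw [Matrix.mulVec_sub, hAw]
    have : (Xᵀ * X) *ᵥ E k = (Xᵀ * X) *ᵥ β k - (Xᵀ * X) *ᵥ βLS := by
      rw [hEdef]
      simp only
      rw [Matrix.mulVec_sub]
    rw [this, hβLS]
    abel
  · -- the norm bound
    have hsub : ∀ j, β k j - (β k - w) j = w j := fun j => by simp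
    have hww : ∑ j, (w j)^2 = ∑ i, (c' i)^2 := by
      rw [lsb_dot_sq, hwdef, lsb_orthdot p b hbb]
      exact Finset.sum_congr rfl fun i _ => (sq (c' i)).symm
    have hwS : lam * ∑ j, (w j)^2 ≤ S k := by
      rw [hww, (hspec k).1, Finset.mul_sum]
      refine Finset.sum_le_sum fun i _ => ?_
      rcases eq_or_ne (μ i) 0 with h | h
      · simp [hc'def, h, mul_nonneg (hμ0 i) (sq_nonneg _)]
      · have : c' i = c i := by simp [hc'def, h]
        rw [this]
        exact mul_le_mul_of_nonneg_right (hμlam i h) (sq_nonneg _)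
    have hwbound : ∑ j, (w j)^2 ≤ γ^k * S 0 / lam := by
      rw [le_div_iff₀ hlam_pos]
      calc (∑ j, (w j)^2) * lam = lam * ∑ j, (w j)^2 := by ring
        _ ≤ S k := hwS
        _ ≤ γ^k * S 0 := hSk k
    have hrpow : γ ^ ((k:ℝ)/2) = Real.sqrt (γ^k) := by
      rw [show ((k:ℝ)/2) = (k:ℝ) * (1/2) by ring, Real.rpow_mul hγ0, Real.rpow_natCast,
        Real.sqrt_eq_rpow]
    calc Real.sqrt (∑ j, (β k j - (β k - w) j)^2)
        = Real.sqrt (∑ j, (w j)^2) := by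
          congr 1
          exact Finset.sum_congr rfl fun j _ => by rw [hsub j]
      _ ≤ Real.sqrt (γ^k * S 0 / lam) := Real.sqrt_le_sqrt hwbound
      _ = Real.sqrt (γ^k) * Real.sqrt (S 0) / Real.sqrt lam := by
          rw [Real.sqrt_div (mul_nonneg (pow_nonneg hγ0 k) (hS_nonneg 0)),
            Real.sqrt_mul (pow_nonneg hγ0 k)]
      _ = (Real.sqrt (∑ i, (X.mulVec βLS i)^2) / Real.sqrt lam) * γ ^ ((k:ℝ)/2) := by
          rw [hrpow, hS0]; ring

end
end

section
/- For the LS-Boost(ε) iterates with learning rate ε ∈ (0,1], every least squares solution β_LS, and every k ≥ 0, the predictions satisfy ‖Xβ^k − Xβ_LS‖₂ ≤ ‖Xβ_LS‖₂ · γ^{k/2}, where γ := 1 − ε(2−ε)·λ_pmin(XᵀX)/(4p). -/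
open Matrix Finset

noncomputable section

/-- Quadratic-form lower bound via the smallest nonzero eigenvalue: for a real
symmetric PSD matrix `M` with `lam ≤ μ` for every nonzero eigenvalue `μ`,
`lam * ⟨v, Mv⟩ ≤ ‖Mv‖²`. -/
lemma lsboost_quad_lower_bound {p : ℕ} (M : Matrix (Fin p) (Fin p) ℝ) (hM : M.IsHermitian)
    (hpsd : ∀ w : Fin p → ℝ, 0 ≤ ∑ j, w j * M.mulVec w j)
    {lam : ℝ}
    (hmin : ∀ μ : ℝ, (∃ v : Fin p → ℝ, v ≠ 0 ∧ M.mulVec v = μ • v) → μ ≠ 0 → lam ≤ μ)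
    (v : Fin p → ℝ) :
    lam * ∑ j, v j * M.mulVec v j ≤ ∑ j, (M.mulVec v j) ^ 2 := by
  classical
  set b := hM.eigenvectorBasis with hb
  set μ := hM.eigenvalues with hμ
  have hsymm : ∀ a c, M a c = M c a := by
    intro a c
    have := congrFun (congrFun hM c) a
    simpa [Matrix.conjTranspose_apply] using this
  have hinner : ∀ x y : EuclideanSpace ℝ (Fin p), (inner ℝ x y : ℝ) = ∑ j, x j * y j := by
    intro x y
    simp [PiLp.inner_apply, RCLike.inner_apply, mul_comm]
  -- inner products via coordinates in the eigenbasis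
  have hsum_repr : ∀ x y : Fin p → ℝ, ∑ j, x j * y j = ∑ i, (b.repr (WithLp.toLp 2 x) i) * (b.repr (WithLp.toLp 2 y) i) := by
    intro x y
    have h := b.repr.inner_map_map (WithLp.toLp 2 x) (WithLp.toLp 2 y)
    rw [hinner, hinner] at h
    exact h.symm
  have heig : ∀ i, M.mulVec (⇑(b i)) = μ i • ⇑(b i) := fun i => hM.mulVec_eigenvectorBasis i
  -- coordinates of Mv
  have hrepr_eig : ∀ (x : Fin p → ℝ) (i : Fin p),
      b.repr (WithLp.toLp 2 (M.mulVec x)) i = μ i * b.repr (WithLp.toLp 2 x) i := by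
    intro x i
    rw [OrthonormalBasis.repr_apply_apply, OrthonormalBasis.repr_apply_apply, hinner, hinner]
    simp only [WithLp.ofLp_toLp]
    have step1 : ∑ j, (b i) j * M.mulVec x j = ∑ k, (M.mulVec ⇑(b i)) k * x k := by
      simp only [Matrix.mulVec, dotProduct, Finset.mul_sum, Finset.sum_mul]
      rw [Finset.sum_comm]
      refine Finset.sum_congr rfl fun k _ => Finset.sum_congr rfl fun j _ => ?_
      rw [hsymm k j]; ring
    rw [step1]
    simp only [heig i, Pi.smul_apply, smul_eq_mul, Finset.mul_sum]
    refine Finset.sum_congr rfl fun k _ => by ring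
  -- squared norm of eigenvectors is 1
  have hbnorm : ∀ i, ∑ j, (b i) j * (b i) j = 1 := by
    intro i
    rw [hsum_repr]
    simp [WithLp.toLp_ofLp, OrthonormalBasis.repr_self, EuclideanSpace.single_apply]
  have hμ_nonneg : ∀ i, 0 ≤ μ i := by
    intro i
    have h := hpsd ⇑(b i)
    have : ∑ j, (b i) j * M.mulVec (⇑(b i)) j = μ i := by
      rw [heig i]
      calc ∑ j, (b i) j * (μ i • ⇑(b i)) j
          = μ i * ∑ j, (b i) j * (b i) j := by
            rw [Finset.mul_sum]
            exact Finset.sum_congr rfl fun j _ => by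
              simp only [Pi.smul_apply, smul_eq_mul]; ring
        _ = μ i := by rw [hbnorm i]; ring
    linarith [this ▸ h]
  have hb_ne : ∀ i, (⇑(b i) : Fin p → ℝ) ≠ 0 := by
    intro i h0
    have h1 := hbnorm i
    have h2 : ∀ j, b i j = 0 := fun j => congrFun h0 j
    simp [h2] at h1
  have hμ_ge : ∀ i, μ i ≠ 0 → lam ≤ μ i := fun i hne =>
    hmin (μ i) ⟨⇑(b i), hb_ne i, heig i⟩ hne
  -- main computation
  simp only [pow_two]
  rw [hsum_repr v (M.mulVec v), hsum_repr (M.mulVec v) (M.mulVec v), Finset.mul_sum]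
  refine Finset.sum_le_sum fun i _ => ?_
  rw [hrepr_eig v i]
  set c := b.repr (WithLp.toLp 2 v) i
  by_cases h0 : μ i = 0
  · simp [h0]
  · have h1 := hμ_ge i h0
    have h2 := hμ_nonneg i
    nlinarith [mul_nonneg (mul_nonneg (sub_nonneg.mpr h1) h2) (sq_nonneg c)]

/-- **Theorem 2.1(iii) (predictions).** For the LS-Boost(ε) iterates with learning rate
ε ∈ (0,1], every least squares solution β_LS, and every k ≥ 0, the predictions satisfy
`‖Xβ^k − Xβ_LS‖₂ ≤ ‖Xβ_LS‖₂ · γ^{k/2}`. -/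
theorem lsboost_predictions_convergence
    (n p : ℕ) (hn : 0 < n) (hp : 0 < p)
    (X : Matrix (Fin n) (Fin p) ℝ) (hX : X ≠ 0)
    (hcols : ∀ j : Fin p, ∑ i, (X i j) ^ 2 = 1)
    (y : Fin n → ℝ)
    -- `lam` is the smallest nonzero eigenvalue of XᵀX
    (lam : ℝ)
    (hlam_eig : ∃ v : Fin p → ℝ, v ≠ 0 ∧ (Xᵀ * X).mulVec v = lam • v)
    (hlam_ne : lam ≠ 0)
    (hlam_min : ∀ μ : ℝ, (∃ v : Fin p → ℝ, v ≠ 0 ∧ (Xᵀ * X).mulVec v = μ • v) → μ ≠ 0 → lam ≤ μ)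
    -- LS-Boost(ε) iterates
    (ε : ℝ) (hε0 : 0 < ε) (hε1 : ε ≤ 1)
    (β : ℕ → Fin p → ℝ) (hβ0 : β 0 = 0)
    (r : ℕ → Fin n → ℝ) (hr : ∀ k, r k = y - X.mulVec (β k))
    (jj : ℕ → Fin p)
    (hjmax : ∀ k, ∀ j' : Fin p, |∑ i, r k i * X i j'| ≤ |∑ i, r k i * X i (jj k)|)
    (hupd : ∀ k, β (k + 1) = β k +
      (ε * (∑ i, r k i * X i (jj k))) • (Pi.single (jj k) (1 : ℝ) : Fin p → ℝ))
    (γ : ℝ) (hγ : γ = 1 - ε * (2 - ε) * lam / (4 * (p : ℝ))) :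
    ∀ βLS : Fin p → ℝ, (Xᵀ * X).mulVec βLS = Xᵀ.mulVec y →
      ∀ k : ℕ, Real.sqrt (∑ i, (X.mulVec (β k) i - X.mulVec βLS i) ^ 2) ≤
        Real.sqrt (∑ i, (X.mulVec βLS i) ^ 2) * γ ^ ((k : ℝ) / 2) := by
  intro βLS hLS k
  have hp' : (0:ℝ) < p := by exact_mod_cast hp
  -- the quadratic form of XᵀX is ‖Xw‖²
  have hquad : ∀ w : Fin p → ℝ,
      ∑ j, w j * (Xᵀ * X).mulVec w j = ∑ i, (X.mulVec w i)^2 := by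
    intro w
    rw [← Matrix.mulVec_mulVec]
    calc ∑ j, w j * Xᵀ.mulVec (X.mulVec w) j
        = ∑ j, ∑ i, w j * (X i j * X.mulVec w i) := by
          simp only [Matrix.mulVec, dotProduct, Matrix.transpose_apply, Finset.mul_sum]
      _ = ∑ i, ∑ j, w j * (X i j * X.mulVec w i) := Finset.sum_comm
      _ = ∑ i, (X.mulVec w i) * ∑ j, X i j * w j := by
          refine Finset.sum_congr rfl fun i _ => ?_
          rw [Finset.mul_sum]
          exact Finset.sum_congr rfl fun j _ => by ring
      _ = ∑ i, (X.mulVec w i)^2 := by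
          refine Finset.sum_congr rfl fun i _ => ?_
          rw [show ∑ j, X i j * w j = X.mulVec w i from rfl]
          ring
  -- lam is positive and at most p
  obtain ⟨v0, hv0, heig0⟩ := hlam_eig
  have hv0sq : 0 < ∑ j, v0 j ^ 2 := by
    have h1 : ∃ j, v0 j ≠ 0 := by
      by_contra h; push_neg at h; exact hv0 (funext h)
    obtain ⟨j0, hj0⟩ := h1
    exact Finset.sum_pos' (fun j _ => sq_nonneg _) ⟨j0, Finset.mem_univ _, by positivity⟩
  have heigsum : lam * ∑ j, v0 j ^ 2 = ∑ i, (X.mulVec v0 i)^2 := by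
    have h := hquad v0
    rw [heig0] at h
    rw [← h, Finset.mul_sum]
    exact Finset.sum_congr rfl fun j _ => by
      simp only [Pi.smul_apply, smul_eq_mul]; ring
  have hlam_pos : 0 < lam := by
    have hge : 0 ≤ lam * ∑ j, v0 j ^ 2 := by rw [heigsum]; positivity
    have h0 : 0 ≤ lam := by
      by_contra hneg; push_neg at hneg
      nlinarith
    exact h0.lt_of_ne (Ne.symm hlam_ne)
  have hlam_le : lam ≤ (p:ℝ) := by
    have hCS : ∀ i, (X.mulVec v0 i)^2 ≤ (∑ j, X i j ^2) * ∑ j, v0 j ^2 := by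
      intro i
      have h := Finset.sum_mul_sq_le_sq_mul_sq Finset.univ (fun j => X i j) v0
      simpa [Matrix.mulVec, dotProduct] using h
    have hsum : ∑ i, (X.mulVec v0 i)^2 ≤ (p:ℝ) * ∑ j, v0 j ^2 := by
      calc ∑ i, (X.mulVec v0 i)^2
          ≤ ∑ i : Fin n, (∑ j, X i j ^2) * ∑ j, v0 j ^2 :=
            Finset.sum_le_sum fun i _ => hCS i
        _ = (∑ i : Fin n, ∑ j, X i j ^2) * ∑ j, v0 j ^2 := by rw [Finset.sum_mul]
        _ = (p:ℝ) * ∑ j, v0 j ^2 := by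
            congr 1
            rw [Finset.sum_comm]
            simp [hcols]
    exact le_of_mul_le_mul_right (heigsum.trans_le hsum) hv0sq
  have hE0 : 0 < ε * (2 - ε) := by nlinarith
  have hE1 : ε * (2 - ε) ≤ 1 := by nlinarith [sq_nonneg (1 - ε)]
  have hγ0 : 0 ≤ γ := by
    rw [hγ, sub_nonneg, div_le_one (by positivity)]
    nlinarith [mul_le_mul_of_nonneg_right hE1 hlam_pos.le]
  -- the LS residual, orthogonal to all columns
  set rhat : Fin n → ℝ := y - X.mulVec βLS with hrhat
  have horth : ∀ j, ∑ i, rhat i * X i j = 0 := by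
    intro j
    have h : Xᵀ.mulVec rhat = 0 := by
      rw [hrhat, Matrix.mulVec_sub, Matrix.mulVec_mulVec, hLS, sub_self]
    have h2 := congrFun h j
    simpa [Matrix.mulVec, dotProduct, Matrix.transpose_apply, mul_comm] using h2
  set a : ℕ → ℝ := fun k => ∑ i, (r k i - rhat i)^2 with ha
  have ha_nonneg : ∀ k, 0 ≤ a k := fun k => Finset.sum_nonneg fun i _ => sq_nonneg _
  have hw : ∀ k i, r k i - rhat i = X.mulVec (βLS - β k) i := by
    intro k i
    rw [hr k, Matrix.mulVec_sub]
    simp only [hrhat, Pi.sub_apply]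
    ring
  -- per-step contraction
  have hstep : ∀ k, a (k+1) ≤ γ * a k := by
    intro k
    set u := ∑ i, r k i * X i (jj k) with hu
    set j0 := jj k with hj0
    have hrstep : ∀ i, r (k+1) i = r k i - (ε*u) * X i j0 := by
      intro i
      have hsingle : X.mulVec (Pi.single j0 (1:ℝ)) i = X i j0 := by
        simp [Matrix.mulVec, dotProduct, Pi.single_apply, mul_ite, Finset.sum_ite_eq']
      have hmv : X.mulVec (β k + (ε*u) • (Pi.single j0 (1:ℝ) : Fin p → ℝ)) i
          = X.mulVec (β k) i + (ε*u) * X i j0 := by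
        rw [Matrix.mulVec_add, Matrix.mulVec_smul]
        simp only [Pi.add_apply, Pi.smul_apply, smul_eq_mul, hsingle]
      have hβ1 : β (k+1) = β k + (ε*u) • (Pi.single j0 (1:ℝ) : Fin p → ℝ) := hupd k
      have hrr : r k i = y i - X.mulVec (β k) i := by rw [hr k]; rfl
      rw [hr (k+1), hβ1, Pi.sub_apply, hmv, hrr]
      ring
    have hwu : ∑ i, (r k i - rhat i) * X i j0 = u := by
      have h : ∑ i, (r k i - rhat i) * X i j0
          = ∑ i, r k i * X i j0 - ∑ i, rhat i * X i j0 := by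
        rw [← Finset.sum_sub_distrib]
        exact Finset.sum_congr rfl fun i _ => by ring
      rw [h, horth j0, sub_zero, hu]
    have hexp : a (k+1) = a k - ε*(2-ε)*u^2 := by
      have hterm : ∀ i, (r (k+1) i - rhat i)^2
          = (r k i - rhat i)^2 - 2*(ε*u)*((r k i - rhat i)*X i j0) + (ε*u)^2 * X i j0^2 := by
        intro i; rw [hrstep i]; ring
      calc a (k+1)
          = ∑ i, ((r k i - rhat i)^2 - 2*(ε*u)*((r k i - rhat i)*X i j0)
              + (ε*u)^2 * X i j0^2) := Finset.sum_congr rfl fun i _ => hterm i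
        _ = a k - 2*(ε*u)*(∑ i, (r k i - rhat i)*X i j0) + (ε*u)^2 * ∑ i, X i j0^2 := by
            rw [Finset.sum_add_distrib, Finset.sum_sub_distrib, ← Finset.mul_sum,
              ← Finset.mul_sum]
        _ = a k - ε*(2-ε)*u^2 := by rw [hwu, hcols j0]; ring
    have hherm : (Xᵀ * X).IsHermitian := by
      have h := Matrix.isHermitian_conjTranspose_mul_self X
      rwa [Matrix.conjTranspose_eq_transpose_of_trivial] at h
    have hkey : lam * a k ≤ (p:ℝ) * u^2 := by
      have hq := lsboost_quad_lower_bound (Xᵀ * X) hherm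
        (fun w => by rw [hquad w]; positivity) hlam_min (βLS - β k)
      have h1 : ∑ j, (βLS - β k) j * (Xᵀ*X).mulVec (βLS - β k) j = a k := by
        rw [hquad]
        exact Finset.sum_congr rfl fun i _ => by rw [← hw k i]
      have h2 : ∀ j, (Xᵀ*X).mulVec (βLS - β k) j = ∑ i, r k i * X i j := by
        intro j
        rw [← Matrix.mulVec_mulVec]
        have hrfl : Xᵀ.mulVec (X.mulVec (βLS - β k)) j
            = ∑ i, X i j * X.mulVec (βLS - β k) i := rfl
        rw [hrfl]
        calc ∑ i, X i j * X.mulVec (βLS - β k) i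
            = ∑ i, X i j * (r k i - rhat i) :=
              Finset.sum_congr rfl fun i _ => by rw [← hw k i]
          _ = ∑ i, r k i * X i j - ∑ i, rhat i * X i j := by
              rw [← Finset.sum_sub_distrib]
              exact Finset.sum_congr rfl fun i _ => by ring
          _ = ∑ i, r k i * X i j := by rw [horth j, sub_zero]
      have h3 : ∑ j, ((Xᵀ*X).mulVec (βLS - β k) j)^2 ≤ (p:ℝ) * u^2 := by
        calc ∑ j, ((Xᵀ*X).mulVec (βLS - β k) j)^2
            = ∑ j, (∑ i, r k i * X i j)^2 :=
              Finset.sum_congr rfl fun j _ => by rw [h2 j]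
          _ ≤ ∑ _j : Fin p, u^2 := by
              refine Finset.sum_le_sum fun j _ => ?_
              have habs := hjmax k j
              calc (∑ i, r k i * X i j)^2 = |∑ i, r k i * X i j|^2 := (sq_abs _).symm
                _ ≤ |u|^2 := by
                    exact pow_le_pow_left₀ (abs_nonneg _) habs 2
                _ = u^2 := sq_abs u
          _ = (p:ℝ) * u^2 := by
              simp [Finset.sum_const, Finset.card_univ]
      calc lam * a k
          = lam * ∑ j, (βLS - β k) j * (Xᵀ*X).mulVec (βLS - β k) j := by rw [h1]
        _ ≤ ∑ j, ((Xᵀ*X).mulVec (βLS - β k) j)^2 := hq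
        _ ≤ (p:ℝ) * u^2 := h3
    rw [hexp, hγ]
    have hak := ha_nonneg k
    rw [sub_mul, one_mul, sub_le_sub_iff_left, div_mul_eq_mul_div,
      div_le_iff₀ (by positivity : (0:ℝ) < 4*p)]
    nlinarith [mul_le_mul_of_nonneg_left hkey hE0.le,
      mul_nonneg (mul_nonneg hE0.le hp'.le) (sq_nonneg u)]
  -- geometric decay by induction
  have hiter : ∀ k, a k ≤ a 0 * γ^k := by
    intro k
    induction k with
    | zero => simp
    | succ k ih =>
      calc a (k+1) ≤ γ * a k := hstep k
        _ ≤ γ * (a 0 * γ^k) := mul_le_mul_of_nonneg_left ih hγ0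
        _ = a 0 * γ^(k+1) := by ring
  -- conclusion
  have ha0 : a 0 = ∑ i, (X.mulVec βLS i)^2 := by
    refine Finset.sum_congr rfl fun i _ => ?_
    rw [hr 0, hβ0]
    simp [hrhat, Matrix.mulVec_zero]
  have hLHS : ∑ i, (X.mulVec (β k) i - X.mulVec βLS i)^2 = a k := by
    refine Finset.sum_congr rfl fun i _ => ?_
    have h : r k i - rhat i = X.mulVec βLS i - X.mulVec (β k) i := by
      rw [hr k]
      simp only [hrhat, Pi.sub_apply]
      ring
    rw [h]; ring
  rw [hLHS, ← ha0]
  have hrpow : γ ^ ((k:ℝ)/2) = Real.sqrt (γ^k) := by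
    rw [show ((k:ℝ)/2) = (k:ℝ) * (1/2 : ℝ) by ring, Real.rpow_mul hγ0,
      Real.rpow_natCast, Real.sqrt_eq_rpow]
  rw [hrpow, ← Real.sqrt_mul (ha_nonneg 0)]
  exact Real.sqrt_le_sqrt (hiter k)

end
end

section
/- For the LS-Boost(ε) iterates with learning rate ε ∈ (0,1] and every k ≥ 0, the maximum absolute correlation between residuals and predictors satisfies ‖Xᵀr^k‖_∞ ≤ ‖Xβ_LS‖₂ · γ^{k/2}, where β_LS is any least squares solution and γ := 1 − ε(2−ε)·λ_pmin(XᵀX)/(4p). -/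
open Matrix Finset

noncomputable section

lemma transp_dot {n p : ℕ} (X : Matrix (Fin n) (Fin p) ℝ) (u : Fin p → ℝ) (z : Fin n → ℝ) :
    u ⬝ᵥ (Xᵀ *ᵥ z) = (X *ᵥ u) ⬝ᵥ z := by
  rw [Matrix.dotProduct_mulVec, ← Matrix.mulVec_transpose, Matrix.transpose_transpose]

lemma spectral_key {p : ℕ} (A : Matrix (Fin p) (Fin p) ℝ) (hA : A.IsHermitian)
    (lam : ℝ) (hlam : 0 ≤ lam)
    (hmin : ∀ i, hA.eigenvalues i ≠ 0 → lam ≤ hA.eigenvalues i)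
    (u : Fin p → ℝ) : lam * (u ⬝ᵥ A *ᵥ u) ≤ (A *ᵥ u) ⬝ᵥ (A *ᵥ u) := by
  classical
  set U : Matrix (Fin p) (Fin p) ℝ := (hA.eigenvectorUnitary : Matrix (Fin p) (Fin p) ℝ) with hU
  set μ : Fin p → ℝ := hA.eigenvalues with hμ
  have hsp : A = U * Matrix.diagonal μ * star U := by
    simpa [RCLike.ofReal_real_eq_id] using hA.spectral_theorem
  have hUsU : star U * U = 1 := Unitary.coe_star_mul_self hA.eigenvectorUnitary
  have hstar : star U = Uᵀ := by
    rw [Matrix.star_eq_conjTranspose, Matrix.conjTranspose_eq_transpose_of_trivial]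
  set w : Fin p → ℝ := Uᵀ *ᵥ u with hw
  have h1 : A *ᵥ u = U *ᵥ (Matrix.diagonal μ *ᵥ w) := by
    rw [hsp, hstar]
    rw [Matrix.mulVec_mulVec, Matrix.mulVec_mulVec]
  have hdotU : ∀ x z : Fin p → ℝ, x ⬝ᵥ (U *ᵥ z) = (Uᵀ *ᵥ x) ⬝ᵥ z := by
    intro x z
    rw [Matrix.dotProduct_mulVec, ← Matrix.mulVec_transpose]
  have hUU : ∀ z : Fin p → ℝ, Uᵀ *ᵥ (U *ᵥ z) = z := by
    intro z
    rw [Matrix.mulVec_mulVec, ← hstar, hUsU, Matrix.one_mulVec]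
  have h2 : u ⬝ᵥ A *ᵥ u = ∑ i, w i * (μ i * w i) := by
    rw [h1, hdotU, ← hw]
    simp [dotProduct, Matrix.mulVec_diagonal]
  have h3 : (A *ᵥ u) ⬝ᵥ (A *ᵥ u) = ∑ i, (μ i * w i) * (μ i * w i) := by
    rw [h1, hdotU, hUU]
    simp [dotProduct, Matrix.mulVec_diagonal]
  rw [h2, h3, Finset.mul_sum]
  apply Finset.sum_le_sum
  intro i _
  by_cases h : μ i = 0
  · simp [h]
  · have hle := hmin i h
    nlinarith [sq_nonneg (w i), mul_nonneg (mul_nonneg (sub_nonneg.2 hle) (le_trans hlam hle)) (sq_nonneg (w i))]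

/-- **Theorem 2.1(iv) (gradient norm / correlation values).** For the LS-Boost(ε) iterates
with learning rate ε ∈ (0,1] and every k ≥ 0, the maximum absolute correlation between
residuals and predictors satisfies `‖Xᵀr^k‖_∞ ≤ ‖Xβ_LS‖₂ · γ^{k/2}`
(formalized as: every coordinate of `Xᵀr^k` is bounded in absolute value by the bound). -/
theorem lsboost_correlation_convergence
    (n p : ℕ) (hn : 0 < n) (hp : 0 < p)
    (X : Matrix (Fin n) (Fin p) ℝ) (hX : X ≠ 0)
    (hcols : ∀ j : Fin p, ∑ i, (X i j) ^ 2 = 1)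
    (y : Fin n → ℝ)
    -- `lam` is the smallest nonzero eigenvalue of XᵀX
    (lam : ℝ)
    (hlam_eig : ∃ v : Fin p → ℝ, v ≠ 0 ∧ (Xᵀ * X).mulVec v = lam • v)
    (hlam_ne : lam ≠ 0)
    (hlam_min : ∀ μ : ℝ, (∃ v : Fin p → ℝ, v ≠ 0 ∧ (Xᵀ * X).mulVec v = μ • v) → μ ≠ 0 → lam ≤ μ)
    -- LS-Boost(ε) iterates
    (ε : ℝ) (hε0 : 0 < ε) (hε1 : ε ≤ 1)
    (β : ℕ → Fin p → ℝ) (hβ0 : β 0 = 0)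
    (r : ℕ → Fin n → ℝ) (hr : ∀ k, r k = y - X.mulVec (β k))
    (jj : ℕ → Fin p)
    (hjmax : ∀ k, ∀ j' : Fin p, |∑ i, r k i * X i j'| ≤ |∑ i, r k i * X i (jj k)|)
    (hupd : ∀ k, β (k + 1) = β k +
      (ε * (∑ i, r k i * X i (jj k))) • (Pi.single (jj k) (1 : ℝ) : Fin p → ℝ))
    -- βLS is any least squares solution
    (βLS : Fin p → ℝ) (hβLS : (Xᵀ * X).mulVec βLS = Xᵀ.mulVec y)
    (γ : ℝ) (hγ : γ = 1 - ε * (2 - ε) * lam / (4 * (p : ℝ))) :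
    ∀ k : ℕ, ∀ j' : Fin p,
      |∑ i, r k i * X i j'| ≤ Real.sqrt (∑ i, (X.mulVec βLS i) ^ 2) * γ ^ ((k : ℝ) / 2) := by
  classical
  set A : Matrix (Fin p) (Fin p) ℝ := Xᵀ * X with hA_def
  have hA : A.IsHermitian := Matrix.isHermitian_conjTranspose_mul_self X
  have hXvdot : ∀ v : Fin p → ℝ, v ⬝ᵥ (A *ᵥ v) = (X *ᵥ v) ⬝ᵥ (X *ᵥ v) := by
    intro v
    rw [hA_def, ← Matrix.mulVec_mulVec, transp_dot]
  have hnnp : ∀ (v : Fin p → ℝ), 0 ≤ v ⬝ᵥ v :=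
    fun v => Finset.sum_nonneg fun i _ => mul_self_nonneg _
  have hnnn : ∀ (v : Fin n → ℝ), 0 ≤ v ⬝ᵥ v :=
    fun v => Finset.sum_nonneg fun i _ => mul_self_nonneg _
  set q : ℝ := (p : ℝ) with hq_def
  have hq : 0 < q := by
    rw [hq_def]
    exact_mod_cast hp
  -- lam > 0 and lam ≤ p
  obtain ⟨v, hv0, hveq⟩ := hlam_eig
  have hvv : 0 < v ⬝ᵥ v := by
    obtain ⟨j, hj⟩ := Function.ne_iff.mp hv0
    have h1 : (0:ℝ) < v j * v j := mul_self_pos.mpr hj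
    have h2 : ∀ i ∈ Finset.univ, 0 ≤ v i * v i := fun i _ => mul_self_nonneg _
    calc (0:ℝ) < v j * v j := h1
      _ ≤ ∑ i, v i * v i := Finset.single_le_sum h2 (Finset.mem_univ j)
  have hlveq : v ⬝ᵥ (A *ᵥ v) = lam * (v ⬝ᵥ v) := by
    rw [hA_def, hveq, dotProduct_smul, smul_eq_mul]
  have hlam_pos : 0 < lam := by
    rcases lt_or_ge 0 lam with h | h
    · exact h
    have h1 : lam * (v ⬝ᵥ v) = (X *ᵥ v) ⬝ᵥ (X *ᵥ v) := by rw [← hlveq, hXvdot]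
    have h2 : 0 ≤ lam * (v ⬝ᵥ v) := h1 ▸ hnnn _
    have : lam = 0 := by nlinarith
    exact absurd this hlam_ne
  have hlam_le : lam ≤ q := by
    have hXv : (X *ᵥ v) ⬝ᵥ (X *ᵥ v) ≤ q * (v ⬝ᵥ v) := by
      have hper : ∀ i : Fin n, (X *ᵥ v) i * (X *ᵥ v) i
          ≤ (∑ j, (X i j) ^ 2) * (∑ j, (v j) ^ 2) := by
        intro i
        have := Finset.sum_mul_sq_le_sq_mul_sq Finset.univ (fun j => X i j) v
        calc (X *ᵥ v) i * (X *ᵥ v) i = (∑ j, X i j * v j) ^ 2 := by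
              simp [Matrix.mulVec, dotProduct, sq]
          _ ≤ (∑ j, (X i j) ^ 2) * (∑ j, (v j) ^ 2) := this
      calc (X *ᵥ v) ⬝ᵥ (X *ᵥ v) = ∑ i, (X *ᵥ v) i * (X *ᵥ v) i := rfl
        _ ≤ ∑ i : Fin n, (∑ j, (X i j) ^ 2) * (∑ j, (v j) ^ 2) :=
            Finset.sum_le_sum fun i _ => hper i
        _ = (∑ i : Fin n, ∑ j, (X i j) ^ 2) * (∑ j, (v j) ^ 2) := by
            rw [Finset.sum_mul]
        _ = q * (v ⬝ᵥ v) := by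
            have hsum : (∑ i : Fin n, ∑ j, (X i j) ^ 2) = q := by
              rw [Finset.sum_comm, hq_def]
              simp [hcols]
            rw [hsum]
            congr 1
            simp [dotProduct, sq]
    have h1 : lam * (v ⬝ᵥ v) ≤ q * (v ⬝ᵥ v) := by rw [← hlveq, hXvdot]; exact hXv
    exact le_of_mul_le_mul_right (by linarith [h1]) hvv
  have hγ0 : 0 ≤ γ := by
    rw [hγ, sub_nonneg, div_le_one (by linarith : (0:ℝ) < 4 * q)]
    nlinarith [sq_nonneg (ε - 1), hlam_pos, hlam_le, hq]
  -- key spectral inequality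
  have hmin : ∀ i, hA.eigenvalues i ≠ 0 → lam ≤ hA.eigenvalues i := by
    intro i hi
    refine hlam_min _ ⟨⇑(hA.eigenvectorBasis i), ?_, ?_⟩ hi
    · have := hA.eigenvectorBasis.orthonormal.ne_zero i
      simpa using this
    · exact hA.mulVec_eigenvectorBasis i
  have hkey : ∀ u : Fin p → ℝ, lam * (u ⬝ᵥ A *ᵥ u) ≤ (A *ᵥ u) ⬝ᵥ (A *ᵥ u) :=
    spectral_key A hA lam hlam_pos.le hmin
  -- iterates
  set uu : ℕ → Fin p → ℝ := fun k => βLS - β k with huu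
  set ff : ℕ → ℝ := fun k => (X *ᵥ uu k) ⬝ᵥ (X *ᵥ uu k) with hff
  have hffnn : ∀ k, 0 ≤ ff k := fun k => hnnn _
  have hcorr : ∀ k (j : Fin p), (∑ i, r k i * X i j) = (A *ᵥ uu k) j := by
    intro k j
    have h1 : (∑ i, r k i * X i j) = (Xᵀ *ᵥ r k) j := by
      simp [Matrix.mulVec, dotProduct, Matrix.transpose_apply, mul_comm]
    have h2 : Xᵀ *ᵥ r k = A *ᵥ uu k := by
      rw [hr k, Matrix.mulVec_sub, huu]
      rw [show Xᵀ *ᵥ (X *ᵥ β k) = A *ᵥ β k from Matrix.mulVec_mulVec _ _ _,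
        show Xᵀ *ᵥ y = A *ᵥ βLS from hβLS.symm, ← Matrix.mulVec_sub]
    rw [h1, h2]
  -- coordinate bound by sqrt(ff k)
  have hcoord : ∀ k (j : Fin p), |(A *ᵥ uu k) j| ≤ Real.sqrt (ff k) := by
    intro k j
    have h1 : (A *ᵥ uu k) j = ∑ i, X i j * (X *ᵥ uu k) i := by
      rw [hA_def, ← Matrix.mulVec_mulVec]
      simp [Matrix.mulVec, dotProduct, Matrix.transpose_apply]
    have h2 : ((A *ᵥ uu k) j) ^ 2 ≤ ff k := by
      rw [h1]
      calc (∑ i, X i j * (X *ᵥ uu k) i) ^ 2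
          ≤ (∑ i, (X i j) ^ 2) * (∑ i, ((X *ᵥ uu k) i) ^ 2) :=
            Finset.sum_mul_sq_le_sq_mul_sq Finset.univ _ _
        _ = ff k := by rw [hcols j, one_mul, hff]; simp [dotProduct, sq]
    calc |(A *ᵥ uu k) j| = Real.sqrt (((A *ᵥ uu k) j) ^ 2) := (Real.sqrt_sq_eq_abs _).symm
      _ ≤ Real.sqrt (ff k) := Real.sqrt_le_sqrt h2
  -- recursion
  have hrec : ∀ k, ff (k + 1) = ff k - ε * (2 - ε) * ((A *ᵥ uu k) (jj k)) ^ 2 := by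
    intro k
    set c : ℝ := (A *ᵥ uu k) (jj k) with hc
    have hu1 : uu (k + 1) = uu k - (ε * c) • (Pi.single (jj k) (1:ℝ) : Fin p → ℝ) := by
      rw [huu]
      simp only [hupd k, hcorr k (jj k)]
      ext j
      simp [sub_add_eq_sub_sub, hc]
    have hX1 : X *ᵥ uu (k + 1) = X *ᵥ uu k - (ε * c) • (fun i => X i (jj k)) := by
      rw [hu1, Matrix.mulVec_sub, Matrix.mulVec_smul]
      congr 1
      ext i
      simp [Matrix.mulVec_single]
    have hds : (X *ᵥ uu k) ⬝ᵥ (fun i => X i (jj k)) = c := by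
      rw [hc]
      rw [show (A *ᵥ uu k) (jj k) = ∑ i, X i (jj k) * (X *ᵥ uu k) i from by
        rw [hA_def, ← Matrix.mulVec_mulVec]
        simp [Matrix.mulVec, dotProduct, Matrix.transpose_apply]]
      simp [dotProduct, mul_comm]
    have hsd : (fun i => X i (jj k)) ⬝ᵥ (X *ᵥ uu k) = c := by
      rw [dotProduct_comm]; exact hds
    have hss : (fun i => X i (jj k)) ⬝ᵥ (fun i => X i (jj k)) = 1 := by
      rw [show ((fun i => X i (jj k)) ⬝ᵥ fun i => X i (jj k)) = ∑ i, (X i (jj k))^2 from by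
        simp [dotProduct, sq]]
      exact hcols (jj k)
    rw [hff]
    simp only [hX1, sub_dotProduct, dotProduct_sub, smul_dotProduct,
      dotProduct_smul, smul_eq_mul]
    rw [hds, hsd, hss]
    ring
  -- lower bound on the maximal correlation
  have hlower : ∀ k, lam * ff k ≤ q * ((A *ᵥ uu k) (jj k)) ^ 2 := by
    intro k
    have h1 : lam * ff k ≤ (A *ᵥ uu k) ⬝ᵥ (A *ᵥ uu k) := by
      rw [show ff k = uu k ⬝ᵥ (A *ᵥ uu k) from (hXvdot (uu k)).symm]
      exact hkey (uu k)
    have h2 : (A *ᵥ uu k) ⬝ᵥ (A *ᵥ uu k) ≤ q * ((A *ᵥ uu k) (jj k)) ^ 2 := by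
      have hper : ∀ j : Fin p, (A *ᵥ uu k) j * (A *ᵥ uu k) j ≤ ((A *ᵥ uu k) (jj k)) ^ 2 := by
        intro j
        have habs : |(A *ᵥ uu k) j| ≤ |(A *ᵥ uu k) (jj k)| := by
          have := hjmax k j
          rwa [hcorr k j, hcorr k (jj k)] at this
        nlinarith [abs_nonneg ((A *ᵥ uu k) j), sq_abs ((A *ᵥ uu k) j),
          sq_abs ((A *ᵥ uu k) (jj k)), pow_le_pow_left₀ (abs_nonneg _) habs 2]
      calc (A *ᵥ uu k) ⬝ᵥ (A *ᵥ uu k) = ∑ j, (A *ᵥ uu k) j * (A *ᵥ uu k) j := rfl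
        _ ≤ ∑ _j : Fin p, ((A *ᵥ uu k) (jj k)) ^ 2 := Finset.sum_le_sum fun j _ => hper j
        _ = q * ((A *ᵥ uu k) (jj k)) ^ 2 := by simp [hq_def, mul_comm]
    linarith
  -- geometric decay
  have hstep : ∀ k, ff (k + 1) ≤ γ * ff k := by
    intro k
    set c : ℝ := (A *ᵥ uu k) (jj k) with hc
    have hεp : 0 < ε * (2 - ε) := by nlinarith
    have h1 : ε * (2 - ε) * lam / (4 * q) * ff k ≤ ε * (2 - ε) * c ^ 2 := by
      have ha : ε * (2 - ε) * lam / (4 * q) * ff k = ε * (2 - ε) * (lam * ff k) / (4 * q) := by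
        ring
      rw [ha]
      have hb0 : ε * (2 - ε) * (lam * ff k) ≤ ε * (2 - ε) * (q * c ^ 2) :=
        mul_le_mul_of_nonneg_left (hlower k) hεp.le
      have hb : ε * (2 - ε) * (lam * ff k) / (4 * q) ≤ ε * (2 - ε) * (q * c ^ 2) / (4 * q) :=
        div_le_div_of_nonneg_right hb0 (by linarith : (0:ℝ) ≤ 4 * q)
      have hcq : ε * (2 - ε) * (q * c ^ 2) / (4 * q) = ε * (2 - ε) * c ^ 2 / 4 := by
        field_simp
      rw [hcq] at hb
      nlinarith [sq_nonneg c]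
    rw [hrec k, hγ]
    have : (1 - ε * (2 - ε) * lam / (4 * q)) * ff k
        = ff k - ε * (2 - ε) * lam / (4 * q) * ff k := by ring
    rw [this]
    linarith
  have hgeom : ∀ k, ff k ≤ ff 0 * γ ^ k := by
    intro k
    induction k with
    | zero => simp
    | succ k ih =>
      calc ff (k + 1) ≤ γ * ff k := hstep k
        _ ≤ γ * (ff 0 * γ ^ k) := by
            exact mul_le_mul_of_nonneg_left ih hγ0
        _ = ff 0 * γ ^ (k + 1) := by ring
  -- conclusion
  have hff0 : ff 0 = ∑ i, (X.mulVec βLS i) ^ 2 := by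
    have h1 : uu 0 = βLS := by rw [huu]; simp [hβ0]
    show (X *ᵥ uu 0) ⬝ᵥ (X *ᵥ uu 0) = _
    rw [h1]
    simp [dotProduct, sq]
  intro k j
  rw [hcorr k j]
  calc |(A *ᵥ uu k) j| ≤ Real.sqrt (ff k) := hcoord k j
    _ ≤ Real.sqrt (ff 0 * γ ^ k) := Real.sqrt_le_sqrt (hgeom k)
    _ = Real.sqrt (ff 0) * Real.sqrt (γ ^ k) := Real.sqrt_mul (hffnn 0) _
    _ = Real.sqrt (∑ i, (X.mulVec βLS i) ^ 2) * γ ^ ((k : ℝ) / 2) := by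
        rw [hff0]
        congr 1
        rw [Real.sqrt_eq_rpow, ← Real.rpow_natCast γ k, ← Real.rpow_mul hγ0]
        congr 1
        ring

end
end

section
/- For the LS-Boost(ε) iterates with learning rate ε ∈ (0,1], at every iteration k the training error gap contracts by the factor γ: L_n(β^{k+1}) − L_n* ≤ γ·(L_n(β^k) − L_n*), where γ := 1 − ε(2−ε)·λ_pmin(XᵀX)/(4p). Moreover the exact per-iteration decrease satisfies L_n(β^{k+1}) = L_n(β^k) − (ε(2−ε)/(2n))·((r^k)ᵀX_{j_k})². -/
open Matrix Finset

noncomputable section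

lemma lsboost_sum_dotProduct' {p : ℕ} (f : Fin p → Fin p → ℝ) (w : Fin p → ℝ) :
    (∑ i, f i) ⬝ᵥ w = ∑ i, f i ⬝ᵥ w := by
  simp only [dotProduct, Finset.sum_apply, Finset.sum_mul]
  exact Finset.sum_comm

lemma lsboost_dotProduct_sum' {p : ℕ} (w : Fin p → ℝ) (f : Fin p → Fin p → ℝ) :
    w ⬝ᵥ (∑ i, f i) = ∑ i, w ⬝ᵥ f i := by
  simp only [dotProduct, Finset.sum_apply, Finset.mul_sum]
  exact Finset.sum_comm

lemma lsboost_dot_sq {n p : ℕ} (X : Matrix (Fin n) (Fin p) ℝ) (v : Fin p → ℝ) :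
    v ⬝ᵥ ((Xᵀ * X) *ᵥ v) = ∑ i, ((X *ᵥ v) i)^2 := by
  rw [← Matrix.mulVec_mulVec, Matrix.dotProduct_mulVec, Matrix.vecMul_transpose]
  simp [dotProduct, sq]

lemma lsboost_cross_eq {n p : ℕ} (X : Matrix (Fin n) (Fin p) ℝ) (a : Fin n → ℝ) (w : Fin p → ℝ) :
    ∑ i, a i * (X *ᵥ w) i = w ⬝ᵥ (Xᵀ *ᵥ a) := by
  rw [Matrix.dotProduct_mulVec, Matrix.vecMul_transpose]
  simp [dotProduct, mul_comm]

lemma lsboost_spec_ineq {n p : ℕ} (X : Matrix (Fin n) (Fin p) ℝ) (lam : ℝ)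
    (hlam_min : ∀ μ : ℝ, (∃ v : Fin p → ℝ, v ≠ 0 ∧ (Xᵀ * X).mulVec v = μ • v) → μ ≠ 0 → lam ≤ μ)
    (u : Fin p → ℝ) :
    lam * (u ⬝ᵥ ((Xᵀ * X) *ᵥ u)) ≤ ∑ j, (((Xᵀ * X) *ᵥ u) j)^2 := by
  set A : Matrix (Fin p) (Fin p) ℝ := Xᵀ * X with hAdef
  have hA : A.IsHermitian := by
    simpa [Matrix.conjTranspose_eq_transpose_of_trivial] using Matrix.isHermitian_conjTranspose_mul_self X
  set b := hA.eigenvectorBasis with hb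
  set μ := hA.eigenvalues with hμ
  set V : Fin p → (Fin p → ℝ) := fun i => (WithLp.equiv 2 (Fin p → ℝ)) (b i) with hV
  have hAV : ∀ i, A *ᵥ V i = μ i • V i := fun i => hA.mulVec_eigenvectorBasis i
  have horth : ∀ i j, V i ⬝ᵥ V j = if i = j then 1 else 0 := by
    intro i j
    have := (orthonormal_iff_ite.mp b.orthonormal) i j
    simpa [PiLp.inner_apply, RCLike.inner_apply, dotProduct, V, mul_comm] using this
  set c : Fin p → ℝ := fun i => b.repr ((WithLp.equiv 2 (Fin p → ℝ)).symm u) i with hc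
  have hu : u = ∑ i, c i • V i := by
    have := b.sum_repr ((WithLp.equiv 2 (Fin p → ℝ)).symm u)
    funext j
    have h3 := congrArg (fun w => w j) this.symm
    simpa [c, V, Finset.sum_apply] using h3
  have hAu : A *ᵥ u = ∑ i, (c i * μ i) • V i := by
    conv_lhs => rw [hu]
    rw [show A *ᵥ (∑ i, c i • V i) = ∑ i, c i • (A *ᵥ V i) by
      simp only [← Matrix.mulVecLin_apply, map_sum, LinearMap.map_smul]]
    refine Finset.sum_congr rfl fun i _ => ?_
    rw [hAV i, smul_smul]
  have hdot : ∀ (a d : Fin p → ℝ),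
      (∑ i, a i • V i) ⬝ᵥ (∑ i, d i • V i) = ∑ i, a i * d i := by
    intro a d
    rw [lsboost_sum_dotProduct']
    refine Finset.sum_congr rfl fun i _ => ?_
    rw [smul_dotProduct, lsboost_dotProduct_sum']
    simp only [dotProduct_smul, horth, smul_eq_mul, mul_ite, mul_one, mul_zero]
    simp [Finset.sum_ite_eq]
  have h1 : u ⬝ᵥ (A *ᵥ u) = ∑ i, c i * (c i * μ i) := by
    rw [hAu]
    conv_lhs => rw [hu]
    exact hdot _ _
  have h2 : ∑ j, ((A *ᵥ u) j)^2 = ∑ i, (c i * μ i) * (c i * μ i) := by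
    have e : ∑ j, ((A *ᵥ u) j)^2 = (A *ᵥ u) ⬝ᵥ (A *ᵥ u) := by simp [dotProduct, sq]
    rw [e, hAu]
    exact hdot _ _
  rw [h1, h2, Finset.mul_sum]
  refine Finset.sum_le_sum fun i _ => ?_
  rcases eq_or_ne (μ i) 0 with hz | hz
  · simp [hz]
  · have hVne : V i ≠ 0 := by
      intro h
      have := horth i i
      rw [h] at this
      simp at this
    have hle : lam ≤ μ i := hlam_min (μ i) ⟨V i, hVne, hAV i⟩ hz
    have hμnn : 0 ≤ μ i := by
      have h3 : V i ⬝ᵥ (A *ᵥ V i) = μ i := by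
        rw [hAV i, dotProduct_smul]
        have h5 := horth i i
        simp only [if_pos rfl] at h5
        simp [smul_eq_mul, h5]
      have h4 : 0 ≤ V i ⬝ᵥ (A *ᵥ V i) := by
        rw [hAdef, ← Matrix.mulVec_mulVec, Matrix.dotProduct_mulVec, Matrix.vecMul_transpose]
        exact Finset.sum_nonneg fun i _ => mul_self_nonneg _
      linarith
    nlinarith [mul_nonneg (mul_nonneg (sq_nonneg (c i)) hμnn) (sub_nonneg.mpr hle)]

lemma lsboost_exists_normal {n p : ℕ} (X : Matrix (Fin n) (Fin p) ℝ) (y : Fin n → ℝ) :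
    ∃ bs : Fin p → ℝ, Xᵀ *ᵥ (y - X *ᵥ bs) = 0 := by
  let T : (Fin p → ℝ) →ₗ[ℝ] EuclideanSpace ℝ (Fin n) :=
    { toFun := fun v => WithLp.toLp 2 (X *ᵥ v)
      map_add' := fun a b => by simp [Matrix.mulVec_add]
      map_smul' := fun c a => by simp [Matrix.mulVec_smul] }
  let K : Submodule ℝ (EuclideanSpace ℝ (Fin n)) := LinearMap.range T
  let y' : EuclideanSpace ℝ (Fin n) := WithLp.toLp 2 y
  have hw : (K.orthogonalProjectionOnto y' : EuclideanSpace ℝ (Fin n)) ∈ K :=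
    (K.orthogonalProjectionOnto y').2
  obtain ⟨bs, hbs⟩ := hw
  refine ⟨bs, ?_⟩
  have hperp : y' - (K.orthogonalProjectionOnto y' : EuclideanSpace ℝ (Fin n)) ∈ Kᗮ :=
    Submodule.sub_starProjection_mem_orthogonal (K := K) y'
  funext j
  have hcol : T (Pi.single j 1) ∈ K := LinearMap.mem_range_self T _
  have h0 : inner ℝ (T (Pi.single j 1)) (y' - (K.orthogonalProjectionOnto y' : EuclideanSpace ℝ (Fin n))) = (0:ℝ) :=
    (Submodule.mem_orthogonal K _).mp hperp _ hcol
  rw [← hbs] at h0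
  have : ∑ i, (X *ᵥ Pi.single j 1) i * (y i - (X *ᵥ bs) i) = 0 := by
    simpa [PiLp.inner_apply, RCLike.inner_apply, T, y', mul_comm] using h0
  simp only [Matrix.mulVec_single, mul_one] at this
  simp only [Matrix.mulVec, Pi.zero_apply, dotProduct, Matrix.transpose_apply, Pi.sub_apply]
  simpa [Matrix.mulVec, dotProduct] using this

/-- **Per-iteration contraction for LS-Boost(ε) (equations (14) and (13) of the paper).**
At every iteration k: `L_n(β^{k+1}) − L_n* ≤ γ·(L_n(β^k) − L_n*)`, and the exact decrease
satisfies `L_n(β^{k+1}) = L_n(β^k) − (ε(2−ε)/(2n))·((r^k)ᵀX_{j_k})²`. -/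
theorem lsboost_per_iteration_decrease
    (n p : ℕ) (hn : 0 < n) (hp : 0 < p)
    (X : Matrix (Fin n) (Fin p) ℝ) (hX : X ≠ 0)
    (hcols : ∀ j : Fin p, ∑ i, (X i j) ^ 2 = 1)
    (y : Fin n → ℝ)
    (Ln : (Fin p → ℝ) → ℝ)
    (hLn : Ln = fun β => (1 / (2 * (n : ℝ))) * ∑ i, (y i - X.mulVec β i) ^ 2)
    (LnStar : ℝ) (hLnStar : LnStar = sInf (Set.range Ln))
    -- `lam` is the smallest nonzero eigenvalue of XᵀX
    (lam : ℝ)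
    (hlam_eig : ∃ v : Fin p → ℝ, v ≠ 0 ∧ (Xᵀ * X).mulVec v = lam • v)
    (hlam_ne : lam ≠ 0)
    (hlam_min : ∀ μ : ℝ, (∃ v : Fin p → ℝ, v ≠ 0 ∧ (Xᵀ * X).mulVec v = μ • v) → μ ≠ 0 → lam ≤ μ)
    -- LS-Boost(ε) iterates
    (ε : ℝ) (hε0 : 0 < ε) (hε1 : ε ≤ 1)
    (β : ℕ → Fin p → ℝ) (hβ0 : β 0 = 0)
    (r : ℕ → Fin n → ℝ) (hr : ∀ k, r k = y - X.mulVec (β k))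
    (jj : ℕ → Fin p)
    (hjmax : ∀ k, ∀ j' : Fin p, |∑ i, r k i * X i j'| ≤ |∑ i, r k i * X i (jj k)|)
    (hupd : ∀ k, β (k + 1) = β k +
      (ε * (∑ i, r k i * X i (jj k))) • (Pi.single (jj k) (1 : ℝ) : Fin p → ℝ))
    (γ : ℝ) (hγ : γ = 1 - ε * (2 - ε) * lam / (4 * (p : ℝ))) :
    ∀ k : ℕ,
      Ln (β (k + 1)) - LnStar ≤ γ * (Ln (β k) - LnStar) ∧
      Ln (β (k + 1)) = Ln (β k) - (ε * (2 - ε) / (2 * (n : ℝ))) *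
        (∑ i, r k i * X i (jj k)) ^ 2 := by
  have hn' : (0:ℝ) < n := Nat.cast_pos.mpr hn
  have hp' : (0:ℝ) < p := Nat.cast_pos.mpr hp
  have hεq : 0 < ε * (2 - ε) := by nlinarith
  -- lam > 0
  have hlam_pos : 0 < lam := by
    obtain ⟨v, hv0, hv⟩ := hlam_eig
    have h1 : v ⬝ᵥ ((Xᵀ * X) *ᵥ v) = lam * (v ⬝ᵥ v) := by
      rw [hv, dotProduct_smul, smul_eq_mul]
    have h2 : 0 ≤ v ⬝ᵥ ((Xᵀ * X) *ᵥ v) := by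
      rw [lsboost_dot_sq]
      exact Finset.sum_nonneg fun i _ => sq_nonneg _
    have h3 : 0 < v ⬝ᵥ v := by
      obtain ⟨i0, hi0⟩ := Function.ne_iff.mp hv0
      exact Finset.sum_pos' (fun i _ => mul_self_nonneg _)
        ⟨i0, Finset.mem_univ _, mul_self_pos.mpr (by simpa using hi0)⟩
    have h4 : 0 ≤ lam := by
      by_contra h
      push_neg at h
      nlinarith
    exact lt_of_le_of_ne h4 (Ne.symm hlam_ne)
  obtain ⟨bs, hbs⟩ := lsboost_exists_normal X y
  set s : Fin n → ℝ := y - X *ᵥ bs with hs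
  -- key identity
  have hkey : ∀ v : Fin p → ℝ, ∑ i, (y i - (X *ᵥ v) i)^2
      = ∑ i, (s i)^2 + ∑ i, ((X *ᵥ (v - bs)) i)^2 := by
    intro v
    have hdecomp : ∀ i, y i - (X *ᵥ v) i = s i - (X *ᵥ (v - bs)) i := by
      intro i
      rw [Matrix.mulVec_sub]
      simp only [hs, Pi.sub_apply]
      ring
    have hcross : ∑ i, s i * (X *ᵥ (v - bs)) i = 0 := by
      rw [lsboost_cross_eq, hbs, dotProduct_zero]
    calc ∑ i, (y i - (X *ᵥ v) i)^2
        = ∑ i, ((s i)^2 - 2*(s i * (X *ᵥ (v - bs)) i) + ((X *ᵥ (v - bs)) i)^2) := by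
          refine Finset.sum_congr rfl fun i _ => ?_
          rw [hdecomp i]; ring
      _ = ∑ i, (s i)^2 - 2*∑ i, s i * (X *ᵥ (v - bs)) i + ∑ i, ((X *ᵥ (v - bs)) i)^2 := by
          rw [Finset.sum_add_distrib, Finset.sum_sub_distrib, Finset.mul_sum]
      _ = _ := by rw [hcross]; ring
  -- LnStar = Ln bs
  have hLnbs : LnStar = (1/(2*(n:ℝ))) * ∑ i, (s i)^2 := by
    rw [hLnStar]
    have hleast : IsLeast (Set.range Ln) ((1/(2*(n:ℝ))) * ∑ i, (s i)^2) := by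
      constructor
      · refine ⟨bs, ?_⟩
        rw [hLn]
        simp only
        rw [hkey bs]
        simp
      · rintro x ⟨v, rfl⟩
        rw [hLn]
        simp only
        rw [hkey v]
        have h1 : 0 ≤ ∑ i, ((X *ᵥ (v - bs)) i)^2 :=
          Finset.sum_nonneg fun i _ => sq_nonneg _
        have h1n : 0 ≤ 1/(2*(n:ℝ)) := by positivity
        nlinarith
    exact hleast.csInf_eq
  have hgap : ∀ v : Fin p → ℝ, Ln v - LnStar = (1/(2*(n:ℝ))) * ∑ i, ((X *ᵥ (v - bs)) i)^2 := by
    intro v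
    rw [hLn, hLnbs]
    simp only
    rw [hkey v]
    ring
  intro k
  set cc : ℝ := ∑ i, r k i * X i (jj k) with hcc
  have hrk : ∀ i, y i - (X *ᵥ (β k)) i = r k i := by
    intro i; rw [hr k]; simp
  have hβ1 : ∀ i, (X *ᵥ β (k+1)) i = (X *ᵥ β k) i + (ε * cc) * X i (jj k) := by
    intro i
    rw [hupd k, Matrix.mulVec_add, Matrix.mulVec_smul, Matrix.mulVec_single]
    simp [mul_one, hcc]
  -- part 2 : exact decrease
  have eLk : Ln (β k) = (1/(2*(n:ℝ))) * ∑ i, (r k i)^2 := by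
    rw [hLn]
    simp only
    congr 1
    exact Finset.sum_congr rfl fun i _ => by rw [hrk i]
  have part2 : Ln (β (k+1)) = Ln (β k) - (ε * (2-ε) / (2*(n:ℝ))) * cc^2 := by
    have e1 : ∀ i, y i - (X *ᵥ β (k+1)) i = r k i - (ε*cc) * X i (jj k) := by
      intro i
      rw [hβ1 i]
      have := hrk i
      linarith
    have e2 : ∑ i, (y i - (X *ᵥ β (k+1)) i)^2 = ∑ i, (r k i)^2 - ε*(2-ε)*cc^2 := by
      have estep : ∀ i, (y i - (X *ᵥ β (k+1)) i)^2
          = (r k i)^2 - (2*ε*cc)*(r k i * X i (jj k)) + (ε*cc)^2 * (X i (jj k))^2 := by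
        intro i; rw [e1 i]; ring
      rw [Finset.sum_congr rfl (fun i _ => estep i), Finset.sum_add_distrib,
        Finset.sum_sub_distrib, ← Finset.mul_sum, ← Finset.mul_sum, ← hcc, hcols (jj k)]
      ring
    rw [hLn]
    simp only
    rw [e2, show ∑ i, (y i - (X *ᵥ β k) i)^2 = ∑ i, (r k i)^2 from
      Finset.sum_congr rfl fun i _ => by rw [hrk i]]
    ring
  refine ⟨?_, part2⟩
  -- part 1 : contraction
  set u : Fin p → ℝ := bs - β k with hu
  set S : ℝ := ∑ i, ((X *ᵥ u) i)^2 with hSdef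
  have hsq : ∑ i, ((X *ᵥ (β k - bs)) i)^2 = S := by
    have hneg : β k - bs = -u := by rw [hu, neg_sub]
    rw [hneg, Matrix.mulVec_neg]
    exact Finset.sum_congr rfl fun i _ => by simp [neg_sq]
  have hgapk : Ln (β k) - LnStar = (1/(2*(n:ℝ))) * S := by
    rw [hgap (β k), hsq]
  have hg : Xᵀ *ᵥ (r k) = (Xᵀ * X) *ᵥ u := by
    rw [hr k]
    have hyd : y - X *ᵥ β k = s + X *ᵥ u := by
      rw [hu, Matrix.mulVec_sub, hs]
      funext i
      simp only [Pi.add_apply, Pi.sub_apply]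
      ring
    rw [hyd, Matrix.mulVec_add, hbs, zero_add, Matrix.mulVec_mulVec]
  have hgj : ∀ j, (Xᵀ *ᵥ (r k)) j = ∑ i, r k i * X i j := by
    intro j
    simp [Matrix.mulVec, dotProduct, Matrix.transpose_apply, mul_comm]
  have hsum_le : ∑ j, ((Xᵀ *ᵥ r k) j)^2 ≤ (p:ℝ) * cc^2 := by
    have hterm : ∀ j, ((Xᵀ *ᵥ r k) j)^2 ≤ cc^2 := by
      intro j
      rw [hgj j]
      have habs := hjmax k j
      rw [← hcc] at habs
      calc (∑ i, r k i * X i j)^2 = |∑ i, r k i * X i j|^2 := (sq_abs _).symm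
        _ ≤ |cc|^2 := pow_le_pow_left₀ (abs_nonneg _) habs 2
        _ = cc^2 := sq_abs _
    calc ∑ j, ((Xᵀ *ᵥ r k) j)^2 ≤ ∑ _j : Fin p, cc^2 :=
          Finset.sum_le_sum fun j _ => hterm j
      _ = (p:ℝ) * cc^2 := by simp [Finset.sum_const, Finset.card_univ, nsmul_eq_mul]
  have hspec : lam * S ≤ ∑ j, ((Xᵀ *ᵥ r k) j)^2 := by
    have h := lsboost_spec_ineq X lam hlam_min u
    rw [lsboost_dot_sq, ← hSdef] at h
    calc lam * S ≤ ∑ j, (((Xᵀ * X) *ᵥ u) j)^2 := h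
      _ = ∑ j, ((Xᵀ *ᵥ r k) j)^2 := by rw [hg]
  have key : lam * S ≤ (p:ℝ) * cc^2 := le_trans hspec hsum_le
  have hS0 : 0 ≤ S := Finset.sum_nonneg fun i _ => sq_nonneg _
  have step1 : lam * S / (4*(p:ℝ)) ≤ cc^2 := by
    rw [div_le_iff₀ (by positivity)]
    nlinarith [sq_nonneg cc]
  have step2 : ε*(2-ε)*lam/(4*(p:ℝ)) * ((1/(2*(n:ℝ))) * S)
      = (ε*(2-ε)) * (1/(2*(n:ℝ))) * (lam*S/(4*(p:ℝ))) := by ring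
  have step3 : ε*(2-ε)*lam/(4*(p:ℝ)) * ((1/(2*(n:ℝ))) * S)
      ≤ (ε*(2-ε)) * (1/(2*(n:ℝ))) * cc^2 := by
    rw [step2]
    exact mul_le_mul_of_nonneg_left step1 (by positivity)
  have goal_eq : Ln (β (k+1)) - LnStar
      = (1/(2*(n:ℝ))) * S - (ε * (2-ε) / (2*(n:ℝ))) * cc^2 := by
    rw [part2]
    linarith [hgapk]
  rw [goal_eq, hγ, hgapk]
  have expand : (1 - ε * (2 - ε) * lam / (4 * (p:ℝ))) * ((1/(2*(n:ℝ))) * S)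
      = (1/(2*(n:ℝ))) * S - ε*(2-ε)*lam/(4*(p:ℝ)) * ((1/(2*(n:ℝ))) * S) := by ring
  rw [expand]
  have final : (ε*(2-ε)) * (1/(2*(n:ℝ))) * cc^2 = (ε * (2-ε) / (2*(n:ℝ))) * cc^2 := by ring
  linarith [step3, final.le]

end
end

section
/- For the LS-Boost(ε) iterates with learning rate ε ∈ (0,1], any least squares solution β_LS, and every k ≥ 1, the following identity holds: (2ε − ε²)·Σ_{i=0}^{k−1} ((r^i)ᵀX_{j_i})² = ‖Xβ_LS‖₂² − ‖X(β^k − β_LS)‖₂². -/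
open Matrix Finset

noncomputable section

/-- **Equation (31) of the paper.** For the LS-Boost(ε) iterates with learning rate
ε ∈ (0,1], any least squares solution β_LS, and every k ≥ 1:
`(2ε − ε²)·Σ_{i=0}^{k−1} ((r^i)ᵀX_{j_i})² = ‖Xβ_LS‖₂² − ‖X(β^k − β_LS)‖₂²`. -/
theorem lsboost_residual_sum_identity
    (n p : ℕ) (hn : 0 < n) (hp : 0 < p)
    (X : Matrix (Fin n) (Fin p) ℝ) (hX : X ≠ 0)
    (hcols : ∀ j : Fin p, ∑ i, (X i j) ^ 2 = 1)
    (y : Fin n → ℝ)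
    -- LS-Boost(ε) iterates
    (ε : ℝ) (hε0 : 0 < ε) (hε1 : ε ≤ 1)
    (β : ℕ → Fin p → ℝ) (hβ0 : β 0 = 0)
    (r : ℕ → Fin n → ℝ) (hr : ∀ k, r k = y - X.mulVec (β k))
    (jj : ℕ → Fin p)
    (hjmax : ∀ k, ∀ j' : Fin p, |∑ i, r k i * X i j'| ≤ |∑ i, r k i * X i (jj k)|)
    (hupd : ∀ k, β (k + 1) = β k +
      (ε * (∑ i, r k i * X i (jj k))) • (Pi.single (jj k) (1 : ℝ) : Fin p → ℝ))
    -- βLS is any least squares solution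
    (βLS : Fin p → ℝ) (hβLS : (Xᵀ * X).mulVec βLS = Xᵀ.mulVec y) :
    ∀ k : ℕ, 1 ≤ k →
      (2 * ε - ε ^ 2) * ∑ i ∈ Finset.range k, (∑ t, r i t * X t (jj i)) ^ 2 =
        (∑ i, (X.mulVec βLS i) ^ 2) - ∑ i, (X.mulVec (β k) i - X.mulVec βLS i) ^ 2 := by
  -- orthogonality of the LS residual with each column
  have horth : ∀ j : Fin p, ∑ i, (y i - X.mulVec βLS i) * X i j = 0 := by
    intro j
    have h := congrFun hβLS j
    rw [← Matrix.mulVec_mulVec] at h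
    simp only [Matrix.mulVec, dotProduct, Matrix.transpose_apply] at h
    have e : ∑ i, (y i - X.mulVec βLS i) * X i j
        = (∑ i, X i j * y i) - ∑ i, X i j * (X.mulVec βLS) i := by
      rw [← Finset.sum_sub_distrib]; apply Finset.sum_congr rfl; intro i _; ring
    rw [e, ← h]
    simp [Matrix.mulVec, dotProduct]
  -- the update on X·β
  have hmul : ∀ k i, X.mulVec (β (k + 1)) i
      = X.mulVec (β k) i + ε * (∑ t, r k t * X t (jj k)) * X i (jj k) := by
    intro k i
    rw [hupd k]
    simp only [Matrix.mulVec, dotProduct, Pi.add_apply, Pi.smul_apply,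
      Pi.single_apply, smul_eq_mul, mul_add, Finset.sum_add_distrib]
    congr 1
    rw [Finset.sum_congr rfl (fun j _ => by
      rw [mul_comm (X i j), mul_ite, mul_one, mul_zero, ite_mul, zero_mul])]
    simp
  -- per-step identity
  have hstep : ∀ k, ∑ i, (X.mulVec (β (k + 1)) i - X.mulVec βLS i) ^ 2
      = (∑ i, (X.mulVec (β k) i - X.mulVec βLS i) ^ 2)
        - (2 * ε - ε ^ 2) * (∑ t, r k t * X t (jj k)) ^ 2 := by
    intro k
    obtain ⟨c, hc⟩ : ∃ c : ℝ, c = ∑ t, r k t * X t (jj k) := ⟨_, rfl⟩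
    rw [← hc]
    have hdb : ∑ i, (X.mulVec (β k) i - X.mulVec βLS i) * X i (jj k) = -c := by
      have e : ∀ i, (X.mulVec (β k) i - X.mulVec βLS i) * X i (jj k)
          = (y i - X.mulVec βLS i) * X i (jj k) - r k i * X i (jj k) := by
        intro i; rw [hr k]; simp; ring
      rw [Finset.sum_congr rfl (fun i _ => e i), Finset.sum_sub_distrib, horth, ← hc]
      ring
    have expand : ∑ i, (X.mulVec (β (k + 1)) i - X.mulVec βLS i) ^ 2
        = (∑ i, (X.mulVec (β k) i - X.mulVec βLS i) ^ 2)
          + (2 * ε * c) * (∑ i, (X.mulVec (β k) i - X.mulVec βLS i) * X i (jj k))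
          + (ε * c) ^ 2 * ∑ i, (X i (jj k)) ^ 2 := by
      rw [Finset.mul_sum, Finset.mul_sum, ← Finset.sum_add_distrib, ← Finset.sum_add_distrib]
      apply Finset.sum_congr rfl
      intro i _
      rw [hmul k i, ← hc]
      ring
    rw [expand, hdb, hcols]
    ring
  have main : ∀ k : ℕ,
      (2 * ε - ε ^ 2) * ∑ i ∈ Finset.range k, (∑ t, r i t * X t (jj i)) ^ 2 =
        (∑ i, (X.mulVec βLS i) ^ 2) - ∑ i, (X.mulVec (β k) i - X.mulVec βLS i) ^ 2 := by
    intro k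
    induction k with
    | zero => simp [hβ0, Matrix.mulVec_zero]
    | succ k ih =>
        rw [Finset.sum_range_succ, mul_add, ih, hstep k]
        ring
  intro k _
  exact main k

end
end

section
/- For the LS-Boost(ε) iterates with learning rate ε ∈ (0,1], any least squares solution β_LS, and every k ≥ 0, there exists an index i ∈ {0, …, k} such that ‖Xᵀr^i‖_∞ ≤ min{ √(‖Xβ_LS‖₂² − ‖Xβ_LS − Xβ^{k+1}‖₂²) / √(ε(2−ε)(k+1)) , ‖Xβ_LS‖₂ · γ^{k/2} }, where γ := 1 − ε(2−ε)·λ_pmin(XᵀX)/(4p). -/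
open Matrix Finset

noncomputable section

lemma quad_sq_ge {p : ℕ} (M : Matrix (Fin p) (Fin p) ℝ) (hM : M.IsHermitian)
    (lam : ℝ)
    (hev : ∀ i, 0 ≤ hM.eigenvalues i * (hM.eigenvalues i - lam))
    (d : Fin p → ℝ) :
    lam * (d ⬝ᵥ M.mulVec d) ≤ (M.mulVec d) ⬝ᵥ (M.mulVec d) := by
  classical
  set b := hM.eigenvectorBasis with hb
  set μ := hM.eigenvalues with hμ
  have hdot : ∀ x y : EuclideanSpace ℝ (Fin p),
      (inner ℝ x y : ℝ) = (x : Fin p → ℝ) ⬝ᵥ (y : Fin p → ℝ) := by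
    intro x y
    rw [EuclideanSpace.inner_eq_star_dotProduct, dotProduct_comm]
    rfl
  have hsym : Mᵀ = M := hM
  have hMb : ∀ i, M.mulVec (b i) = μ i • (b i : Fin p → ℝ) :=
    fun i => hM.mulVec_eigenvectorBasis i
  have hbM : ∀ (i : Fin p) (w : Fin p → ℝ),
      (b i : Fin p → ℝ) ⬝ᵥ M.mulVec w = μ i * ((b i : Fin p → ℝ) ⬝ᵥ w) := by
    intro i w
    rw [Matrix.dotProduct_mulVec,
      show ((b i : Fin p → ℝ) ᵥ* M) = M *ᵥ (b i : Fin p → ℝ) by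
        conv_lhs => rw [← hsym, Matrix.vecMul_transpose],
      hMb i, smul_dotProduct]
    rfl
  have expand : ∀ x y : EuclideanSpace ℝ (Fin p),
      (x : Fin p → ℝ) ⬝ᵥ (y : Fin p → ℝ) =
        ∑ i, ((x : Fin p → ℝ) ⬝ᵥ (b i : Fin p → ℝ)) *
          ((b i : Fin p → ℝ) ⬝ᵥ (y : Fin p → ℝ)) := by
    intro x y
    rw [← hdot x y, ← OrthonormalBasis.sum_inner_mul_inner b x y]
    exact Finset.sum_congr rfl fun i _ => by rw [hdot, hdot]
  set c : Fin p → ℝ := fun i => (b i : Fin p → ℝ) ⬝ᵥ d with hc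
  have h1 : d ⬝ᵥ M.mulVec d = ∑ i, μ i * (c i)^2 := by
    rw [expand (WithLp.toLp 2 d) (WithLp.toLp 2 (M.mulVec d))]
    simp only [WithLp.ofLp_toLp]
    refine Finset.sum_congr rfl fun i _ => ?_
    rw [hbM i d, dotProduct_comm]
    ring
  have h2 : (M.mulVec d) ⬝ᵥ (M.mulVec d) = ∑ i, (μ i)^2 * (c i)^2 := by
    rw [expand (WithLp.toLp 2 (M.mulVec d)) (WithLp.toLp 2 (M.mulVec d))]
    simp only [WithLp.ofLp_toLp]
    refine Finset.sum_congr rfl fun i _ => ?_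
    rw [dotProduct_comm (M.mulVec d) ((b i : Fin p → ℝ)), hbM i d]
    ring
  rw [h1, h2, Finset.mul_sum]
  refine Finset.sum_le_sum fun i _ => ?_
  have := hev i
  nlinarith [sq_nonneg (c i)]

lemma dot_self_nonneg' {m : ℕ} (v : Fin m → ℝ) : 0 ≤ v ⬝ᵥ v :=
  Finset.sum_nonneg fun i _ => mul_self_nonneg _


/-- **Proposition A.1(i) of the paper.** For the LS-Boost(ε) iterates with learning rate
ε ∈ (0,1], any least squares solution β_LS, and every k ≥ 0, there exists an index
i ∈ {0,…,k} such that
`‖Xᵀr^i‖_∞ ≤ min{ √(‖Xβ_LS‖₂² − ‖Xβ_LS − Xβ^{k+1}‖₂²)/√(ε(2−ε)(k+1)) ,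
                  ‖Xβ_LS‖₂·γ^{k/2} }`
(formalized as: every coordinate of `Xᵀr^i` is bounded in absolute value by the bound). -/
theorem lsboost_gradient_norm_bound
    (n p : ℕ) (hn : 0 < n) (hp : 0 < p)
    (X : Matrix (Fin n) (Fin p) ℝ) (hX : X ≠ 0)
    (hcols : ∀ j : Fin p, ∑ i, (X i j) ^ 2 = 1)
    (y : Fin n → ℝ)
    -- `lam` is the smallest nonzero eigenvalue of XᵀX
    (lam : ℝ)
    (hlam_eig : ∃ v : Fin p → ℝ, v ≠ 0 ∧ (Xᵀ * X).mulVec v = lam • v)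
    (hlam_ne : lam ≠ 0)
    (hlam_min : ∀ μ : ℝ, (∃ v : Fin p → ℝ, v ≠ 0 ∧ (Xᵀ * X).mulVec v = μ • v) → μ ≠ 0 → lam ≤ μ)
    -- LS-Boost(ε) iterates
    (ε : ℝ) (hε0 : 0 < ε) (hε1 : ε ≤ 1)
    (β : ℕ → Fin p → ℝ) (hβ0 : β 0 = 0)
    (r : ℕ → Fin n → ℝ) (hr : ∀ k, r k = y - X.mulVec (β k))
    (jj : ℕ → Fin p)
    (hjmax : ∀ k, ∀ j' : Fin p, |∑ i, r k i * X i j'| ≤ |∑ i, r k i * X i (jj k)|)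
    (hupd : ∀ k, β (k + 1) = β k +
      (ε * (∑ i, r k i * X i (jj k))) • (Pi.single (jj k) (1 : ℝ) : Fin p → ℝ))
    -- βLS is any least squares solution
    (βLS : Fin p → ℝ) (hβLS : (Xᵀ * X).mulVec βLS = Xᵀ.mulVec y)
    (γ : ℝ) (hγ : γ = 1 - ε * (2 - ε) * lam / (4 * (p : ℝ))) :
    ∀ k : ℕ, ∃ i ≤ k, ∀ j' : Fin p,
      |∑ t, r i t * X t j'| ≤
        min (Real.sqrt ((∑ t, (X.mulVec βLS t) ^ 2) -
              ∑ t, (X.mulVec βLS t - X.mulVec (β (k + 1)) t) ^ 2) /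
            Real.sqrt (ε * (2 - ε) * ((k : ℝ) + 1)))
          (Real.sqrt (∑ t, (X.mulVec βLS t) ^ 2) * γ ^ ((k : ℝ) / 2)) := by
  classical
  intro k
  set M := Xᵀ * X with hMdef
  have hM : M.IsHermitian := by
    rw [hMdef, Matrix.IsHermitian, Matrix.conjTranspose_eq_transpose_of_trivial,
      Matrix.transpose_mul, Matrix.transpose_transpose]
  have hpsd : M.PosSemidef := by
    have := Matrix.posSemidef_conjTranspose_mul_self X
    rwa [Matrix.conjTranspose_eq_transpose_of_trivial] at this
  -- eigenvalue facts
  have hev : ∀ i, 0 ≤ hM.eigenvalues i * (hM.eigenvalues i - lam) := by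
    intro i
    have hnn : 0 ≤ hM.eigenvalues i := hpsd.eigenvalues_nonneg i
    by_cases h0 : hM.eigenvalues i = 0
    · simp [h0]
    · have hne : (hM.eigenvectorBasis i : Fin p → ℝ) ≠ 0 := by
        intro h
        exact hM.eigenvectorBasis.orthonormal.ne_zero i (by ext t; exact congrFun h t)
      have hlemin : lam ≤ hM.eigenvalues i :=
        hlam_min _ ⟨(hM.eigenvectorBasis i : Fin p → ℝ), hne,
          hM.mulVec_eigenvectorBasis i⟩ h0
      nlinarith
  -- lam > 0
  obtain ⟨v, hv0, hveq⟩ := hlam_eig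
  have hvv : 0 < v ⬝ᵥ v := by
    rcases lt_or_eq_of_le (dot_self_nonneg' v) with h | h
    · exact h
    · exact absurd (dotProduct_self_eq_zero.mp h.symm) hv0
  have hquad : v ⬝ᵥ M.mulVec v = (X.mulVec v) ⬝ᵥ (X.mulVec v) := by
    rw [hMdef, ← Matrix.mulVec_mulVec, Matrix.dotProduct_mulVec, Matrix.vecMul_transpose]
  have hlam_pos : 0 < lam := by
    have h1 : v ⬝ᵥ M.mulVec v = lam * (v ⬝ᵥ v) := by
      rw [hveq, dotProduct_smul]; rfl
    have h2 : 0 ≤ lam * (v ⬝ᵥ v) := by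
      rw [← h1, hquad]; exact dot_self_nonneg' _
    rcases (mul_nonneg_iff_of_pos_right hvv).mp h2 |>.lt_or_eq with h | h
    · exact h
    · exact absurd h.symm hlam_ne
  -- lam ≤ p
  have hXv_le : (X.mulVec v) ⬝ᵥ (X.mulVec v) ≤ (p : ℝ) * (v ⬝ᵥ v) := by
    have hterm : ∀ t : Fin n, (X.mulVec v t) ^ 2 ≤ ∑ j, (X t j)^2 * (v ⬝ᵥ v) := by
      intro t
      have := Finset.sum_mul_sq_le_sq_mul_sq Finset.univ (fun j => X t j) v
      calc (X.mulVec v t) ^ 2 = (∑ j, X t j * v j)^2 := rfl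
        _ ≤ (∑ j, (X t j)^2) * ∑ j, (v j)^2 := this
        _ = ∑ j, (X t j)^2 * (v ⬝ᵥ v) := by
            rw [Finset.sum_mul]
            exact Finset.sum_congr rfl fun j _ => by
              rw [dotProduct]
              congr 1
              exact Finset.sum_congr rfl fun t' _ => (sq (v t')).symm ▸ (pow_two (v t')).symm ▸ rfl
    calc (X.mulVec v) ⬝ᵥ (X.mulVec v) = ∑ t, (X.mulVec v t)^2 := by
          rw [dotProduct]; exact Finset.sum_congr rfl fun t _ => (pow_two _).symm
      _ ≤ ∑ t, ∑ j, (X t j)^2 * (v ⬝ᵥ v) := Finset.sum_le_sum fun t _ => hterm t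
      _ = ∑ j, (∑ t, (X t j)^2) * (v ⬝ᵥ v) := by
          rw [Finset.sum_comm]
          exact Finset.sum_congr rfl fun j _ => (Finset.sum_mul ..).symm
      _ = (p : ℝ) * (v ⬝ᵥ v) := by
          simp only [hcols, one_mul]
          rw [Finset.sum_const, Finset.card_univ, Fintype.card_fin, nsmul_eq_mul]
  have hlam_le_p : lam ≤ (p : ℝ) := by
    have h1 : lam * (v ⬝ᵥ v) ≤ (p : ℝ) * (v ⬝ᵥ v) := by
      rw [show lam * (v ⬝ᵥ v) = v ⬝ᵥ M.mulVec v by rw [hveq, dotProduct_smul]; rfl, hquad]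
      exact hXv_le
    exact le_of_mul_le_mul_right h1 hvv
  have hεγ : 0 < ε * (2 - ε) := by nlinarith
  have hεle1 : ε * (2 - ε) ≤ 1 := by nlinarith [sq_nonneg (1 - ε)]
  have hp' : (0:ℝ) < p := by exact_mod_cast hp
  have hγpos : 0 < γ := by
    rw [hγ, sub_pos, div_lt_one (by linarith)]
    nlinarith
  -- iterate quantities
  set g : ℕ → Fin p → ℝ := fun k j => ∑ t, r k t * X t j with hgdef
  set u : ℕ → ℝ := fun k => g k (jj k) with hudef
  set D : ℕ → Fin n → ℝ := fun k => X.mulVec βLS - X.mulVec (β k) with hDdef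
  set B : ℕ → ℝ := fun k => ∑ t, (D k t)^2 with hBdef
  have hg : ∀ k, g k = M.mulVec (βLS - β k) := by
    intro k
    have h1 : g k = Xᵀ.mulVec (r k) := by
      funext j
      simp only [hgdef, Matrix.mulVec, dotProduct, Matrix.transpose_apply]
      exact Finset.sum_congr rfl fun t _ => mul_comm _ _
    rw [h1, hr k, Matrix.mulVec_sub, Matrix.mulVec_sub, ← hβLS,
      Matrix.mulVec_mulVec, ← hMdef]
  have hXD : ∀ k, X.mulVec (βLS - β k) = D k := by
    intro k; rw [Matrix.mulVec_sub]
  have hgD : ∀ k j, g k j = ∑ t, D k t * X t j := by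
    intro k j
    rw [hg k, hMdef, ← Matrix.mulVec_mulVec, hXD k]
    simp only [Matrix.mulVec, dotProduct, Matrix.transpose_apply]
    exact Finset.sum_congr rfl fun t _ => mul_comm _ _
  have hB0 : B 0 = ∑ t, (X.mulVec βLS t)^2 := by
    simp [hBdef, hDdef, hβ0]
  have hBnn : ∀ k, 0 ≤ B k := fun k => Finset.sum_nonneg fun t _ => sq_nonneg _
  have hDrec : ∀ k t, D (k+1) t = D k t - (ε * u k) * X t (jj k) := by
    intro k t
    simp only [hDdef, Pi.sub_apply, hupd k, Matrix.mulVec_add, Matrix.mulVec_smul,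
      Matrix.mulVec_single, Pi.add_apply, Pi.smul_apply, smul_eq_mul, mul_one,
        op_smul_eq_mul, Matrix.col_apply]
    ring
  have hBrec : ∀ k, B (k+1) = B k - ε*(2-ε)*(u k)^2 := by
    intro k
    have hDc : ∑ t, D k t * X t (jj k) = u k := (hgD k (jj k)).symm
    have hcol : ∑ t, (X t (jj k))^2 = 1 := hcols (jj k)
    calc B (k+1) = ∑ t, ((D k t)^2 - 2*(ε*u k)*(D k t * X t (jj k))
          + (ε*u k)^2*(X t (jj k))^2) := by
          refine Finset.sum_congr rfl fun t _ => ?_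
          rw [hDrec k t]; ring
      _ = (∑ t, (D k t)^2) - 2*(ε*u k)*(∑ t, D k t * X t (jj k))
          + (ε*u k)^2 * ∑ t, (X t (jj k))^2 := by
          rw [Finset.sum_add_distrib, Finset.sum_sub_distrib, ← Finset.mul_sum,
            ← Finset.mul_sum]
      _ = B k - ε*(2-ε)*(u k)^2 := by rw [hDc, hcol]; ring
  have hCS : ∀ k', (u k')^2 ≤ B k' := by
    intro k'
    have h1 : u k' = ∑ t, D k' t * X t (jj k') := hgD k' (jj k')
    rw [h1]
    calc (∑ t, D k' t * X t (jj k'))^2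
        ≤ (∑ t, (D k' t)^2) * ∑ t, (X t (jj k'))^2 :=
          Finset.sum_mul_sq_le_sq_mul_sq _ _ _
      _ = B k' := by rw [hcols (jj k'), mul_one]
  have hgsq : ∀ k', lam * B k' ≤ (p:ℝ) * (u k')^2 := by
    intro k'
    have hq := quad_sq_ge M hM lam hev (βLS - β k')
    have e1 : (βLS - β k') ⬝ᵥ M.mulVec (βLS - β k') = B k' := by
      rw [hMdef, ← Matrix.mulVec_mulVec, Matrix.dotProduct_mulVec,
        Matrix.vecMul_transpose, hXD k']
      simp only [hBdef, dotProduct]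
      exact Finset.sum_congr rfl fun t _ => (pow_two _).symm
    have e2 : M.mulVec (βLS - β k') = g k' := (hg k').symm
    have e3 : (g k') ⬝ᵥ (g k') = ∑ j, (g k' j)^2 := by
      simp only [dotProduct]
      exact Finset.sum_congr rfl fun j _ => (pow_two _).symm
    have h1 : lam * B k' ≤ ∑ j, (g k' j)^2 := by
      rw [← e1, ← e3, ← e2]; exact hq
    have h2 : ∑ j, (g k' j)^2 ≤ ∑ j : Fin p, (u k')^2 := by
      refine Finset.sum_le_sum fun j _ => ?_
      calc (g k' j)^2 = |g k' j|^2 := (sq_abs _).symm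
        _ ≤ |u k'|^2 := pow_le_pow_left₀ (abs_nonneg _) (hjmax k' j) 2
        _ = (u k')^2 := sq_abs _
    have h3 : ∑ j : Fin p, (u k')^2 = (p:ℝ) * (u k')^2 := by
      rw [Finset.sum_const, Finset.card_univ, Fintype.card_fin, nsmul_eq_mul]
    linarith
  have hBγ : ∀ k', B (k'+1) ≤ γ * B k' := by
    intro k'
    have h1 := hgsq k'
    have hB := hBnn k'
    have key : ε*(2-ε)*lam/(4*(p:ℝ)) * B k' ≤ ε*(2-ε)*(u k')^2 := by
      rw [div_mul_eq_mul_div, div_le_iff₀ (by linarith)]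
      have h4 : 0 ≤ ε * (2 - ε) * (u k')^2 * (p:ℝ) :=
        mul_nonneg (mul_nonneg hεγ.le (sq_nonneg _)) hp'.le
      nlinarith [mul_le_mul_of_nonneg_left h1 hεγ.le, h4]
    rw [hBrec k', hγ, sub_mul, one_mul]
    linarith
  have hBgeo : ∀ k', B k' ≤ γ^k' * B 0 := by
    intro k'
    induction k' with
    | zero => simp
    | succ m ih =>
      calc B (m+1) ≤ γ * B m := hBγ m
        _ ≤ γ * (γ^m * B 0) := by
            exact mul_le_mul_of_nonneg_left ih hγpos.le
        _ = γ^(m+1) * B 0 := by ring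
  have hsum : ∀ k', ε*(2-ε) * ∑ i ∈ Finset.range (k'+1), (u i)^2 = B 0 - B (k'+1) := by
    intro k'
    induction k' with
    | zero =>
      simp only [Finset.sum_range_one, Nat.zero_add, hBrec 0]
      ring
    | succ m ih =>
      rw [Finset.sum_range_succ, mul_add, ih, hBrec (m+1)]
      ring
  -- choose the argmin
  obtain ⟨i₀, hi₀mem, hi₀min⟩ := Finset.exists_min_image (Finset.range (k+1))
    (fun i => (u i)^2) ⟨0, Finset.mem_range.mpr (Nat.succ_pos k)⟩
  have hi₀le : i₀ ≤ k := Nat.lt_succ_iff.mp (Finset.mem_range.mp hi₀mem)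
  refine ⟨i₀, hi₀le, fun j' => ?_⟩
  have habs : |∑ t, r i₀ t * X t j'| ≤ |u i₀| := hjmax i₀ j'
  have hBk1 : ∑ t, (X.mulVec βLS t - X.mulVec (β (k+1)) t)^2 = B (k+1) := rfl
  rw [← hB0, hBk1]
  refine le_trans habs (le_min ?_ ?_)
  · -- first bound
    set s : ℝ := ε * (2 - ε) * ((k : ℝ) + 1) with hs
    have hspos : 0 < s := by
      have : (0:ℝ) < (k:ℝ) + 1 := by positivity
      exact mul_pos hεγ this
    have hcard : ((k:ℝ)+1) * (u i₀)^2 ≤ ∑ i ∈ Finset.range (k+1), (u i)^2 := by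
      have h := Finset.card_nsmul_le_sum (Finset.range (k+1)) (fun i => (u i)^2)
        ((u i₀)^2) (fun i hi => hi₀min i hi)
      rw [Finset.card_range] at h
      calc ((k:ℝ)+1) * (u i₀)^2 = ((k+1 : ℕ) : ℝ) * (u i₀)^2 := by push_cast; ring
        _ = (k+1) • (u i₀)^2 := (nsmul_eq_mul _ _).symm
        _ ≤ _ := h
    have hnum : 0 ≤ B 0 - B (k+1) := by
      rw [← hsum k]
      exact mul_nonneg hεγ.le (Finset.sum_nonneg fun i _ => sq_nonneg _)
    have hu2 : (u i₀)^2 ≤ (B 0 - B (k+1)) / s := by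
      rw [le_div_iff₀ hspos, hs]
      nlinarith [mul_le_mul_of_nonneg_left hcard hεγ.le, hsum k]
    calc |u i₀| = Real.sqrt ((u i₀)^2) := (Real.sqrt_sq_eq_abs _).symm
      _ ≤ Real.sqrt ((B 0 - B (k+1)) / s) := Real.sqrt_le_sqrt hu2
      _ = Real.sqrt (B 0 - B (k+1)) / Real.sqrt s := Real.sqrt_div hnum s
  · -- second bound
    have h1 : (u i₀)^2 ≤ (u k)^2 := hi₀min k (Finset.mem_range.mpr (Nat.lt_succ_self k))
    have h2 : (u k)^2 ≤ γ^k * B 0 := le_trans (hCS k) (hBgeo k)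
    have hrpow : γ ^ ((k:ℝ)/2) = Real.sqrt (γ^k) := by
      rw [Real.sqrt_eq_rpow, ← Real.rpow_natCast γ k, ← Real.rpow_mul hγpos.le]
      congr 1; ring
    calc |u i₀| = Real.sqrt ((u i₀)^2) := (Real.sqrt_sq_eq_abs _).symm
      _ ≤ Real.sqrt (γ^k * B 0) := Real.sqrt_le_sqrt (le_trans h1 h2)
      _ = Real.sqrt (γ^k) * Real.sqrt (B 0) := Real.sqrt_mul (by positivity) _
      _ = Real.sqrt (B 0) * γ ^ ((k:ℝ)/2) := by rw [hrpow]; ring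


end
end

section
/- For the LS-Boost(ε) iterates with learning rate ε ∈ (0,1], any least squares solution β_LS, and every k ≥ 1: letting J_ℓ denote the number of iterations i < k with j_i = ℓ (for ℓ = 1, …, p) and J_max := max{J_1, …, J_p}, the ℓ2-shrinkage of the coefficients satisfies ‖β^k‖₂ ≤ √(J_max) · √(ε/(2−ε)) · √(‖Xβ_LS‖₂² − ‖Xβ_LS − Xβ^k‖₂²). -/
open Matrix Finset

noncomputable section

/-- **Proposition A.1(ii) of the paper (ℓ2-shrinkage).** For the LS-Boost(ε) iterates with
learning rate ε ∈ (0,1], any least squares solution β_LS, and every k ≥ 1, with J_ℓ the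
number of iterations i < k for which j_i = ℓ and J_max their maximum:
`‖β^k‖₂ ≤ √(J_max)·√(ε/(2−ε))·√(‖Xβ_LS‖₂² − ‖Xβ_LS − Xβ^k‖₂²)`. -/
theorem lsboost_l2_shrinkage
    (n p : ℕ) (hn : 0 < n) (hp : 0 < p)
    (X : Matrix (Fin n) (Fin p) ℝ) (hX : X ≠ 0)
    (hcols : ∀ j : Fin p, ∑ i, (X i j) ^ 2 = 1)
    (y : Fin n → ℝ)
    -- LS-Boost(ε) iterates
    (ε : ℝ) (hε0 : 0 < ε) (hε1 : ε ≤ 1)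
    (β : ℕ → Fin p → ℝ) (hβ0 : β 0 = 0)
    (r : ℕ → Fin n → ℝ) (hr : ∀ k, r k = y - X.mulVec (β k))
    (jj : ℕ → Fin p)
    (hjmax : ∀ k, ∀ j' : Fin p, |∑ i, r k i * X i j'| ≤ |∑ i, r k i * X i (jj k)|)
    (hupd : ∀ k, β (k + 1) = β k +
      (ε * (∑ i, r k i * X i (jj k))) • (Pi.single (jj k) (1 : ℝ) : Fin p → ℝ))
    -- βLS is any least squares solution
    (βLS : Fin p → ℝ) (hβLS : (Xᵀ * X).mulVec βLS = Xᵀ.mulVec y) :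
    ∀ k : ℕ, 1 ≤ k →
      ∀ J : Fin p → ℕ, (∀ ℓ : Fin p, J ℓ = ((Finset.range k).filter fun i => jj i = ℓ).card) →
      ∀ Jmax : ℕ, Jmax = Finset.univ.sup J →
      Real.sqrt (∑ t, (β k t) ^ 2) ≤
        Real.sqrt (Jmax : ℝ) * Real.sqrt (ε / (2 - ε)) *
          Real.sqrt ((∑ t, (X.mulVec βLS t) ^ 2) -
            ∑ t, (X.mulVec βLS t - X.mulVec (β k) t) ^ 2) := by
  classical
  -- notation
  set u : ℕ → ℝ := fun i => ∑ t, r i t * X t (jj i) with hu_def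
  set D : ℕ → ℝ := fun i => ∑ t, (X.mulVec βLS t - X.mulVec (β i) t) ^ 2 with hD_def
  have h2ε : (0:ℝ) < 2 - ε := by linarith
  -- mulVec update
  have hXmul : ∀ i t, X.mulVec (β (i+1)) t = X.mulVec (β i) t + ε * u i * X t (jj i) := by
    intro i t
    rw [hupd i, Matrix.mulVec_add, Matrix.mulVec_smul, Matrix.mulVec_single]
    simp only [Pi.add_apply, Pi.smul_apply, smul_eq_mul, mul_one, hu_def, MulOpposite.op_one, one_smul,
      Matrix.col_apply]
  -- normal equations
  have hnormal : ∀ j : Fin p, ∑ t, X.mulVec βLS t * X t j = ∑ t, y t * X t j := by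
    intro j
    have := congrFun hβLS j
    simp only [Matrix.mulVec, dotProduct, Matrix.mul_apply, Matrix.transpose_apply] at this
    have e1 : ∑ t, X.mulVec βLS t * X t j = ∑ s, (∑ t, X t j * X t s) * βLS s := by
      simp only [Matrix.mulVec, dotProduct, Finset.sum_mul, Finset.mul_sum]
      rw [Finset.sum_comm]
      exact Finset.sum_congr rfl fun s _ => Finset.sum_congr rfl fun t _ => by ring
    rw [e1, this]
    exact Finset.sum_congr rfl fun t _ => by ring
  -- key inner product
  have hinner : ∀ i, ∑ t, (X.mulVec βLS t - X.mulVec (β i) t) * X t (jj i) = u i := by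
    intro i
    have : ∀ t, (X.mulVec βLS t - X.mulVec (β i) t) * X t (jj i)
        = X.mulVec βLS t * X t (jj i) - X.mulVec (β i) t * X t (jj i) := fun t => by ring
    rw [Finset.sum_congr rfl (fun t _ => this t), Finset.sum_sub_distrib, hnormal,
      ← Finset.sum_sub_distrib]
    rw [hu_def]
    apply Finset.sum_congr rfl
    intro t _
    rw [hr i]
    simp only [Pi.sub_apply]
    ring
  -- one-step decrease
  have hstep : ∀ i, D (i+1) = D i - ε * (2 - ε) * (u i) ^ 2 := by
    intro i
    have hexp : ∀ t, (X.mulVec βLS t - X.mulVec (β (i+1)) t) ^ 2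
        = (X.mulVec βLS t - X.mulVec (β i) t) ^ 2
          - (2 * ε * u i) * ((X.mulVec βLS t - X.mulVec (β i) t) * X t (jj i))
          + (ε * u i)^2 * (X t (jj i))^2 := by
      intro t
      rw [hXmul i t]
      ring
    simp only [hD_def]
    rw [Finset.sum_congr rfl (fun t _ => hexp t), Finset.sum_add_distrib,
      Finset.sum_sub_distrib, ← Finset.mul_sum, ← Finset.mul_sum, hinner i, hcols (jj i)]
    ring
  -- telescoping
  have htel : ∀ k, (∑ t, (X.mulVec βLS t) ^ 2) - D k
      = ε * (2 - ε) * ∑ i ∈ Finset.range k, (u i) ^ 2 := by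
    intro k
    induction k with
    | zero =>
      simp only [Finset.range_zero, Finset.sum_empty, mul_zero, hD_def, hβ0]
      simp [Matrix.mulVec_zero]
    | succ m ih =>
      rw [Finset.sum_range_succ, hstep m]
      linarith [ih]
  -- coefficient formula
  have hβform : ∀ k (ℓ : Fin p), β k ℓ
      = ε * ∑ i ∈ (Finset.range k).filter (fun i => jj i = ℓ), u i := by
    intro k
    induction k with
    | zero => intro ℓ; simp [hβ0]
    | succ m ih =>
      intro ℓ
      rw [hupd m]
      simp only [Pi.add_apply, Pi.smul_apply, smul_eq_mul]
      rw [ih ℓ, Finset.range_add_one, Finset.filter_insert]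
      by_cases h : jj m = ℓ
      · rw [if_pos h, Finset.sum_insert (by simp)]
        have hs1 : (Pi.single (jj m) (1:ℝ) : Fin p → ℝ) ℓ = 1 := by rw [h]; simp
        rw [hs1, hu_def]
        simp only []
        ring
      · rw [if_neg h]
        have hs0 : (Pi.single (jj m) (1:ℝ) : Fin p → ℝ) ℓ = 0 := by
          simp [Pi.single_apply, Ne.symm h]
        rw [hs0]
        ring
  -- main inequality on squares
  intro k hk J hJ Jmax hJmax
  set T : ℝ := ∑ i ∈ Finset.range k, (u i) ^ 2 with hT_def
  have hT0 : 0 ≤ T := Finset.sum_nonneg fun i _ => sq_nonneg _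
  have hsq : ∑ t, (β k t) ^ 2 ≤ (Jmax : ℝ) * ε ^ 2 * T := by
    have step1 : ∀ ℓ : Fin p, (β k ℓ) ^ 2
        ≤ ε ^ 2 * ((Jmax : ℝ) * ∑ i ∈ (Finset.range k).filter (fun i => jj i = ℓ), (u i)^2) := by
      intro ℓ
      rw [hβform k ℓ, mul_pow]
      apply mul_le_mul_of_nonneg_left _ (sq_nonneg ε)
      have hcs := sq_sum_le_card_mul_sum_sq
        (s := (Finset.range k).filter (fun i => jj i = ℓ)) (f := u)
      refine hcs.trans ?_
      apply mul_le_mul_of_nonneg_right _ (Finset.sum_nonneg fun i _ => sq_nonneg _)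
      have : ((Finset.range k).filter (fun i => jj i = ℓ)).card = J ℓ := (hJ ℓ).symm
      rw [this]
      exact_mod_cast hJmax ▸ Finset.le_sup (Finset.mem_univ ℓ)
    calc ∑ t, (β k t) ^ 2
        ≤ ∑ ℓ : Fin p, ε ^ 2 * ((Jmax : ℝ)
            * ∑ i ∈ (Finset.range k).filter (fun i => jj i = ℓ), (u i)^2) :=
          Finset.sum_le_sum fun ℓ _ => step1 ℓ
      _ = (Jmax : ℝ) * ε ^ 2 * ∑ ℓ : Fin p,
            ∑ i ∈ (Finset.range k).filter (fun i => jj i = ℓ), (u i)^2 := by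
          rw [Finset.mul_sum]
          apply Finset.sum_congr rfl; intro ℓ _; ring
      _ = (Jmax : ℝ) * ε ^ 2 * T := by
          congr 1
          rw [hT_def]
          exact Finset.sum_fiberwise_of_maps_to (fun i _ => Finset.mem_univ (jj i)) _
  -- finish with square roots
  have hSval : (∑ t, (X.mulVec βLS t) ^ 2)
      - ∑ t, (X.mulVec βLS t - X.mulVec (β k) t) ^ 2 = ε * (2 - ε) * T := htel k
  have hfinal : ∑ t, (β k t) ^ 2
      ≤ (Jmax : ℝ) * (ε / (2 - ε)) * (ε * (2 - ε) * T) := by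
    have : (Jmax : ℝ) * (ε / (2 - ε)) * (ε * (2 - ε) * T) = (Jmax : ℝ) * ε ^ 2 * T := by
      field_simp
    rw [this]
    exact hsq
  rw [hSval]
  calc Real.sqrt (∑ t, (β k t) ^ 2)
      ≤ Real.sqrt ((Jmax : ℝ) * (ε / (2 - ε)) * (ε * (2 - ε) * T)) :=
        Real.sqrt_le_sqrt hfinal
    _ = Real.sqrt (Jmax : ℝ) * Real.sqrt (ε / (2 - ε)) * Real.sqrt (ε * (2 - ε) * T) := by
        rw [Real.sqrt_mul (by positivity), Real.sqrt_mul (by positivity)]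

end
end

section
/- Let Q be a nonzero symmetric positive semidefinite n×n real matrix, q ∈ ℝⁿ, q⁰ ∈ ℝ, and h(x) := ½xᵀQx + qᵀx + q⁰, with h* := inf_x h(x). If h* > −∞, then for any given x ∈ ℝⁿ there exists a minimizer x* of h for which ‖x − x*‖₂ ≤ √(2(h(x) − h*)/λ_pmin(Q)), where λ_pmin(Q) denotes the smallest nonzero eigenvalue of Q. -/
open Matrix Finset

noncomputable section

/-- **Proposition A.1 (first part): distance bound for convex quadratics.** If the convex
quadratic `h(x) = ½xᵀQx + qᵀx + q⁰` (Q ≠ 0 symmetric PSD) is bounded below with infimum h*,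
then for any x there is a minimizer x* of h with
`‖x − x*‖₂ ≤ √(2(h(x) − h*)/λ_pmin(Q))`. -/
theorem convex_quadratic_distance_bound
    (n : ℕ)
    (Q : Matrix (Fin n) (Fin n) ℝ) (hQ0 : Q ≠ 0) (hQsym : Qᵀ = Q)
    (hQpsd : ∀ x : Fin n → ℝ, 0 ≤ ∑ i, x i * Q.mulVec x i)
    (q : Fin n → ℝ) (q0 : ℝ)
    (h : (Fin n → ℝ) → ℝ)
    (hh : h = fun x => (1 / 2) * (∑ i, x i * Q.mulVec x i) + (∑ i, q i * x i) + q0)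
    -- `lam` is the smallest nonzero eigenvalue of Q
    (lam : ℝ)
    (hlam_eig : ∃ v : Fin n → ℝ, v ≠ 0 ∧ Q.mulVec v = lam • v)
    (hlam_ne : lam ≠ 0)
    (hlam_min : ∀ μ : ℝ, (∃ v : Fin n → ℝ, v ≠ 0 ∧ Q.mulVec v = μ • v) → μ ≠ 0 → lam ≤ μ)
    -- h* > −∞
    (hbdd : BddBelow (Set.range h))
    (hstar : ℝ) (hhstar : hstar = sInf (Set.range h)) :
    ∀ x : Fin n → ℝ, ∃ xstar : Fin n → ℝ,
      (∀ z : Fin n → ℝ, h xstar ≤ h z) ∧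
      Real.sqrt (∑ i, (x i - xstar i) ^ 2) ≤ Real.sqrt (2 * (h x - hstar) / lam) := by
  classical
  intro x
  -- sums of squares
  have sumsq_pos : ∀ v : Fin n → ℝ, v ≠ 0 → 0 < ∑ i, v i ^ 2 := by
    intro v hv
    obtain ⟨j, hj⟩ := Function.ne_iff.mp hv
    have hj' : v j ≠ 0 := by simpa using hj
    have hj2 : 0 < v j ^ 2 := by
      rcases hj'.lt_or_gt with hl | hl
      · nlinarith
      · nlinarith
    exact Finset.sum_pos' (fun i _ => sq_nonneg _) ⟨j, Finset.mem_univ j, hj2⟩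
  -- lam is positive
  have lam_pos : 0 < lam := by
    obtain ⟨v, hv0, hv⟩ := hlam_eig
    have h1 := hQpsd v
    have h2 : ∑ i, v i * Q.mulVec v i = lam * ∑ i, v i ^ 2 := by
      rw [hv, Finset.mul_sum]
      refine Finset.sum_congr rfl fun i _ => ?_
      simp [Pi.smul_apply, smul_eq_mul]; ring
    rw [h2] at h1
    have hS := sumsq_pos v hv0
    rcases (lt_or_gt_of_ne hlam_ne) with hl | hl
    · exfalso; nlinarith
    · exact hl
  -- Hermitian structure and spectral decomposition
  have hH : Q.IsHermitian := by
    rw [Matrix.IsHermitian, Matrix.conjTranspose_eq_transpose_of_trivial, hQsym]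
  set U : Matrix (Fin n) (Fin n) ℝ := (hH.eigenvectorUnitary : Matrix (Fin n) (Fin n) ℝ) with hUdef
  set d : Fin n → ℝ := hH.eigenvalues with hddef
  have hstarU : star U = Uᵀ := by
    rw [Matrix.star_eq_conjTranspose, Matrix.conjTranspose_eq_transpose_of_trivial]
  have hUtU : Uᵀ * U = 1 := by
    rw [← hstarU]; exact Unitary.coe_star_mul_self hH.eigenvectorUnitary
  have hUUt : U * Uᵀ = 1 := by
    rw [← hstarU]; exact Unitary.coe_mul_star_self hH.eigenvectorUnitary
  have hspec : Q = U * Matrix.diagonal d * Uᵀ := by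
    have := hH.spectral_theorem
    rw [RCLike.ofReal_real_eq_id] at this
    rw [← hstarU]
    simpa using this
  -- transfer between x-coordinates and eigen-coordinates
  have hUc : ∀ y : Fin n → ℝ, U *ᵥ (Uᵀ *ᵥ y) = y := by
    intro y; rw [Matrix.mulVec_mulVec, hUUt, Matrix.one_mulVec]
  have hcU : ∀ a : Fin n → ℝ, Uᵀ *ᵥ (U *ᵥ a) = a := by
    intro a; rw [Matrix.mulVec_mulVec, hUtU, Matrix.one_mulVec]
  have dot2 : ∀ a b : Fin n → ℝ, a ⬝ᵥ (U *ᵥ b) = (Uᵀ *ᵥ a) ⬝ᵥ b := by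
    intro a b; rw [Matrix.dotProduct_mulVec, ← Matrix.mulVec_transpose]
  have dot1 : ∀ a b : Fin n → ℝ, (U *ᵥ a) ⬝ᵥ (U *ᵥ b) = a ⬝ᵥ b := by
    intro a b; rw [dot2, hcU]
  -- eigenvalues are nonnegative, and nonzero ones dominate lam
  have eigcol : ∀ i : Fin n, Q *ᵥ (U *ᵥ (Pi.single i 1 : Fin n → ℝ))
      = d i • (U *ᵥ (Pi.single i 1 : Fin n → ℝ)) := by
    intro i
    rw [hspec, ← Matrix.mulVec_mulVec, ← Matrix.mulVec_mulVec, hcU,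
      Matrix.diagonal_mulVec_single]
    ext j
    simp [Matrix.mulVec_smul, Matrix.mulVec_single, mul_comm]
  have colne : ∀ i : Fin n, U *ᵥ (Pi.single i 1 : Fin n → ℝ) ≠ 0 := by
    intro i hcon
    have h1 := hcU (Pi.single i 1 : Fin n → ℝ)
    rw [hcon, Matrix.mulVec_zero] at h1
    have := congrFun h1 i
    simp at this
  have d_nonneg : ∀ i, 0 ≤ d i := by
    intro i
    set u : Fin n → ℝ := U *ᵥ (Pi.single i 1 : Fin n → ℝ) with hudef
    have h1 := hQpsd u
    have h2 : ∑ j, u j * Q.mulVec u j = d i * ∑ j, u j ^ 2 := by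
      rw [hudef, eigcol i, Finset.mul_sum]
      refine Finset.sum_congr rfl fun j _ => ?_
      simp [Pi.smul_apply, smul_eq_mul]; ring
    rw [h2] at h1
    have hS := sumsq_pos u (colne i)
    by_contra hcon
    push_neg at hcon
    nlinarith
  have lam_le : ∀ i, d i ≠ 0 → lam ≤ d i := by
    intro i hi
    exact hlam_min (d i) ⟨U *ᵥ (Pi.single i 1 : Fin n → ℝ), colne i, eigcol i⟩ hi
  -- h in eigen-coordinates
  set b : Fin n → ℝ := Uᵀ *ᵥ q with hbdef
  set H : (Fin n → ℝ) → ℝ :=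
    fun e => (1 / 2) * (∑ i, d i * e i ^ 2) + (∑ i, b i * e i) + q0 with hHdef
  have key : ∀ y : Fin n → ℝ, h y = H (Uᵀ *ᵥ y) := by
    intro y
    have hq1 : ∑ i, y i * Q.mulVec y i = ∑ i, d i * (Uᵀ *ᵥ y) i ^ 2 := by
      have e1 : ∑ i, y i * Q.mulVec y i = y ⬝ᵥ (Q *ᵥ y) := rfl
      rw [e1, hspec, ← Matrix.mulVec_mulVec, ← Matrix.mulVec_mulVec, dot2]
      simp only [dotProduct, Matrix.mulVec_diagonal]
      refine Finset.sum_congr rfl fun i _ => by ring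
    have hq2 : ∑ i, q i * y i = ∑ i, b i * (Uᵀ *ᵥ y) i := by
      have e1 : ∑ i, q i * y i = q ⬝ᵥ y := rfl
      rw [e1, ← hUc y, dot2, hcU]
      rfl
    rw [hh, hHdef]
    simp only []
    rw [hq1, hq2]
  -- boundedness: coordinates with zero eigenvalue have zero linear part
  obtain ⟨m, hm⟩ := hbdd
  have hm' : ∀ y : Fin n → ℝ, m ≤ h y := fun y => hm ⟨y, rfl⟩
  have b_zero : ∀ i, d i = 0 → b i = 0 := by
    intro i hdi
    by_contra hbi
    set t : ℝ := (m - q0 - 1) / b i with htdef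
    have hval : h (U *ᵥ (Pi.single i t : Fin n → ℝ)) = m - 1 := by
      rw [key, hcU, hHdef]
      simp only []
      have e1 : ∑ j, d j * (Pi.single i t : Fin n → ℝ) j ^ 2 = 0 := by
        rw [Finset.sum_eq_single i]
        · simp [hdi]
        · intro j _ hj; simp [Pi.single_eq_of_ne hj]
        · intro hcon; exact absurd (Finset.mem_univ i) hcon
      have e2 : ∑ j, b j * (Pi.single i t : Fin n → ℝ) j = m - q0 - 1 := by
        rw [Finset.sum_eq_single i]
        · simp [htdef]; field_simp
        · intro j _ hj; simp [Pi.single_eq_of_ne hj]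
        · intro hcon; exact absurd (Finset.mem_univ i) hcon
      rw [e1, e2]; ring
    have := hm' (U *ᵥ Pi.single i t)
    rw [hval] at this
    linarith
  -- the minimizer in eigen-coordinates
  set c : Fin n → ℝ := Uᵀ *ᵥ x with hcdef
  set cstar : Fin n → ℝ := fun i => if d i = 0 then c i else -(b i) / d i with hcsdef
  set xstar : Fin n → ℝ := U *ᵥ cstar with hxsdef
  have hxsc : Uᵀ *ᵥ xstar = cstar := hcU cstar
  -- per-coordinate identity
  have key_id : ∀ (i : Fin n) (e : ℝ),
      (1 / 2) * (d i * e ^ 2) + b i * e - ((1 / 2) * (d i * cstar i ^ 2) + b i * cstar i)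
        = (1 / 2) * d i * (e - cstar i) ^ 2 := by
    intro i e
    by_cases hdi : d i = 0
    · simp [hdi, b_zero i hdi]
    · have : cstar i = -(b i) / d i := by simp [hcsdef, hdi]
      rw [this]
      field_simp
      ring
  have Hexpand : ∀ e : Fin n → ℝ,
      H e = (∑ i, ((1 / 2) * (d i * e i ^ 2) + b i * e i)) + q0 := by
    intro e
    rw [hHdef]
    simp only []
    rw [Finset.sum_add_distrib, Finset.mul_sum]
  have H_diff : ∀ e : Fin n → ℝ,
      H e - H cstar = (1 / 2) * ∑ i, d i * (e i - cstar i) ^ 2 := by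
    intro e
    rw [Hexpand e, Hexpand cstar, Finset.mul_sum]
    rw [show ((∑ i, ((1 / 2) * (d i * e i ^ 2) + b i * e i)) + q0)
        - ((∑ i, ((1 / 2) * (d i * cstar i ^ 2) + b i * cstar i)) + q0)
        = ∑ i, (((1 / 2) * (d i * e i ^ 2) + b i * e i)
            - ((1 / 2) * (d i * cstar i ^ 2) + b i * cstar i)) from by
      rw [Finset.sum_sub_distrib]; ring]
    refine Finset.sum_congr rfl fun i _ => ?_
    rw [key_id i (e i)]; ring
  have Hmin : ∀ e : Fin n → ℝ, H cstar ≤ H e := by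
    intro e
    have h1 : 0 ≤ H e - H cstar := by
      rw [H_diff e]
      have : 0 ≤ ∑ i, d i * (e i - cstar i) ^ 2 :=
        Finset.sum_nonneg fun i _ => mul_nonneg (d_nonneg i) (sq_nonneg _)
      linarith
    linarith
  have hmin : ∀ z : Fin n → ℝ, h xstar ≤ h z := by
    intro z
    rw [key xstar, key z, hxsc]
    exact Hmin _
  refine ⟨xstar, hmin, ?_⟩
  -- identify hstar
  have hstar_eq : hstar = h xstar := by
    rw [hhstar]
    refine le_antisymm (csInf_le ⟨m, hm⟩ ⟨xstar, rfl⟩) ?_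
    refine le_csInf ⟨h xstar, ⟨xstar, rfl⟩⟩ ?_
    rintro y ⟨z, rfl⟩
    exact hmin z
  -- the distance computation
  have hdist : ∑ i, (x i - xstar i) ^ 2 = ∑ i, (c i - cstar i) ^ 2 := by
    have hx : x = U *ᵥ c := (hUc x).symm
    have hsub : x - xstar = U *ᵥ (c - cstar) := by
      rw [Matrix.mulVec_sub, ← hx, hxsdef]
    have e1 : ∑ i, (x i - xstar i) ^ 2 = (x - xstar) ⬝ᵥ (x - xstar) := by
      simp [dotProduct, sq]
    have e2 : ∑ i, (c i - cstar i) ^ 2 = (c - cstar) ⬝ᵥ (c - cstar) := by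
      simp [dotProduct, sq]
    rw [e1, e2, hsub, dot1]
  have hgap : h x - hstar = (1 / 2) * ∑ i, d i * (c i - cstar i) ^ 2 := by
    rw [hstar_eq, key x, key xstar, hxsc, ← hcdef, H_diff c]
  -- final estimate
  have hterm : ∀ i, lam * (c i - cstar i) ^ 2 ≤ d i * (c i - cstar i) ^ 2 := by
    intro i
    by_cases hdi : d i = 0
    · have : cstar i = c i := by simp [hcsdef, hdi]
      simp [this]
    · exact mul_le_mul_of_nonneg_right (lam_le i hdi) (sq_nonneg _)
  have hsumle : lam * ∑ i, (c i - cstar i) ^ 2 ≤ ∑ i, d i * (c i - cstar i) ^ 2 := by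
    rw [Finset.mul_sum]
    exact Finset.sum_le_sum fun i _ => hterm i
  have hfinal : ∑ i, (x i - xstar i) ^ 2 ≤ 2 * (h x - hstar) / lam := by
    rw [hdist, hgap]
    rw [le_div_iff₀ lam_pos]
    calc (∑ i, (c i - cstar i) ^ 2) * lam = lam * ∑ i, (c i - cstar i) ^ 2 := by ring
      _ ≤ ∑ i, d i * (c i - cstar i) ^ 2 := hsumle
      _ = 2 * ((1 / 2) * ∑ i, d i * (c i - cstar i) ^ 2) := by ring
  exact Real.sqrt_le_sqrt hfinal

end
end

section
/- Let Q be a nonzero symmetric positive semidefinite n×n real matrix, q ∈ ℝⁿ, q⁰ ∈ ℝ, and h(x) := ½xᵀQx + qᵀx + q⁰, with h* := inf_x h(x). If h* > −∞, then for every x ∈ ℝⁿ the gradient satisfies ‖∇h(x)‖₂ = ‖Qx + q‖₂ ≥ √(λ_pmin(Q)·(h(x) − h*)/2), where λ_pmin(Q) denotes the smallest nonzero eigenvalue of Q. -/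
open Matrix Finset

noncomputable section
open scoped RealInnerProductSpace

lemma aux_inner_dot {n : ℕ} (x y : EuclideanSpace ℝ (Fin n)) :
    ⟪x, y⟫ = (WithLp.equiv 2 (Fin n → ℝ) x) ⬝ᵥ (WithLp.equiv 2 (Fin n → ℝ) y) := by
  rw [EuclideanSpace.inner_eq_star_dotProduct]
  simp [dotProduct, mul_comm]

lemma aux_sym {n : ℕ} {Q : Matrix (Fin n) (Fin n) ℝ} (hQsym : Qᵀ = Q) (u v : Fin n → ℝ) :
    u ⬝ᵥ Q *ᵥ v = (Q *ᵥ u) ⬝ᵥ v := by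
  rw [Matrix.dotProduct_mulVec, ← Matrix.mulVec_transpose, hQsym]

lemma aux_spec {n : ℕ} {Q : Matrix (Fin n) (Fin n) ℝ} (hQsym : Qᵀ = Q) (hQ : Q.IsHermitian)
    {lam : ℝ} (hlam_pos : 0 < lam)
    (hmin : ∀ i, hQ.eigenvalues i ≠ 0 → lam ≤ hQ.eigenvalues i)
    (u : Fin n → ℝ) :
    lam * (u ⬝ᵥ Q *ᵥ u) ≤ (Q *ᵥ u) ⬝ᵥ (Q *ᵥ u) := by
  set b := hQ.eigenvectorBasis with hb
  set μ := hQ.eigenvalues with hμ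
  set e := WithLp.equiv 2 (Fin n → ℝ) with he
  set u' : EuclideanSpace ℝ (Fin n) := e.symm u with hu'
  set g' : EuclideanSpace ℝ (Fin n) := e.symm (Q *ᵥ u) with hg'
  have hue : e u' = u := rfl
  have hge : e g' = Q *ᵥ u := rfl
  have key : ∀ i, ⟪b i, g'⟫ = μ i * ⟪b i, u'⟫ := by
    intro i
    rw [aux_inner_dot, aux_inner_dot, hue, hge, aux_sym hQsym,
      show Q *ᵥ (WithLp.equiv 2 (Fin n → ℝ)) (b i) = μ i • (WithLp.equiv 2 (Fin n → ℝ)) (b i) from hQ.mulVec_eigenvectorBasis i, smul_dotProduct]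
    rfl
  have h1 : u ⬝ᵥ Q *ᵥ u = ∑ i, ⟪u', b i⟫ * (μ i * ⟪b i, u'⟫) := by
    have e1 : u ⬝ᵥ Q *ᵥ u = ⟪u', g'⟫ := by rw [aux_inner_dot, hue, hge]
    rw [e1, ← b.sum_inner_mul_inner u' g']
    exact Finset.sum_congr rfl fun i _ => by rw [key i]
  have h2 : (Q *ᵥ u) ⬝ᵥ (Q *ᵥ u) = ∑ i, (μ i * ⟪b i, u'⟫) ^ 2 := by
    have e2 : (Q *ᵥ u) ⬝ᵥ (Q *ᵥ u) = ⟪g', g'⟫ := by rw [aux_inner_dot, hge]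
    rw [e2, ← b.sum_inner_mul_inner g' g']
    refine Finset.sum_congr rfl fun i _ => ?_
    have hk := key i
    have hk' : ⟪g', b i⟫ = μ i * ⟪b i, u'⟫ := by rw [real_inner_comm]; exact hk
    rw [hk, hk', sq]
  rw [h1, h2, Finset.mul_sum]
  refine Finset.sum_le_sum fun i _ => ?_
  rw [real_inner_comm u' (b i)]
  set c := ⟪b i, u'⟫
  rcases eq_or_ne (μ i) 0 with h0 | h0
  · simp [h0]
  · have hl : lam ≤ μ i := hmin i h0
    nlinarith [sq_nonneg c]

lemma aux_range {n : ℕ} {Q : Matrix (Fin n) (Fin n) ℝ} (hQ : Q.IsHermitian)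
    (q : Fin n → ℝ) (hker : ∀ v : Fin n → ℝ, Q *ᵥ v = 0 → q ⬝ᵥ v = 0) :
    ∃ u : Fin n → ℝ, Q *ᵥ u = q := by
  set b := hQ.eigenvectorBasis with hb
  set μ := hQ.eigenvalues with hμ
  set e := WithLp.equiv 2 (Fin n → ℝ) with he
  set q' : EuclideanSpace ℝ (Fin n) := e.symm q with hq'
  refine ⟨∑ i, (if μ i = 0 then 0 else ⟪b i, q'⟫ / μ i) • e (b i), ?_⟩
  have step1 : Q *ᵥ (∑ i, (if μ i = 0 then 0 else ⟪b i, q'⟫ / μ i) • e (b i))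
      = ∑ i, (if μ i = 0 then 0 else ⟪b i, q'⟫ / μ i) • (Q *ᵥ e (b i)) := by
    simp only [← Matrix.mulVecLin_apply, map_sum, LinearMap.map_smul]
  rw [step1]
  have step2 : ∀ i, (if μ i = 0 then 0 else ⟪b i, q'⟫ / μ i) • (Q *ᵥ e (b i))
      = ⟪b i, q'⟫ • e (b i) := by
    intro i
    rw [show Q *ᵥ e (b i) = μ i • e (b i) from hQ.mulVec_eigenvectorBasis i]
    rcases eq_or_ne (μ i) 0 with h0 | h0
    · have hz : Q *ᵥ e (b i) = 0 := by
        rw [show Q *ᵥ e (b i) = μ i • e (b i) from hQ.mulVec_eigenvectorBasis i, h0, zero_smul]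
      have hc : ⟪b i, q'⟫ = 0 := by
        rw [real_inner_comm, aux_inner_dot]
        exact hker _ hz
      simp [h0, hc]
    · rw [if_neg h0, smul_smul, div_mul_cancel₀ _ h0]
  rw [Finset.sum_congr rfl fun i _ => step2 i]
  have := b.sum_repr' q'
  calc ∑ i, ⟪b i, q'⟫ • e (b i) = e (∑ i, ⟪b i, q'⟫ • b i) := by simp [he]
    _ = e q' := by rw [this]
    _ = q := rfl

/-- **Proposition A.1 (second part): gradient norm bound for convex quadratics.** If the
convex quadratic `h(x) = ½xᵀQx + qᵀx + q⁰` (Q ≠ 0 symmetric PSD) is bounded below with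
infimum h*, then for every x the gradient `∇h(x) = Qx + q` satisfies
`‖Qx + q‖₂ ≥ √(λ_pmin(Q)·(h(x) − h*)/2)`. -/
theorem convex_quadratic_gradient_bound
    (n : ℕ)
    (Q : Matrix (Fin n) (Fin n) ℝ) (hQ0 : Q ≠ 0) (hQsym : Qᵀ = Q)
    (hQpsd : ∀ x : Fin n → ℝ, 0 ≤ ∑ i, x i * Q.mulVec x i)
    (q : Fin n → ℝ) (q0 : ℝ)
    (h : (Fin n → ℝ) → ℝ)
    (hh : h = fun x => (1 / 2) * (∑ i, x i * Q.mulVec x i) + (∑ i, q i * x i) + q0)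
    -- `lam` is the smallest nonzero eigenvalue of Q
    (lam : ℝ)
    (hlam_eig : ∃ v : Fin n → ℝ, v ≠ 0 ∧ Q.mulVec v = lam • v)
    (hlam_ne : lam ≠ 0)
    (hlam_min : ∀ μ : ℝ, (∃ v : Fin n → ℝ, v ≠ 0 ∧ Q.mulVec v = μ • v) → μ ≠ 0 → lam ≤ μ)
    -- h* > −∞
    (hbdd : BddBelow (Set.range h))
    (hstar : ℝ) (hhstar : hstar = sInf (Set.range h)) :
    ∀ x : Fin n → ℝ,
      Real.sqrt (lam * (h x - hstar) / 2) ≤ Real.sqrt (∑ i, (Q.mulVec x i + q i) ^ 2) := by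
  intro x
  have hQ : Q.IsHermitian := by rw [Matrix.IsHermitian]; simpa using hQsym
  have hpsd : ∀ v : Fin n → ℝ, (0:ℝ) ≤ v ⬝ᵥ Q *ᵥ v := fun v => hQpsd v
  -- lam > 0
  have hlam_pos : 0 < lam := by
    obtain ⟨v, hv0, hQv⟩ := hlam_eig
    have hvv : 0 < v ⬝ᵥ v := by
      have h0 : v ⬝ᵥ v ≠ 0 := fun hz => hv0 (dotProduct_self_eq_zero.mp hz)
      exact lt_of_le_of_ne (Finset.sum_nonneg fun i _ => mul_self_nonneg _) (Ne.symm h0)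
    have h1 : (0:ℝ) ≤ v ⬝ᵥ Q *ᵥ v := hpsd v
    rw [hQv] at h1
    have h2 : v ⬝ᵥ (lam • v) = lam * (v ⬝ᵥ v) := by rw [dotProduct_smul]; rfl
    rw [h2] at h1
    have h3 : 0 ≤ lam := by nlinarith
    exact lt_of_le_of_ne h3 (Ne.symm hlam_ne)
  -- eigenvalue lower bound
  have hmin : ∀ i, hQ.eigenvalues i ≠ 0 → lam ≤ hQ.eigenvalues i := by
    intro i hi
    refine hlam_min _ ⟨WithLp.equiv 2 (Fin n → ℝ) (hQ.eigenvectorBasis i), ?_, ?_⟩ hi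
    · intro hc
      exact hQ.eigenvectorBasis.orthonormal.ne_zero i
        ((WithLp.equiv 2 (Fin n → ℝ)).injective hc)
    · exact hQ.mulVec_eigenvectorBasis i
  -- q orthogonal to kernel
  have hker : ∀ v : Fin n → ℝ, Q *ᵥ v = 0 → q ⬝ᵥ v = 0 := by
    intro v hv
    by_contra hc
    obtain ⟨m, hm⟩ := hbdd
    have hval : ∀ t : ℝ, h (t • v) = t * (q ⬝ᵥ v) + q0 := by
      intro t
      rw [hh]
      simp only [Matrix.mulVec_smul, hv, smul_zero, Pi.zero_apply, mul_zero, Pi.smul_apply,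
        smul_eq_mul, Finset.sum_const_zero]
      simp only [dotProduct, Finset.mul_sum, zero_add]
      congr 1
      exact Finset.sum_congr rfl fun i _ => by ring
    set t := (m - q0 - 1) / (q ⬝ᵥ v) with ht
    have hmem : h (t • v) ∈ Set.range h := ⟨t • v, rfl⟩
    have := hm hmem
    rw [hval t, ht, div_mul_cancel₀ _ hc] at this
    linarith
  obtain ⟨u, hu⟩ := aux_range hQ q hker
  set w := x + u with hw
  have hgw : Q *ᵥ w = Q *ᵥ x + q := by rw [hw, Matrix.mulVec_add, hu]
  have hdot : ∀ z : Fin n → ℝ, h z = (1/2) * (z ⬝ᵥ Q *ᵥ z) + q ⬝ᵥ z + q0 := by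
    intro z; simp only [hh]; rfl
  -- lower bound on h
  have hlow : ∀ y : Fin n → ℝ, h x - (1/2) * (w ⬝ᵥ Q *ᵥ w) ≤ h y := by
    intro y
    have hpsd2 := hpsd (y - x + w)
    have expand : (y - x + w) ⬝ᵥ Q *ᵥ (y - x + w)
        = y ⬝ᵥ Q *ᵥ y - x ⬝ᵥ Q *ᵥ y - y ⬝ᵥ Q *ᵥ x + x ⬝ᵥ Q *ᵥ x
          + w ⬝ᵥ Q *ᵥ y - w ⬝ᵥ Q *ᵥ x + y ⬝ᵥ Q *ᵥ w - x ⬝ᵥ Q *ᵥ w + w ⬝ᵥ Q *ᵥ w := by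
      simp only [Matrix.mulVec_add, Matrix.mulVec_sub, dotProduct_add,
        dotProduct_sub, add_dotProduct, sub_dotProduct]
      ring
    have s1 : y ⬝ᵥ Q *ᵥ x = x ⬝ᵥ Q *ᵥ y := by
      rw [aux_sym hQsym y x, dotProduct_comm]
    have s2 : w ⬝ᵥ Q *ᵥ y = (Q *ᵥ w) ⬝ᵥ y := aux_sym hQsym w y
    have s3 : y ⬝ᵥ Q *ᵥ w = (Q *ᵥ w) ⬝ᵥ y := dotProduct_comm _ _
    have s4 : w ⬝ᵥ Q *ᵥ x = (Q *ᵥ w) ⬝ᵥ x := aux_sym hQsym w x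
    have s5 : x ⬝ᵥ Q *ᵥ w = (Q *ᵥ w) ⬝ᵥ x := dotProduct_comm _ _
    have hg1 : (Q *ᵥ w) ⬝ᵥ y = x ⬝ᵥ Q *ᵥ y + q ⬝ᵥ y := by
      rw [hgw, add_dotProduct, ← aux_sym hQsym]
    have hg2 : (Q *ᵥ w) ⬝ᵥ x = x ⬝ᵥ Q *ᵥ x + q ⬝ᵥ x := by
      rw [hgw, add_dotProduct, ← aux_sym hQsym]
    rw [expand, s1, s2, s3, s4, s5, hg1, hg2] at hpsd2
    rw [hdot x, hdot y]
    linarith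
  -- infimum bound
  have hxl : h x - hstar ≤ (1/2) * (w ⬝ᵥ Q *ᵥ w) := by
    have hle : h x - (1/2) * (w ⬝ᵥ Q *ᵥ w) ≤ hstar := by
      rw [hhstar]
      refine le_csInf ⟨h x, ⟨x, rfl⟩⟩ ?_
      rintro z ⟨y, rfl⟩
      exact hlow y
    linarith
  have hspec := aux_spec hQsym hQ hlam_pos hmin w
  have hwQw : (0:ℝ) ≤ w ⬝ᵥ Q *ᵥ w := hpsd w
  have hgg : (0:ℝ) ≤ (Q *ᵥ w) ⬝ᵥ (Q *ᵥ w) :=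
    Finset.sum_nonneg fun i _ => mul_self_nonneg _
  have hfin : lam * (h x - hstar) / 2 ≤ (Q *ᵥ w) ⬝ᵥ (Q *ᵥ w) := by
    have h1 : lam * (h x - hstar) ≤ lam * ((1/2) * (w ⬝ᵥ Q *ᵥ w)) :=
      mul_le_mul_of_nonneg_left hxl hlam_pos.le
    nlinarith
  have hsum : ∑ i, (Q.mulVec x i + q i) ^ 2 = (Q *ᵥ w) ⬝ᵥ (Q *ᵥ w) := by
    rw [hgw]
    simp [dotProduct, sq]
  rw [hsum]
  exact Real.sqrt_le_sqrt hfin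


end
end

section
/- Consider the subgradient descent method for minimizing a convex function f over a closed convex set P ⊆ ℝⁿ: x⁰ ∈ P, and for each i, x^{i+1} is the Euclidean projection of x^i − α_i g^i onto P (characterized by x^{i+1} ∈ P and ⟨(x^i − α_i g^i) − x^{i+1}, z − x^{i+1}⟩ ≤ 0 for all z ∈ P), where g^i satisfies the subgradient inequality f(y) ≥ f(x^i) + (g^i)ᵀ(y − x^i) for all y ∈ P, and ‖g^i‖₂ ≤ G, with positive step-sizes α_i. If x* minimizes f over P with optimal value f* = f(x*), then for each k ≥ 0: min_{i ∈ {0,…,k}} f(x^i) ≤ f* + (‖x⁰ − x*‖₂² + G²·Σ_{i=0}^{k} α_i²) / (2·Σ_{i=0}^{k} α_i). In particular, with constant step-size α_i = α > 0 for all i: min_{i ∈ {0,…,k}} f(x^i) ≤ f* + ‖x⁰ − x*‖₂²/(2(k+1)α) + αG²/2. -/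
open Finset

noncomputable section

/-- **Proposition 3.1 (convergence bound for subgradient descent).** For subgradient
descent on a convex f over a closed convex set P with projections, subgradients bounded
by G, and step-sizes α_i > 0, if x* minimizes f over P with value f*, then for each k:
`min_{i∈{0,…,k}} f(x^i) ≤ f* + (‖x⁰ − x*‖₂² + G²Σα_i²)/(2Σα_i)`, and in particular with
constant step-size α_i = α: `min_{i∈{0,…,k}} f(x^i) ≤ f* + ‖x⁰−x*‖₂²/(2(k+1)α) + αG²/2`. -/
theorem subgradient_descent_convergence_bound
    (n : ℕ)
    (P : Set (Fin n → ℝ)) (hPclosed : IsClosed P) (hPconvex : Convex ℝ P)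
    (f : (Fin n → ℝ) → ℝ) (hfconv : ConvexOn ℝ P f)
    (x : ℕ → Fin n → ℝ) (g : ℕ → Fin n → ℝ) (α : ℕ → ℝ)
    (hα : ∀ i, 0 < α i)
    (hx0 : x 0 ∈ P)
    -- g^i is a subgradient of f at x^i (relative to P)
    (hsub : ∀ i, ∀ z ∈ P, f (x i) + (∑ t, g i t * (z t - x i t)) ≤ f z)
    (G : ℝ) (hG : ∀ i, Real.sqrt (∑ t, (g i t) ^ 2) ≤ G)
    -- x^{i+1} is the Euclidean projection of x^i − α_i g^i onto P
    (hproj : ∀ i, x (i + 1) ∈ P ∧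
      ∀ z ∈ P, (∑ t, ((x i t - α i * g i t) - x (i + 1) t) * (z t - x (i + 1) t)) ≤ 0)
    (xstar : Fin n → ℝ) (hxstar : xstar ∈ P)
    (hmin : ∀ z ∈ P, f xstar ≤ f z)
    (fstar : ℝ) (hfstar : fstar = f xstar) :
    ∀ k : ℕ,
      (∃ i ≤ k, f (x i) ≤ fstar +
        ((∑ t, (x 0 t - xstar t) ^ 2) + G ^ 2 * ∑ i ∈ Finset.range (k + 1), (α i) ^ 2) /
          (2 * ∑ i ∈ Finset.range (k + 1), α i)) ∧
      (∀ c : ℝ, 0 < c → (∀ i, α i = c) →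
        ∃ i ≤ k, f (x i) ≤ fstar +
          (∑ t, (x 0 t - xstar t) ^ 2) / (2 * ((k : ℝ) + 1) * c) + c * G ^ 2 / 2) := by
  intro k
  have hxP : ∀ i, x i ∈ P := by
    intro i
    cases i with
    | zero => exact hx0
    | succ j => exact (hproj j).1
  set D : ℕ → ℝ := fun i => ∑ t, (x i t - xstar t) ^ 2 with hD
  have hDnn : ∀ i, 0 ≤ D i := fun i => Finset.sum_nonneg fun t _ => sq_nonneg _
  have hg2 : ∀ i, (∑ t, (g i t) ^ 2) ≤ G ^ 2 := by
    intro i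
    have h0 : (0:ℝ) ≤ ∑ t, (g i t) ^ 2 := Finset.sum_nonneg fun t _ => sq_nonneg _
    nlinarith [hG i, Real.sq_sqrt h0, Real.sqrt_nonneg (∑ t, (g i t) ^ 2)]
  have step : ∀ i, D (i + 1) ≤ D i - 2 * α i * (f (x i) - fstar) + (α i) ^ 2 * G ^ 2 := by
    intro i
    have hpr := (hproj i).2 xstar hxstar
    have hA : (∑ t, (x i t - α i * g i t - xstar t) ^ 2)
        = D (i + 1) + (∑ t, (x i t - α i * g i t - x (i + 1) t) ^ 2)
          - 2 * (∑ t, (x i t - α i * g i t - x (i + 1) t) * (xstar t - x (i + 1) t)) := by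
      simp only [hD, Finset.mul_sum, ← Finset.sum_add_distrib, ← Finset.sum_sub_distrib]
      exact Finset.sum_congr rfl fun t _ => by ring
    have hQ : (0:ℝ) ≤ ∑ t, (x i t - α i * g i t - x (i + 1) t) ^ 2 :=
      Finset.sum_nonneg fun t _ => sq_nonneg _
    have h1 : D (i + 1) ≤ ∑ t, (x i t - α i * g i t - xstar t) ^ 2 := by linarith
    have hA2 : (∑ t, (x i t - α i * g i t - xstar t) ^ 2)
        = D i + 2 * α i * (∑ t, g i t * (xstar t - x i t)) + (α i) ^ 2 * (∑ t, (g i t) ^ 2) := by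
      simp only [hD, Finset.mul_sum, ← Finset.sum_add_distrib]
      exact Finset.sum_congr rfl fun t _ => by ring
    have hs := hsub i xstar hxstar
    have hsle : (∑ t, g i t * (xstar t - x i t)) ≤ fstar - f (x i) := by
      rw [hfstar]; linarith
    have hα2 : (0:ℝ) ≤ (α i) ^ 2 := sq_nonneg _
    nlinarith [mul_le_mul_of_nonneg_left hsle (le_of_lt (hα i)),
      mul_le_mul_of_nonneg_left (hg2 i) hα2]
  have tele : ∀ m : ℕ, D m + ∑ i ∈ Finset.range m, 2 * α i * (f (x i) - fstar)
      ≤ D 0 + G ^ 2 * ∑ i ∈ Finset.range m, (α i) ^ 2 := by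
    intro m
    induction m with
    | zero => simp
    | succ m ih =>
      rw [Finset.sum_range_succ, Finset.sum_range_succ, mul_add]
      have := step m
      linarith
  obtain ⟨j, hjmem, hjmin⟩ :=
    Finset.exists_min_image (Finset.range (k + 1)) (fun i => f (x i)) ⟨0, by simp⟩
  have hS1 : 0 < ∑ i ∈ Finset.range (k + 1), α i :=
    Finset.sum_pos (fun i _ => hα i) ⟨0, by simp⟩
  have hlb : ∑ i ∈ Finset.range (k + 1), 2 * α i * (f (x j) - fstar)
      ≤ ∑ i ∈ Finset.range (k + 1), 2 * α i * (f (x i) - fstar) :=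
    Finset.sum_le_sum fun i hi => by
      have := hjmin i hi
      nlinarith [hα i]
  have hconst : ∑ i ∈ Finset.range (k + 1), 2 * α i * (f (x j) - fstar)
      = 2 * (∑ i ∈ Finset.range (k + 1), α i) * (f (x j) - fstar) := by
    rw [Finset.mul_sum, Finset.sum_mul]
  have hkey : 2 * (∑ i ∈ Finset.range (k + 1), α i) * (f (x j) - fstar)
      ≤ D 0 + G ^ 2 * ∑ i ∈ Finset.range (k + 1), (α i) ^ 2 := by
    have := tele (k + 1)
    have := hDnn (k + 1)
    linarith [hconst ▸ hlb]
  have hjk : j ≤ k := Nat.lt_succ_iff.mp (Finset.mem_range.mp hjmem)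
  have hbound : f (x j) ≤ fstar +
      (D 0 + G ^ 2 * ∑ i ∈ Finset.range (k + 1), (α i) ^ 2) /
        (2 * ∑ i ∈ Finset.range (k + 1), α i) := by
    have h2 : 0 < 2 * ∑ i ∈ Finset.range (k + 1), α i := by linarith
    have : f (x j) - fstar ≤
        (D 0 + G ^ 2 * ∑ i ∈ Finset.range (k + 1), (α i) ^ 2) /
          (2 * ∑ i ∈ Finset.range (k + 1), α i) := by
      rw [le_div_iff₀ h2]
      nlinarith
    linarith
  refine ⟨⟨j, hjk, hbound⟩, ?_⟩
  intro c hc hcα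
  have e1 : (∑ i ∈ Finset.range (k + 1), α i) = ((k : ℝ) + 1) * c := by
    simp only [hcα, Finset.sum_const, Finset.card_range, nsmul_eq_mul]
    push_cast; ring
  have e2 : (∑ i ∈ Finset.range (k + 1), (α i) ^ 2) = ((k : ℝ) + 1) * c ^ 2 := by
    simp only [hcα, Finset.sum_const, Finset.card_range, nsmul_eq_mul]
    push_cast; ring
  refine ⟨j, hjk, ?_⟩
  have hk1 : ((k : ℝ) + 1) ≠ 0 := by positivity
  have hcne : c ≠ 0 := ne_of_gt hc
  have heq : fstar + (D 0 + G ^ 2 * (((k : ℝ) + 1) * c ^ 2)) / (2 * (((k : ℝ) + 1) * c))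
      = fstar + D 0 / (2 * ((k : ℝ) + 1) * c) + c * G ^ 2 / 2 := by
    field_simp
    ring
  rw [e1, e2] at hbound
  calc f (x j) ≤ _ := hbound
    _ = _ := heq

end
end

section
/- For the FS_ε iterates with learning rate ε > 0 and every k ≥ 0, there exists an index i ∈ {0, …, k} such that the training error satisfies L_n(β^i) − L_n* ≤ (p/(2n·λ_pmin(XᵀX)))·[ ‖Xβ_LS‖₂²/(ε(k+1)) + ε ]², where β_LS is any least squares solution. -/
open Matrix Finset

noncomputable section

lemma quad_ineq {p : ℕ} {A : Matrix (Fin p) (Fin p) ℝ} (hA : A.PosSemidef) {lam : ℝ}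
    (hmin : ∀ μ : ℝ, (∃ v : Fin p → ℝ, v ≠ 0 ∧ A.mulVec v = μ • v) → μ ≠ 0 → lam ≤ μ)
    (u : Fin p → ℝ) : lam * (u ⬝ᵥ A.mulVec u) ≤ (A.mulVec u) ⬝ᵥ (A.mulVec u) := by
  have hH := hA.1
  have heig : ∀ i, hH.eigenvalues i ^ 2 - lam * hH.eigenvalues i ≥ 0 := by
    intro i
    rcases eq_or_ne (hH.eigenvalues i) 0 with h0 | h0
    · simp [h0]
    · have h1 : 0 ≤ hH.eigenvalues i := hA.eigenvalues_nonneg i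
      have h2 : lam ≤ hH.eigenvalues i := by
        refine hmin _ ⟨⇑(hH.eigenvectorBasis i), ?_, hH.mulVec_eigenvectorBasis i⟩ h0
        exact fun h => hH.eigenvectorBasis.orthonormal.ne_zero i (by simpa using congrArg (WithLp.toLp 2) h)
      nlinarith
  have key : (A * A - lam • A).PosSemidef := by
    have hdiag : (diagonal (fun i => hH.eigenvalues i ^ 2 - lam * hH.eigenvalues i)).PosSemidef :=
      posSemidef_diagonal_iff.mpr heig
    have hrw : A * A - lam • A =
        (hH.eigenvectorUnitary : Matrix (Fin p) (Fin p) ℝ) *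
          diagonal (fun i => hH.eigenvalues i ^ 2 - lam * hH.eigenvalues i) *
          (hH.eigenvectorUnitary : Matrix (Fin p) (Fin p) ℝ)ᴴ := by
      conv_lhs => rw [hH.spectral_theorem]
      have hco : (RCLike.ofReal ∘ hH.eigenvalues : Fin p → ℝ) = hH.eigenvalues := by
        funext i; simp
      rw [hco]
      set V := (hH.eigenvectorUnitary : Matrix (Fin p) (Fin p) ℝ) with hV
      set D := diagonal hH.eigenvalues with hD
      have hVs : Vᴴ * V = 1 := by
        have := (Matrix.mem_unitaryGroup_iff').mp (hH.eigenvectorUnitary).2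
        rwa [Matrix.star_eq_conjTranspose] at this
      have hDD : D * D - lam • D = diagonal (fun i => hH.eigenvalues i ^ 2 - lam * hH.eigenvalues i) := by
        rw [hD, diagonal_mul_diagonal, ← diagonal_smul, diagonal_sub]
        congr 1; funext i; simp [pow_two, smul_eq_mul]
      rw [← hDD, ← Matrix.star_eq_conjTranspose]
      have e1 : (V * D * star V) * (V * D * star V) = V * (D * D) * star V := by
        simp only [Matrix.star_eq_conjTranspose, Matrix.mul_assoc, ← Matrix.mul_assoc Vᴴ V,
          hVs, Matrix.one_mul]
      have e2 : lam • (V * D * star V) = V * (lam • D) * star V := by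
        simp [Matrix.mul_smul, Matrix.smul_mul]
      simp only [Unitary.conjStarAlgAut_apply, Unitary.coe_star, ← hV]
      rw [e1, e2, ← Matrix.sub_mul, ← Matrix.mul_sub]
    rw [hrw]
    exact hdiag.mul_mul_conjTranspose_same _
  have h0 := key.dotProduct_mulVec_nonneg u
  have hstar : star u = u := by funext i; simp
  rw [hstar, Matrix.sub_mulVec, Matrix.smul_mulVec, dotProduct_sub, dotProduct_smul,
    ← Matrix.mulVec_mulVec, smul_eq_mul] at h0
  have hsym : u ⬝ᵥ A *ᵥ (A *ᵥ u) = (A *ᵥ u) ⬝ᵥ (A *ᵥ u) := by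
    have hT : Aᵀ = A := by
      ext i j
      have := congrFun (congrFun hH.eq j) i
      simpa [Matrix.conjTranspose_apply] using this.symm
    rw [Matrix.dotProduct_mulVec, ← Matrix.mulVec_transpose, hT]
  rw [hsym] at h0
  linarith




/-- **Theorem 3.1(i) (training error for FS_ε).** For the FS_ε iterates with learning rate
ε > 0 and every k ≥ 0, there exists an index i ∈ {0,…,k} with
`L_n(β^i) − L_n* ≤ (p/(2n·λ_pmin(XᵀX)))·[‖Xβ_LS‖₂²/(ε(k+1)) + ε]²`. -/
theorem fs_training_error_bound
    (n p : ℕ) (hn : 0 < n) (hp : 0 < p)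
    (X : Matrix (Fin n) (Fin p) ℝ) (hX : X ≠ 0)
    (hcols : ∀ j : Fin p, ∑ i, (X i j) ^ 2 = 1)
    (y : Fin n → ℝ)
    (Ln : (Fin p → ℝ) → ℝ)
    (hLn : Ln = fun β => (1 / (2 * (n : ℝ))) * ∑ i, (y i - X.mulVec β i) ^ 2)
    (LnStar : ℝ) (hLnStar : LnStar = sInf (Set.range Ln))
    -- `lam` is the smallest nonzero eigenvalue of XᵀX
    (lam : ℝ)
    (hlam_eig : ∃ v : Fin p → ℝ, v ≠ 0 ∧ (Xᵀ * X).mulVec v = lam • v)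
    (hlam_ne : lam ≠ 0)
    (hlam_min : ∀ μ : ℝ, (∃ v : Fin p → ℝ, v ≠ 0 ∧ (Xᵀ * X).mulVec v = μ • v) → μ ≠ 0 → lam ≤ μ)
    -- FS_ε iterates
    (ε : ℝ) (hε0 : 0 < ε)
    (β : ℕ → Fin p → ℝ) (hβ0 : β 0 = 0)
    (r : ℕ → Fin n → ℝ) (hr : ∀ k, r k = y - X.mulVec (β k))
    (jj : ℕ → Fin p)
    (hjmax : ∀ k, ∀ j' : Fin p, |∑ i, r k i * X i j'| ≤ |∑ i, r k i * X i (jj k)|)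
    (hupd : ∀ k, β (k + 1) = β k +
      (ε * Real.sign (∑ i, r k i * X i (jj k))) • (Pi.single (jj k) (1 : ℝ) : Fin p → ℝ))
    -- βLS is any least squares solution
    (βLS : Fin p → ℝ) (hβLS : (Xᵀ * X).mulVec βLS = Xᵀ.mulVec y) :
    ∀ k : ℕ, ∃ i ≤ k,
      Ln (β i) - LnStar ≤ ((p : ℝ) / (2 * (n : ℝ) * lam)) *
        ((∑ t, (X.mulVec βLS t) ^ 2) / (ε * ((k : ℝ) + 1)) + ε) ^ 2 := by
  -- setup
  set A := Xᵀ * X with hA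
  have hApsd : A.PosSemidef := by
    have := Matrix.posSemidef_conjTranspose_mul_self X
    have hXc : Xᴴ = Xᵀ := by ext i j; simp [Matrix.conjTranspose_apply]
    rwa [hXc] at this
  have hlam_pos : 0 < lam := by
    obtain ⟨v, hv0, hv⟩ := hlam_eig
    have h1 : (0:ℝ) ≤ v ⬝ᵥ A *ᵥ v := by simpa using hApsd.dotProduct_mulVec_nonneg v
    rw [hv, dotProduct_smul, smul_eq_mul] at h1
    have h2 : 0 < v ⬝ᵥ v := by
      rcases Function.ne_iff.mp hv0 with ⟨i, hi⟩
      have hle : (0:ℝ) < v i * v i := mul_self_pos.mpr hi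
      have : v i * v i ≤ v ⬝ᵥ v := by
        unfold dotProduct
        exact Finset.single_le_sum (f := fun i => v i * v i)
          (fun j _ => mul_self_nonneg _) (Finset.mem_univ i)
      linarith
    have hge : 0 ≤ lam := nonneg_of_mul_nonneg_left h1 h2
    exact lt_of_le_of_ne hge (Ne.symm hlam_ne)
  set rLS : Fin n → ℝ := y - X.mulVec βLS with hrLS
  have hXtr : Xᵀ *ᵥ rLS = 0 := by
    rw [hrLS, Matrix.mulVec_sub, Matrix.mulVec_mulVec, hβLS, sub_self]
  have orth : ∀ u : Fin p → ℝ, rLS ⬝ᵥ (X *ᵥ u) = 0 := by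
    intro u
    rw [Matrix.dotProduct_mulVec, ← Matrix.mulVec_transpose, hXtr]
    exact zero_dotProduct u
  have pyth : ∀ b : Fin p → ℝ,
      ∑ i, (y i - X.mulVec b i) ^ 2
        = (∑ i, rLS i ^ 2) + ∑ i, (X.mulVec (βLS - b)) i ^ 2 := by
    intro b
    have hpt : ∀ i, y i - X.mulVec b i = rLS i + (X.mulVec (βLS - b)) i := by
      intro i
      simp only [hrLS, Matrix.mulVec_sub, Pi.sub_apply]
      ring
    have hcross : ∑ i, rLS i * (X.mulVec (βLS - b)) i = 0 := orth (βLS - b)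
    calc ∑ i, (y i - X.mulVec b i) ^ 2
        = ∑ i, (rLS i ^ 2 + 2 * (rLS i * (X.mulVec (βLS - b)) i)
            + (X.mulVec (βLS - b)) i ^ 2) := by
          refine Finset.sum_congr rfl fun i _ => ?_
          rw [hpt i]; ring
      _ = (∑ i, rLS i ^ 2) + 2 * (∑ i, rLS i * (X.mulVec (βLS - b)) i)
            + ∑ i, (X.mulVec (βLS - b)) i ^ 2 := by
          rw [Finset.sum_add_distrib, Finset.sum_add_distrib, Finset.mul_sum]
      _ = _ := by rw [hcross]; ring
  have hninv : (0:ℝ) < 1 / (2 * (n:ℝ)) := by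
    have : (0:ℝ) < (n:ℝ) := Nat.cast_pos.mpr hn
    positivity
  have hLB : ∀ b : Fin p → ℝ, Ln βLS ≤ Ln b := by
    intro b
    rw [hLn]
    simp only
    rw [pyth b, pyth βLS]
    have h1 : (0:ℝ) ≤ ∑ i, (X.mulVec (βLS - b)) i ^ 2 :=
      Finset.sum_nonneg fun i _ => sq_nonneg _
    have h2 : (0:ℝ) ≤ ∑ i, (X.mulVec (βLS - βLS)) i ^ 2 :=
      Finset.sum_nonneg fun i _ => sq_nonneg _
    have h3 : ∑ i, (X.mulVec (βLS - βLS)) i ^ 2 = 0 := by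
      simp [sub_self, Matrix.mulVec_zero]
    rw [h3]
    have := hninv.le
    nlinarith [Finset.sum_nonneg (f := fun i => rLS i ^ 2) (s := Finset.univ) (fun i _ => sq_nonneg _)]
  have hStar : LnStar = Ln βLS := by
    rw [hLnStar]
    apply le_antisymm
    · exact csInf_le ⟨Ln βLS, by rintro z ⟨b, rfl⟩; exact hLB b⟩ ⟨βLS, rfl⟩
    · exact le_csInf ⟨Ln βLS, ⟨βLS, rfl⟩⟩ (by rintro z ⟨b, rfl⟩; exact hLB b)
  have hErr : ∀ b : Fin p → ℝ,
      Ln b - LnStar = (1 / (2 * (n:ℝ))) * ∑ i, (X.mulVec (βLS - b)) i ^ 2 := by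
    intro b
    rw [hStar, hLn]
    simp only
    rw [pyth b, pyth βLS]
    have h3 : ∑ i, (X.mulVec (βLS - βLS)) i ^ 2 = 0 := by
      simp [sub_self, Matrix.mulVec_zero]
    rw [h3]
    ring
  -- gradient identities
  have hgrad : ∀ (v : Fin n → ℝ) (j : Fin p), (Xᵀ *ᵥ v) j = ∑ i, v i * X i j := by
    intro v j
    simp [Matrix.mulVec, dotProduct, Matrix.transpose_apply, mul_comm]
  have hAr : ∀ k, A *ᵥ (βLS - β k) = Xᵀ *ᵥ (r k) := by
    intro k
    rw [hr k, Matrix.mulVec_sub, Matrix.mulVec_sub, hβLS, Matrix.mulVec_mulVec]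
  set g : ℕ → ℝ := fun k => |∑ i, r k i * X i (jj k)| with hgdef
  have hg_nonneg : ∀ k, 0 ≤ g k := fun k => abs_nonneg _
  -- per-iterate bound
  have hkey : ∀ k, Ln (β k) - LnStar ≤ (p:ℝ) * (g k)^2 / (2*(n:ℝ)*lam) := by
    intro k
    rw [hErr (β k)]
    set w := βLS - β k with hw
    have hS : ∑ i, (X.mulVec w) i ^ 2 = w ⬝ᵥ A *ᵥ w := by
      rw [hA, ← Matrix.mulVec_mulVec, Matrix.dotProduct_mulVec, Matrix.vecMul_transpose]
      simp [dotProduct, pow_two]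
    have hq := quad_ineq hApsd hlam_min w
    have hub : (A *ᵥ w) ⬝ᵥ (A *ᵥ w) ≤ (p:ℝ) * (g k)^2 := by
      rw [hAr k]
      calc (Xᵀ *ᵥ r k) ⬝ᵥ (Xᵀ *ᵥ r k) = ∑ j, |∑ i, r k i * X i j| ^ 2 := by
            simp [dotProduct, hgrad, pow_two, sq_abs]
        _ ≤ ∑ _j : Fin p, (g k)^2 := by
            refine Finset.sum_le_sum fun j _ => ?_
            have h1 := hjmax k j
            have h2 := abs_nonneg (∑ i, r k i * X i j)
            nlinarith
        _ = (p:ℝ) * (g k)^2 := by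
            rw [Finset.sum_const, Finset.card_univ, Fintype.card_fin, nsmul_eq_mul]
    have hlam2 : lam * (∑ i, (X.mulVec w) i ^ 2) ≤ (p:ℝ) * (g k)^2 := by
      rw [hS]; exact le_trans hq hub
    have hnpos : (0:ℝ) < (n:ℝ) := Nat.cast_pos.mpr hn
    rw [le_div_iff₀ (by positivity : (0:ℝ) < 2*(n:ℝ)*lam)]
    have hSnn : (0:ℝ) ≤ ∑ i, (X.mulVec w) i ^ 2 :=
      Finset.sum_nonneg fun i _ => sq_nonneg _
    have hexp : 1 / (2 * (n:ℝ)) * (∑ i, (X.mulVec w) i ^ 2) * (2*(n:ℝ)*lam)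
        = lam * (∑ i, (X.mulVec w) i ^ 2) := by
      field_simp
    rw [hexp]; exact hlam2
  -- residual recursion
  set Q : ℕ → ℝ := fun k => ∑ i, (r k i)^2 with hQdef
  have hrec : ∀ k, Q (k+1) ≤ Q k - 2*ε*(g k) + ε^2 := by
    intro k
    set c := ∑ i, r k i * X i (jj k) with hc
    set s := Real.sign c with hs
    have hsc : s * c = |c| := by
      rcases lt_trichotomy c 0 with h|h|h
      · rw [hs, Real.sign_of_neg h, abs_of_neg h]; ring
      · simp [hs, h]
      · rw [hs, Real.sign_of_pos h, abs_of_pos h]; ring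
    have hs2 : s^2 ≤ 1 := by
      rcases lt_trichotomy c 0 with h|h|h
      · rw [hs, Real.sign_of_neg h]; norm_num
      · rw [hs, h, Real.sign_zero]; norm_num
      · rw [hs, Real.sign_of_pos h]; norm_num
    have hpt : ∀ i, r (k+1) i = r k i - (ε*s) * X i (jj k) := by
      intro i
      rw [hr (k+1), hr k, hupd k]
      simp only [Matrix.mulVec_add, Matrix.mulVec_smul, Pi.sub_apply, Pi.add_apply,
        Pi.smul_apply, smul_eq_mul]
      have hsingle : (X *ᵥ (Pi.single (jj k) (1:ℝ) : Fin p → ℝ)) i = X i (jj k) := by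
        simp [Matrix.mulVec_single]
      rw [hsingle]
      ring
    have hQ1 : Q (k+1) = Q k - 2*ε*(s*c) + (ε*s)^2 * ∑ i, X i (jj k)^2 := by
      rw [hQdef]
      simp only
      calc ∑ i, (r (k+1) i)^2 = ∑ i, ((r k i)^2 - 2*ε*s*(r k i * X i (jj k))
              + (ε*s)^2 * (X i (jj k))^2) := by
            refine Finset.sum_congr rfl fun i _ => ?_
            rw [hpt i]; ring
        _ = (∑ i, (r k i)^2) - 2*ε*s*(∑ i, r k i * X i (jj k))
              + (ε*s)^2 * ∑ i, (X i (jj k))^2 := by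
            rw [Finset.sum_add_distrib, Finset.sum_sub_distrib, Finset.mul_sum, Finset.mul_sum]
        _ = _ := by rw [← hc]; ring
    rw [hQ1, hcols (jj k), hsc]
    have hgc : g k = |c| := rfl
    rw [hgc]
    have : (ε*s)^2 ≤ ε^2 := by nlinarith [sq_nonneg ε]
    nlinarith
  -- telescoping
  have htel : ∀ k, 2*ε*(∑ t ∈ Finset.range (k+1), g t) ≤ Q 0 - Q (k+1) + ((k:ℝ)+1)*ε^2 := by
    intro k
    induction k with
    | zero => simpa [Finset.sum_range_one] using by linarith [hrec 0]
    | succ m ih =>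
        rw [Finset.sum_range_succ, mul_add]
        have := hrec (m+1)
        push_cast
        push_cast at ih
        linarith
  set W := ∑ t, (X.mulVec βLS t) ^ 2 with hW
  have hWnn : (0:ℝ) ≤ W := Finset.sum_nonneg fun i _ => sq_nonneg _
  have hQ0 : Q 0 = (∑ i, rLS i ^ 2) + W := by
    have h1 : Q 0 = ∑ i, (y i - X.mulVec (β 0) i)^2 := by
      rw [hQdef]; simp only; rw [hr 0]; simp
    rw [h1, pyth (β 0), hβ0, sub_zero]
  have hQlb : ∀ m, (∑ i, rLS i ^ 2) ≤ Q m := by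
    intro m
    have h1 : Q m = ∑ i, (y i - X.mulVec (β m) i)^2 := by
      rw [hQdef]; simp only; rw [hr m]; simp
    rw [h1, pyth (β m)]
    have : (0:ℝ) ≤ ∑ i, (X.mulVec (βLS - β m)) i ^ 2 :=
      Finset.sum_nonneg fun i _ => sq_nonneg _
    linarith
  -- conclusion
  intro k
  obtain ⟨i, hi_mem, hi_min⟩ := Finset.exists_min_image (Finset.range (k+1)) g
    ⟨0, Finset.mem_range.mpr (Nat.succ_pos k)⟩
  refine ⟨i, Nat.lt_succ_iff.mp (Finset.mem_range.mp hi_mem), ?_⟩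
  have hnpos : (0:ℝ) < (n:ℝ) := Nat.cast_pos.mpr hn
  have hk1 : (0:ℝ) < ε*((k:ℝ)+1) := by positivity
  have hsum_lb : ((k:ℝ)+1) * g i ≤ ∑ t ∈ Finset.range (k+1), g t := by
    have h := Finset.card_nsmul_le_sum (Finset.range (k+1)) g (g i) (fun t ht => hi_min t ht)
    rw [Finset.card_range, nsmul_eq_mul] at h
    push_cast at h
    exact h
  have h2 : 2*ε*(((k:ℝ)+1) * g i) ≤ W + ((k:ℝ)+1)*ε^2 := by
    have ht := htel k
    have hlb := hQlb (k+1)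
    have hmul := mul_le_mul_of_nonneg_left hsum_lb (by positivity : (0:ℝ) ≤ 2*ε)
    linarith [hQ0.le]
  have hB : g i ≤ W/(ε*((k:ℝ)+1)) + ε := by
    have heq : W/(ε*((k:ℝ)+1)) + ε = (W + ((k:ℝ)+1)*ε^2)/(ε*((k:ℝ)+1)) := by
      field_simp
    rw [heq, le_div_iff₀ hk1]
    have hx : (0:ℝ) ≤ g i * (ε*((k:ℝ)+1)) :=
      mul_nonneg (hg_nonneg i) hk1.le
    nlinarith
  have hsq : g i^2 ≤ (W/(ε*((k:ℝ)+1)) + ε)^2 := by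
    nlinarith [hg_nonneg i]
  calc Ln (β i) - LnStar ≤ (p:ℝ) * (g i)^2 / (2*(n:ℝ)*lam) := hkey i
    _ ≤ ((p:ℝ)/(2*(n:ℝ)*lam)) * (W/(ε*((k:ℝ)+1)) + ε)^2 := by
        have hre : (p:ℝ) * (g i)^2 / (2*(n:ℝ)*lam) = ((p:ℝ)/(2*(n:ℝ)*lam)) * (g i)^2 := by
          ring
        rw [hre]
        refine mul_le_mul_of_nonneg_left hsq ?_
        have : (0:ℝ) < 2*(n:ℝ)*lam := by positivity
        positivity


end
end
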